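/- arXiv:math/0211306 — 8 statements merged into one kernel-verified Lean document; each statement's English description precedes it below -/
import Mathlib

section
/- Let A be a left and right noetherian ring and G a group acting on A by ring automorphisms. A proper two-sided ideal J of A is G-prime if and only if there exists a prime two-sided ideal P of A whose G-orbit {g·P : g ∈ G} is finite and such that J = ⋂_{g∈G} g·P. -/
open Pointwise

/-- A subset of a ring is a two-sided ideal: contains 0, closed under addition,
negation, and left/right multiplication by arbitrary ring elements. -/
def IsTwoSidedIdealSet {A : Type*} [Ring A] (I : Set A) : Prop :=
  (0 : A) ∈ I ∧ (∀ a ∈ I, ∀ b ∈ I, a + b ∈ I) ∧ (∀ a ∈ I, -a ∈ I) ∧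
    (∀ a ∈ I, ∀ r : A, r * a ∈ I) ∧ (∀ a ∈ I, ∀ r : A, a * r ∈ I)

/-- `MulSubset I J P` expresses that the product ideal `I·J` is contained in `P`
(for `P` closed under addition this is equivalent to the usual condition). -/
def MulSubset {A : Type*} [Ring A] (I J P : Set A) : Prop :=
  ∀ a ∈ I, ∀ b ∈ J, a * b ∈ P

/-- A two-sided ideal `P` is prime: proper, and `I₁I₂ ⊆ P` implies `I₁ ⊆ P` or `I₂ ⊆ P`
for all two-sided ideals `I₁, I₂`. -/
def IsPrimeIdealSet {A : Type*} [Ring A] (P : Set A) : Prop :=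
  IsTwoSidedIdealSet P ∧ P ≠ Set.univ ∧
    ∀ I J : Set A, IsTwoSidedIdealSet I → IsTwoSidedIdealSet J →
      MulSubset I J P → I ⊆ P ∨ J ⊆ P

/-- A two-sided ideal is `G`-stable if `g • I = I` for all `g ∈ G`. -/
def IsGStable (G : Type*) {A : Type*} [Group G] [Ring A] [MulSemiringAction G A]
    (I : Set A) : Prop :=
  ∀ g : G, g • I = I

/-- A `G`-prime ideal: a proper `G`-stable two-sided ideal `J` such that whenever
`I₁, I₂` are `G`-stable two-sided ideals with `I₁I₂ ⊆ J`, then `I₁ ⊆ J` or `I₂ ⊆ J`. -/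
def IsGPrimeIdealSet (G : Type*) {A : Type*} [Group G] [Ring A] [MulSemiringAction G A]
    (J : Set A) : Prop :=
  IsTwoSidedIdealSet J ∧ IsGStable G J ∧ J ≠ Set.univ ∧
    ∀ I₁ I₂ : Set A, IsTwoSidedIdealSet I₁ → IsGStable G I₁ →
      IsTwoSidedIdealSet I₂ → IsGStable G I₂ →
      MulSubset I₁ I₂ J → I₁ ⊆ J ∨ I₂ ⊆ J

section Aux

variable {A : Type*} [Ring A]

/-- elementwise product set of a list of sets -/
def AuxListProd : List (Set A) → Set A
  | [] => {1}
  | Q :: L => Set.image2 (· * ·) Q (AuxListProd L)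

lemma auxListProd_append (L₁ L₂ : List (Set A)) {x : A} (hx : x ∈ AuxListProd (L₁ ++ L₂)) :
    ∃ a ∈ AuxListProd L₁, ∃ b ∈ AuxListProd L₂, x = a * b := by
  induction L₁ generalizing x with
  | nil => exact ⟨1, rfl, x, hx, (one_mul x).symm⟩
  | cons Q L ih =>
      obtain ⟨q, hq, y, hy, rfl⟩ := hx
      obtain ⟨a, ha, b, hb, rfl⟩ := ih hy
      exact ⟨q * a, ⟨q, hq, a, ha, rfl⟩, b, hb, (mul_assoc q a b).symm⟩

lemma auxListProd_mono {L : List (Set A)} {f : Set A → Set A}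
    (h : ∀ Q ∈ L, f Q ⊆ Q) : AuxListProd (L.map f) ⊆ AuxListProd L := by
  induction L with
  | nil => exact le_rfl
  | cons Q L ih =>
      rintro x ⟨q, hq, y, hy, rfl⟩
      exact ⟨q, h Q (List.mem_cons_self) hq, y,
        ih (fun R hR => h R (List.mem_cons_of_mem _ hR)) hy, rfl⟩

/-- Left ideal associated to a two-sided ideal set. -/
def AuxToIdeal (I : Set A) (h : IsTwoSidedIdealSet I) : Ideal A where
  carrier := I
  zero_mem' := h.1
  add_mem' := fun ha hb => h.2.1 _ ha _ hb
  smul_mem' := fun c _ hx => h.2.2.2.1 _ hx c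

lemma aux_sum_set_ts {I J : Set A} (hI : IsTwoSidedIdealSet I) (hJ : IsTwoSidedIdealSet J) :
    IsTwoSidedIdealSet (Set.image2 (· + ·) I J) := by
  refine ⟨⟨0, hI.1, 0, hJ.1, by dsimp only; first | abel | noncomm_ring⟩, ?_, ?_, ?_, ?_⟩
  · rintro _ ⟨a, ha, b, hb, rfl⟩ _ ⟨c, hc, d, hd, rfl⟩
    exact ⟨a + c, hI.2.1 _ ha _ hc, b + d, hJ.2.1 _ hb _ hd, by dsimp only; first | abel | noncomm_ring⟩
  · rintro _ ⟨a, ha, b, hb, rfl⟩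
    exact ⟨-a, hI.2.2.1 _ ha, -b, hJ.2.2.1 _ hb, by dsimp only; first | abel | noncomm_ring⟩
  · rintro _ ⟨a, ha, b, hb, rfl⟩ r
    exact ⟨r * a, hI.2.2.2.1 _ ha r, r * b, hJ.2.2.2.1 _ hb r, (mul_add r a b).symm⟩
  · rintro _ ⟨a, ha, b, hb, rfl⟩ r
    exact ⟨a * r, hI.2.2.2.2 _ ha r, b * r, hJ.2.2.2.2 _ hb r, (add_mul a b r).symm⟩

/-- In a noetherian ring, every proper two-sided ideal contains an elementwise product of
finitely many prime two-sided ideals containing it. -/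
lemma aux_exists_prod_primes [IsNoetherianRing A] (J : Set A) (hJ : IsTwoSidedIdealSet J)
    (hJp : J ≠ Set.univ) :
    ∃ L : List (Set A), L ≠ [] ∧ (∀ Q ∈ L, IsPrimeIdealSet Q ∧ J ⊆ Q) ∧
      AuxListProd L ⊆ J := by
  have main : ∀ i : Ideal A, ∀ J : Set A, IsTwoSidedIdealSet J → J = (i : Set A) →
      J ≠ Set.univ → ∃ L : List (Set A), L ≠ [] ∧
        (∀ Q ∈ L, IsPrimeIdealSet Q ∧ J ⊆ Q) ∧ AuxListProd L ⊆ J := by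
    intro i
    induction i using IsNoetherian.induction with
    | hgt i IH =>
      intro J hJ hJi hJp
      by_cases hprime : ∀ I₁ I₂ : Set A, IsTwoSidedIdealSet I₁ → IsTwoSidedIdealSet I₂ →
          MulSubset I₁ I₂ J → I₁ ⊆ J ∨ I₂ ⊆ J
      · refine ⟨[J], by simp, fun Q hQ => ?_, ?_⟩
        · rw [List.mem_singleton] at hQ; subst hQ
          exact ⟨⟨hJ, hJp, hprime⟩, le_rfl⟩
        · rintro _ ⟨a, ha, b, hb, rfl⟩
          simp only [AuxListProd, Set.mem_singleton_iff] at hb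
          subst hb; simpa using ha
      · push_neg at hprime
        obtain ⟨I₁, I₂, h1, h2, hm, hn1, hn2⟩ := hprime
        set I₁' := Set.image2 (· + ·) I₁ J with hI₁'
        set I₂' := Set.image2 (· + ·) I₂ J with hI₂'
        have hts1 : IsTwoSidedIdealSet I₁' := aux_sum_set_ts h1 hJ
        have hts2 : IsTwoSidedIdealSet I₂' := aux_sum_set_ts h2 hJ
        have hJ1 : J ⊆ I₁' := fun x hx => ⟨0, h1.1, x, hx, by dsimp only; first | abel | noncomm_ring⟩
        have hJ2 : J ⊆ I₂' := fun x hx => ⟨0, h2.1, x, hx, by dsimp only; first | abel | noncomm_ring⟩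
        have hsub1 : I₁ ⊆ I₁' := fun x hx => ⟨x, hx, 0, hJ.1, by dsimp only; first | abel | noncomm_ring⟩
        have hsub2 : I₂ ⊆ I₂' := fun x hx => ⟨x, hx, 0, hJ.1, by dsimp only; first | abel | noncomm_ring⟩
        have hmul' : MulSubset I₁' I₂' J := by
          rintro _ ⟨a, ha, b, hb, rfl⟩ _ ⟨c, hc, d, hd, rfl⟩
          have h1' : a * c ∈ J := hm a ha c hc
          have h2' : a * d ∈ J := hJ.2.2.2.1 _ hd a
          have h3' : b * c ∈ J := hJ.2.2.2.2 _ hb c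
          have h4' : b * d ∈ J := hJ.2.2.2.2 _ hb d
          have : (a + b) * (c + d) = a * c + (a * d + (b * c + b * d)) := by noncomm_ring
          rw [this]
          exact hJ.2.1 _ h1' _ (hJ.2.1 _ h2' _ (hJ.2.1 _ h3' _ h4'))
        have hne1 : ¬ I₁' ⊆ J := fun h => hn1 (hsub1.trans h)
        have hne2 : ¬ I₂' ⊆ J := fun h => hn2 (hsub2.trans h)
        have hp1 : I₁' ≠ Set.univ := by
          intro h
          exact hne2 fun b hb => by simpa using hmul' 1 (h ▸ Set.mem_univ 1) b hb
        have hp2 : I₂' ≠ Set.univ := by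
          intro h
          exact hne1 fun a ha => by simpa using hmul' a ha 1 (h ▸ Set.mem_univ 1)
        have hgt1 : AuxToIdeal I₁' hts1 > i := by
          refine lt_of_le_of_ne (fun x hx => hJ1 (by rw [hJi]; exact hx)) ?_
          intro h
          apply hne1
          have hc : I₁' = J := by rw [hJi, h]; rfl
          exact hc.subset
        have hgt2 : AuxToIdeal I₂' hts2 > i := by
          refine lt_of_le_of_ne (fun x hx => hJ2 (by rw [hJi]; exact hx)) ?_
          intro h
          apply hne2
          have hc : I₂' = J := by rw [hJi, h]; rfl
          exact hc.subset
        obtain ⟨L₁, hL₁ne, hL₁p, hL₁s⟩ := IH _ hgt1 I₁' hts1 rfl hp1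
        obtain ⟨L₂, hL₂ne, hL₂p, hL₂s⟩ := IH _ hgt2 I₂' hts2 rfl hp2
        refine ⟨L₁ ++ L₂, by simp [hL₁ne], ?_, ?_⟩
        · intro Q hQ
          rcases List.mem_append.mp hQ with h | h
          · exact ⟨(hL₁p Q h).1, hJ1.trans (hL₁p Q h).2⟩
          · exact ⟨(hL₂p Q h).1, hJ2.trans (hL₂p Q h).2⟩
        · intro x hx
          obtain ⟨a, ha, b, hb, rfl⟩ := auxListProd_append L₁ L₂ hx
          exact hmul' a (hL₁s ha) b (hL₂s hb)
  exact main (AuxToIdeal J hJ) J hJ rfl hJp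

/-- If an elementwise product of two-sided ideals lies in a prime, one factor does. -/
lemma aux_prime_of_listProd {M : Set A} (hM : IsPrimeIdealSet M) :
    ∀ L : List (Set A), L ≠ [] → (∀ Q ∈ L, IsTwoSidedIdealSet Q) →
      AuxListProd L ⊆ M → ∃ Q ∈ L, Q ⊆ M := by
  intro L
  induction L with
  | nil => intro h; exact absurd rfl h
  | cons Q L ih =>
    intro _ hts hsub
    rcases eq_or_ne L [] with rfl | hLne
    ·
      refine ⟨Q, List.mem_cons_self, fun a ha => ?_⟩
      have : a * 1 ∈ M := hsub ⟨a, ha, 1, rfl, rfl⟩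
      simpa using this
    · have hQ : IsTwoSidedIdealSet Q := hts Q (List.mem_cons_self)
      set N : Set A := {x | ∀ a ∈ Q, a * x ∈ M} with hN
      have hNts : IsTwoSidedIdealSet N := by
        refine ⟨fun a _ => by simpa using hM.1.1, ?_, ?_, ?_, ?_⟩
        · intro x hx y hy a ha
          have : a * (x + y) = a * x + a * y := by noncomm_ring
          rw [this]; exact hM.1.2.1 _ (hx a ha) _ (hy a ha)
        · intro x hx a ha
          have : a * (-x) = -(a * x) := by noncomm_ring
          rw [this]; exact hM.1.2.2.1 _ (hx a ha)
        · intro x hx r a ha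
          have : a * (r * x) = (a * r) * x := by noncomm_ring
          rw [this]; exact hx _ (hQ.2.2.2.2 _ ha r)
        · intro x hx r a ha
          have : a * (x * r) = (a * x) * r := by noncomm_ring
          rw [this]; exact hM.1.2.2.2.2 _ (hx a ha) r
      have hLN : AuxListProd L ⊆ N := by
        intro y hy a ha
        exact hsub ⟨a, ha, y, hy, rfl⟩
      have hmul : MulSubset Q N M := fun a ha b hb => hb a ha
      rcases hM.2.2 Q N hQ hNts hmul with h | h
      · exact ⟨Q, List.mem_cons_self, h⟩
      · obtain ⟨R, hR, hRM⟩ := ih hLne (fun R hR => hts R (List.mem_cons_of_mem _ hR))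
          (fun y hy => h (hLN hy))
        exact ⟨R, List.mem_cons_of_mem _ hR, hRM⟩

end Aux

section AuxG
variable {G A : Type*} [Group G] [Ring A] [MulSemiringAction G A]

lemma aux_mem_smul {g : G} {Q : Set A} {a : A} : a ∈ g • Q ↔ g⁻¹ • a ∈ Q :=
  Set.mem_smul_set_iff_inv_smul_mem

lemma aux_ts_smul (g : G) {Q : Set A} (h : IsTwoSidedIdealSet Q) :
    IsTwoSidedIdealSet (g • Q) := by
  obtain ⟨h0, hadd, hneg, hl, hr⟩ := h
  refine ⟨?_, ?_, ?_, ?_, ?_⟩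
  · rw [aux_mem_smul, smul_zero]; exact h0
  · intro a ha b hb; rw [aux_mem_smul, smul_add]
    exact hadd _ (aux_mem_smul.mp ha) _ (aux_mem_smul.mp hb)
  · intro a ha; rw [aux_mem_smul, smul_neg]; exact hneg _ (aux_mem_smul.mp ha)
  · intro a ha r; rw [aux_mem_smul, smul_mul']; exact hl _ (aux_mem_smul.mp ha) _
  · intro a ha r; rw [aux_mem_smul, smul_mul']; exact hr _ (aux_mem_smul.mp ha) _

lemma aux_prime_smul (g : G) {Q : Set A} (h : IsPrimeIdealSet Q) :
    IsPrimeIdealSet (g • Q) := by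
  obtain ⟨hts, hp, hpr⟩ := h
  refine ⟨aux_ts_smul g hts, ?_, ?_⟩
  · intro hu
    apply hp
    have := congrArg (fun S => g⁻¹ • S) hu
    simpa [inv_smul_smul, Set.smul_set_univ] using this
  · intro I₁ I₂ h1 h2 hm
    have hm' : MulSubset (g⁻¹ • I₁) (g⁻¹ • I₂) Q := by
      rintro _ ⟨a, ha, rfl⟩ _ ⟨b, hb, rfl⟩
      have : (g⁻¹ • a) * (g⁻¹ • b) = g⁻¹ • (a * b) := (smul_mul' g⁻¹ a b).symm
      rw [this]
      exact aux_mem_smul.mp (by simpa using hm a ha b hb)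
    rcases hpr _ _ (aux_ts_smul g⁻¹ h1) (aux_ts_smul g⁻¹ h2) hm' with h | h
    · left
      have := Set.smul_set_mono (a := g) h
      simpa [smul_inv_smul] using this
    · right
      have := Set.smul_set_mono (a := g) h
      simpa [smul_inv_smul] using this

lemma aux_gstable_of_subset {I : Set A} (h : ∀ g : G, g • I ⊆ I) : IsGStable G I := by
  intro g
  refine le_antisymm (h g) ?_
  intro x hx
  have : g⁻¹ • x ∈ I := h g⁻¹ ⟨x, hx, rfl⟩
  exact aux_mem_smul.mpr this

lemma aux_inter_ts {Q : Set A} (h : IsTwoSidedIdealSet Q) :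
    IsTwoSidedIdealSet (⋂ g : G, g • Q) := by
  refine ⟨?_, ?_, ?_, ?_, ?_⟩
  · exact Set.mem_iInter.mpr fun g => (aux_ts_smul g h).1
  · intro a ha b hb
    exact Set.mem_iInter.mpr fun g =>
      (aux_ts_smul g h).2.1 _ (Set.mem_iInter.mp ha g) _ (Set.mem_iInter.mp hb g)
  · intro a ha
    exact Set.mem_iInter.mpr fun g => (aux_ts_smul g h).2.2.1 _ (Set.mem_iInter.mp ha g)
  · intro a ha r
    exact Set.mem_iInter.mpr fun g => (aux_ts_smul g h).2.2.2.1 _ (Set.mem_iInter.mp ha g) r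
  · intro a ha r
    exact Set.mem_iInter.mpr fun g => (aux_ts_smul g h).2.2.2.2 _ (Set.mem_iInter.mp ha g) r

lemma aux_inter_gstable (Q : Set A) : IsGStable G (⋂ g : G, g • Q) := by
  apply aux_gstable_of_subset
  intro g
  rintro _ ⟨x, hx, rfl⟩
  refine Set.mem_iInter.mpr fun h => ?_
  have : x ∈ (g⁻¹ * h) • Q := Set.mem_iInter.mp hx (g⁻¹ * h)
  have := Set.smul_set_mono (a := g) (Set.singleton_subset_iff.mpr this)
  have h2 : g • ((g⁻¹ * h) • Q) = h • Q := by
    rw [smul_smul, mul_inv_cancel_left]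
  rw [h2] at this
  exact this (Set.mem_smul_set.mpr ⟨x, rfl, rfl⟩)

lemma aux_inter_subset (Q : Set A) : (⋂ g : G, g • Q) ⊆ Q := by
  intro x hx
  have := Set.mem_iInter.mp hx 1
  simpa using this

/-- Iterated G-primeness on a list product. -/
lemma aux_gprime_of_listProd {J : Set A} (hGP : IsGPrimeIdealSet G J) :
    ∀ L : List (Set A), L ≠ [] →
      (∀ Q ∈ L, IsTwoSidedIdealSet Q ∧ IsGStable G Q) →
      AuxListProd L ⊆ J → ∃ Q ∈ L, Q ⊆ J := by
  intro L
  induction L with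
  | nil => intro h; exact absurd rfl h
  | cons Q L ih =>
    intro _ hts hsub
    rcases eq_or_ne L [] with rfl | hLne
    ·
      refine ⟨Q, List.mem_cons_self, fun a ha => ?_⟩
      have : a * 1 ∈ J := hsub ⟨a, ha, 1, rfl, rfl⟩
      simpa using this
    · have hQ := hts Q (List.mem_cons_self)
      set N : Set A := {x | ∀ a ∈ Q, a * x ∈ J} with hN
      have hNts : IsTwoSidedIdealSet N := by
        refine ⟨fun a _ => by simpa using hGP.1.1, ?_, ?_, ?_, ?_⟩
        · intro x hx y hy a ha
          have : a * (x + y) = a * x + a * y := by noncomm_ring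
          rw [this]; exact hGP.1.2.1 _ (hx a ha) _ (hy a ha)
        · intro x hx a ha
          have : a * (-x) = -(a * x) := by noncomm_ring
          rw [this]; exact hGP.1.2.2.1 _ (hx a ha)
        · intro x hx r a ha
          have : a * (r * x) = (a * r) * x := by noncomm_ring
          rw [this]; exact hx _ (hQ.1.2.2.2.2 _ ha r)
        · intro x hx r a ha
          have : a * (x * r) = (a * x) * r := by noncomm_ring
          rw [this]; exact hGP.1.2.2.2.2 _ (hx a ha) r
      have hNst : IsGStable G N := by
        apply aux_gstable_of_subset
        rintro g _ ⟨x, hx, rfl⟩ a ha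
        have ha' : g⁻¹ • a ∈ Q := by
          rw [← hQ.2 g⁻¹]; exact ⟨a, ha, rfl⟩
        have : a * g • x = g • ((g⁻¹ • a) * x) := by
          rw [smul_mul', smul_inv_smul]
        rw [this, ← hGP.2.1 g]
        exact ⟨_, hx _ ha', rfl⟩
      have hLN : AuxListProd L ⊆ N := fun y hy a ha => hsub ⟨a, ha, y, hy, rfl⟩
      have hmul : MulSubset Q N J := fun a ha b hb => hb a ha
      rcases hGP.2.2.2 Q N hQ.1 hQ.2 hNts hNst hmul with h | h
      · exact ⟨Q, List.mem_cons_self, h⟩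
      · obtain ⟨R, hR, hRM⟩ := ih hLne (fun R hR => hts R (List.mem_cons_of_mem _ hR))
          (fun y hy => h (hLN hy))
        exact ⟨R, List.mem_cons_of_mem _ hR, hRM⟩

/-- minimal prime over J -/
def AuxMinPrime (J P : Set A) : Prop :=
  IsPrimeIdealSet P ∧ J ⊆ P ∧ ∀ Q : Set A, IsPrimeIdealSet Q → J ⊆ Q → Q ⊆ P → Q = P

lemma aux_exists_minPrime {J Q : Set A} (hQ : IsPrimeIdealSet Q) (hJQ : J ⊆ Q) :
    ∃ P : Set A, AuxMinPrime J P ∧ P ⊆ Q := by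
  set S : Set (Set A) := {P | IsPrimeIdealSet P ∧ J ⊆ P ∧ P ⊆ Q} with hS
  have hzorn := zorn_superset_nonempty S ?_ Q ⟨hQ, hJQ, le_rfl⟩
  · obtain ⟨m, hmQ, hmem, hmin⟩ := hzorn
    exact ⟨m, ⟨hmem.1, hmem.2.1, fun R hR hJR hRm =>
      le_antisymm hRm (hmin ⟨hR, hJR, hRm.trans hmem.2.2⟩ hRm)⟩, hmem.2.2⟩
  · intro c hcS hchain hcne
    obtain ⟨P₀, hP₀⟩ := hcne
    refine ⟨⋂₀ c, ⟨⟨?_, ?_, ?_⟩, ?_, ?_⟩, fun s hs => Set.sInter_subset_of_mem hs⟩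
    · refine ⟨?_, ?_, ?_, ?_, ?_⟩
      · exact fun P hP => ((hcS hP).1.1).1
      · intro a ha b hb
        exact fun P hP => ((hcS hP).1.1).2.1 _ (ha P hP) _ (hb P hP)
      · intro a ha
        exact fun P hP => ((hcS hP).1.1).2.2.1 _ (ha P hP)
      · intro a ha r
        exact fun P hP => ((hcS hP).1.1).2.2.2.1 _ (ha P hP) r
      · intro a ha r
        exact fun P hP => ((hcS hP).1.1).2.2.2.2 _ (ha P hP) r
    · intro hu
      apply (hcS hP₀).1.2.1
      refine le_antisymm (Set.subset_univ _) ?_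
      rw [← hu]
      exact Set.sInter_subset_of_mem hP₀
    · intro I₁ I₂ h1 h2 hm
      by_contra hcon
      push_neg at hcon
      obtain ⟨hn1, hn2⟩ := hcon
      obtain ⟨x1, hx1, hnx1⟩ := Set.not_subset.mp hn1
      obtain ⟨x2, hx2, hnx2⟩ := Set.not_subset.mp hn2
      simp only [Set.mem_sInter, not_forall] at hnx1 hnx2
      obtain ⟨P₁, hP₁c, hxP₁⟩ := hnx1
      obtain ⟨P₂, hP₂c, hxP₂⟩ := hnx2
      have key : ∀ P ∈ c, P ⊆ P₁ → P ⊆ P₂ → False := by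
        intro P hPc hs1 hs2
        have : MulSubset I₁ I₂ P := fun a ha b hb =>
          Set.sInter_subset_of_mem hPc (hm a ha b hb)
        rcases (hcS hPc).1.2.2 I₁ I₂ h1 h2 this with h | h
        · exact hxP₁ (hs1 (h hx1))
        · exact hxP₂ (hs2 (h hx2))
      rcases hchain.total hP₁c hP₂c with h | h
      · exact key P₁ hP₁c le_rfl h
      · exact key P₂ hP₂c h le_rfl
    · exact fun x hx P hP => (hcS hP).2.1 hx
    · exact (Set.sInter_subset_of_mem hP₀).trans (hcS hP₀).2.2

lemma aux_minPrime_smul {J P : Set A} (hJst : IsGStable G J) (g : G)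
    (h : AuxMinPrime J P) : AuxMinPrime J (g • P) := by
  obtain ⟨hp, hJP, hmin⟩ := h
  refine ⟨aux_prime_smul g hp, ?_, ?_⟩
  · intro x hx
    rw [← hJst g] at hx
    obtain ⟨y, hy, rfl⟩ := hx
    exact ⟨y, hJP hy, rfl⟩
  · intro Q hQ hJQ hQP
    have h1 : g⁻¹ • Q ⊆ P := by
      have := Set.smul_set_mono (a := g⁻¹) hQP
      simpa [inv_smul_smul] using this
    have h2 : J ⊆ g⁻¹ • Q := by
      intro x hx
      rw [← hJst g⁻¹] at hx
      obtain ⟨y, hy, rfl⟩ := hx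
      exact ⟨y, hJQ hy, rfl⟩
    have := hmin _ (aux_prime_smul g⁻¹ hQ) h2 h1
    rw [← this, smul_inv_smul]

end AuxG

/-- Let `A` be a left and right noetherian ring and `G` a group acting on `A` by ring
automorphisms. A proper two-sided ideal `J` of `A` is `G`-prime if and only if there is a
prime two-sided ideal `P` of `A` whose `G`-orbit is finite and with `J = ⋂_{g∈G} g • P`. -/
theorem gPrime_iff_inter_finite_orbit_of_prime {G A : Type*} [Group G] [Ring A]
    [MulSemiringAction G A] [IsNoetherianRing A] [IsNoetherianRing Aᵐᵒᵖ]
    (J : Set A) (hJ : IsTwoSidedIdealSet J) (hJp : J ≠ Set.univ) :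
    IsGPrimeIdealSet G J ↔
      ∃ P : Set A, IsPrimeIdealSet P ∧ (Set.range fun g : G => g • P).Finite ∧
        J = ⋂ g : G, g • P := by
  constructor
  · intro hGP
    classical
    obtain ⟨L, hLne, hLmem, hLsub⟩ := aux_exists_prod_primes J hJ hJp
    -- replace each prime by a minimal prime over J below it
    set f : Set A → Set A := fun Q =>
      if h : IsPrimeIdealSet Q ∧ J ⊆ Q then Classical.choose (aux_exists_minPrime h.1 h.2)
      else Q with hf
    have hfmin : ∀ Q ∈ L, AuxMinPrime J (f Q) ∧ f Q ⊆ Q := by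
      intro Q hQ
      have h := hLmem Q hQ
      simp only [hf, dif_pos h]
      exact Classical.choose_spec (aux_exists_minPrime h.1 h.2)
    set L' := L.map f with hL'
    have hL'ne : L' ≠ [] := by simp [hL', hLne]
    have hL'mem : ∀ Q ∈ L', AuxMinPrime J Q := by
      intro Q hQ
      obtain ⟨R, hR, rfl⟩ := List.mem_map.mp hQ
      exact (hfmin R hR).1
    have hL'sub : AuxListProd L' ⊆ J :=
      (auxListProd_mono (fun Q hQ => (hfmin Q hQ).2)).trans hLsub
    -- now intersect orbits
    set k : Set A → Set A := fun Q => ⋂ g : G, g • Q with hk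
    have hkmem : ∀ Q ∈ L'.map k, IsTwoSidedIdealSet Q ∧ IsGStable G Q := by
      intro Q hQ
      obtain ⟨R, hR, rfl⟩ := List.mem_map.mp hQ
      exact ⟨aux_inter_ts (hL'mem R hR).1.1, aux_inter_gstable R⟩
    have hksub : AuxListProd (L'.map k) ⊆ J :=
      (auxListProd_mono (fun Q _ => aux_inter_subset Q)).trans hL'sub
    obtain ⟨K, hK, hKJ⟩ := aux_gprime_of_listProd hGP (L'.map k)
      (by simp [hL'ne]) hkmem hksub
    obtain ⟨P, hPL', rfl⟩ := List.mem_map.mp hK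
    have hPmin : AuxMinPrime J P := hL'mem P hPL'
    refine ⟨P, hPmin.1, ?_, ?_⟩
    · -- finiteness: orbit ⊆ minimal primes ⊆ elements of L'
      have hsub : (Set.range fun g : G => g • P) ⊆ {Q | Q ∈ L'} := by
        rintro _ ⟨g, rfl⟩
        have hmin : AuxMinPrime J (g • P) := aux_minPrime_smul hGP.2.1 g hPmin
        obtain ⟨R, hRL', hRsub⟩ := aux_prime_of_listProd hmin.1 L' hL'ne
          (fun Q hQ => (hL'mem Q hQ).1.1) (hL'sub.trans hmin.2.1)
        have heq := hmin.2.2 R (hL'mem R hRL').1 (hL'mem R hRL').2.1 hRsub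
        show g • P ∈ {Q | Q ∈ L'}
        rw [← heq]
        exact hRL'
      exact Set.Finite.subset (L'.finite_toSet) hsub
    · refine le_antisymm ?_ hKJ
      intro x hx
      refine Set.mem_iInter.mpr fun g => ?_
      rw [← hGP.2.1 g] at hx
      obtain ⟨y, hy, rfl⟩ := hx
      exact ⟨y, hPmin.2.1 hy, rfl⟩
  · rintro ⟨P, hP, _, rfl⟩
    have hJP : (⋂ g : G, g • P) ⊆ P := aux_inter_subset P
    refine ⟨hJ, aux_inter_gstable P, hJp, ?_⟩
    intro I₁ I₂ h1ts h1st h2ts h2st hm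
    have hm' : MulSubset I₁ I₂ P := fun a ha b hb => hJP (hm a ha b hb)
    have key : ∀ I : Set A, IsGStable G I → I ⊆ P → I ⊆ ⋂ g : G, g • P := by
      intro I hst hIP x hx
      refine Set.mem_iInter.mpr fun g => ?_
      rw [← hst g] at hx
      obtain ⟨y, hy, rfl⟩ := hx
      exact ⟨y, hIP hy, rfl⟩
    rcases hP.2.2 I₁ I₂ h1ts h2ts hm' with h | h
    · exact Or.inl (key I₁ h1st h)
    · exact Or.inr (key I₂ h2st h)
end

section
/- Let A be a left and right noetherian ring and G a group acting on A by ring automorphisms. Then every G-prime ideal J of A is semiprime: for every two-sided ideal I of A with I·I ⊆ J, one has I ⊆ J. -/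
/-! In a left noetherian ring there is a largest two-sided ideal `N` nilpotent modulo `J`: the
sum of two such ideals is again one, because `(P + Q)ⁿ ⊆ Qⁿ + P` for `P` two-sided. By
uniqueness `N` is `G`-stable as soon as `J` is. `G`-primeness then peels `N · Nᵏ ⊆ J` down to
`N ⊆ J`, and every ideal `I` with `I² ⊆ J` lies in `N`. -/

open Pointwise

namespace Ideal

variable {A : Type*} [Ring A]

instance {I J : Ideal A} [I.IsTwoSided] [J.IsTwoSided] : (I ⊔ J).IsTwoSided :=
  ⟨fun b h ↦ by
    obtain ⟨x, hx, y, hy, rfl⟩ := Submodule.mem_sup.1 h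
    rw [add_mul]
    exact add_mem (mem_sup_left (I.mul_mem_right b hx)) (mem_sup_right (J.mul_mem_right b hy))⟩

protected theorem IsTwoSided.pow_mul (I : Ideal A) [I.IsTwoSided] (m : ℕ) :
    ∀ n : ℕ, I ^ (m * n) = (I ^ m) ^ n
  | 0 => rfl
  | n + 1 => by
    rw [Nat.mul_succ, IsTwoSided.pow_add, IsTwoSided.pow_mul I m n, Submodule.pow_succ]

theorem sup_pow_le_pow_sup (I J : Ideal A) [J.IsTwoSided] :
    ∀ n : ℕ, (I ⊔ J) ^ n ≤ I ^ n ⊔ J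
  | 0 => le_sup_left
  | n + 1 =>
    calc (I ⊔ J) ^ n * (I ⊔ J)
        ≤ (I ^ n ⊔ J) * (I ⊔ J) := mul_mono_left (sup_pow_le_pow_sup I J n)
      _ = (I ^ n * I ⊔ I ^ n * J) ⊔ J * (I ⊔ J) := by rw [sup_mul, mul_sup]
      _ ≤ I ^ (n + 1) ⊔ J :=
          sup_le (sup_le_sup_left mul_le_right _) (mul_le_left.trans le_sup_right)

def twoSidedNilpotentModulo (J : Ideal A) : Set (Ideal A) :=
  {I | I.IsTwoSided ∧ ∃ n, I ^ n ≤ J}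

variable {J : Ideal A}

theorem sup_mem_twoSidedNilpotentModulo [J.IsTwoSided] {P Q : Ideal A}
    (hP : P ∈ twoSidedNilpotentModulo J) (hQ : Q ∈ twoSidedNilpotentModulo J) :
    P ⊔ Q ∈ twoSidedNilpotentModulo J := by
  obtain ⟨_, m, hPm⟩ := hP
  obtain ⟨_, n, hQn⟩ := hQ
  refine ⟨inferInstance, n * m, ?_⟩
  calc (P ⊔ Q) ^ (n * m) = ((Q ⊔ P) ^ n) ^ m := by rw [sup_comm, IsTwoSided.pow_mul]
    _ ≤ (P ⊔ J) ^ m := pow_right_mono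
        ((sup_pow_le_pow_sup Q P n).trans (sup_le (hQn.trans le_sup_right) le_sup_left)) m
    _ ≤ P ^ m ⊔ J := sup_pow_le_pow_sup P J m
    _ ≤ J := sup_le hPm le_rfl

theorem exists_isGreatest_twoSidedNilpotentModulo [IsNoetherianRing A] (J : Ideal A)
    [J.IsTwoSided] : ∃ N, IsGreatest (twoSidedNilpotentModulo J) N := by
  have hbot : ⊥ ∈ twoSidedNilpotentModulo J := ⟨inferInstance, 1, by simp⟩
  obtain ⟨N, hN, hmax⟩ := wellFounded_gt.has_min _ ⟨⊥, hbot⟩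
  refine ⟨N, hN, fun I hI ↦ ?_⟩
  have hnot_lt := hmax _ (sup_mem_twoSidedNilpotentModulo hN hI)
  exact le_sup_right.trans (not_lt_iff_le_imp_ge.1 hnot_lt le_sup_left)

section GroupAction

variable {G : Type*} [Group G] [MulSemiringAction G A]

theorem pointwise_smul_mul (g : G) (I J : Ideal A) : g • (I * J) = g • I * g • J := by
  refine le_antisymm (pointwise_smul_subset_iff.2 <| mul_le.2 fun r hr s hs ↦ ?_)
    (mul_le.2 fun r hr s hs ↦ ?_)
  · rw [mem_inv_pointwise_smul_iff, smul_mul']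
    exact mul_mem_mul (smul_mem_pointwise_smul g r I hr) (smul_mem_pointwise_smul g s J hs)
  · rw [mem_pointwise_smul_iff_inv_smul_mem, smul_mul']
    exact mul_mem_mul (mem_pointwise_smul_iff_inv_smul_mem.1 hr)
      (mem_pointwise_smul_iff_inv_smul_mem.1 hs)

theorem pointwise_smul_pow (g : G) (I : Ideal A) : ∀ n : ℕ, g • (I ^ n) = (g • I) ^ n
  | 0 => by simp only [Submodule.pow_zero, one_eq_top]; exact map_top _
  | n + 1 => by rw [Submodule.pow_succ, pointwise_smul_mul, pointwise_smul_pow g I n,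
      Submodule.pow_succ]

instance (g : G) (I : Ideal A) [I.IsTwoSided] : (g • I).IsTwoSided := by
  rw [pointwise_smul_eq_comap]
  infer_instance

theorem smul_mem_twoSidedNilpotentModulo {g : G} (hJ : g • J ≤ J) {N : Ideal A}
    (hN : N ∈ twoSidedNilpotentModulo J) : g • N ∈ twoSidedNilpotentModulo J := by
  obtain ⟨_, n, hNn⟩ := hN
  exact ⟨inferInstance, n, pointwise_smul_pow g N n ▸ (smul_mono_right g hNn).trans hJ⟩

theorem smul_eq_of_isGreatest_twoSidedNilpotentModulo (hJ : ∀ g : G, g • J ≤ J) {N : Ideal A}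
    (hN : IsGreatest (twoSidedNilpotentModulo J) N) (g : G) : g • N = N :=
  have hle (g : G) : g • N ≤ N := hN.2 (smul_mem_twoSidedNilpotentModulo (hJ g) hN.1)
  (hle g).antisymm (subset_pointwise_smul_iff.2 (hle g⁻¹))

end GroupAction

end Ideal

section SetIdeals

variable {G A : Type*} [Group G] [Ring A] [MulSemiringAction G A]

def IsTwoSidedIdealSet.toIdeal {I : Set A} (hI : IsTwoSidedIdealSet I) : Ideal A where
  carrier := I
  add_mem' ha hb := hI.2.1 _ ha _ hb
  zero_mem' := hI.1
  smul_mem' r _ ha := hI.2.2.2.1 _ ha r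

instance {I : Set A} (hI : IsTwoSidedIdealSet I) : hI.toIdeal.IsTwoSided :=
  ⟨fun b ha ↦ hI.2.2.2.2 _ ha b⟩

theorem Ideal.isTwoSidedIdealSet (I : Ideal A) [I.IsTwoSided] : IsTwoSidedIdealSet (I : Set A) :=
  ⟨I.zero_mem, fun _ ha _ hb ↦ I.add_mem ha hb, fun _ ha ↦ I.neg_mem ha,
    fun _ ha r ↦ I.mul_mem_left r ha, fun _ ha r ↦ I.mul_mem_right r ha⟩

theorem Ideal.coe_pointwise_smul (g : G) (I : Ideal A) :
    ((g • I : Ideal A) : Set A) = g • (I : Set A) := by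
  ext x
  rw [SetLike.mem_coe, mem_pointwise_smul_iff_inv_smul_mem, Set.mem_smul_set_iff_inv_smul_mem]
  rfl

theorem Ideal.isGStable_coe_iff {I : Ideal A} :
    IsGStable G (I : Set A) ↔ ∀ g : G, g • I = I := by
  simp only [IsGStable, ← coe_pointwise_smul, SetLike.coe_set_eq]

theorem IsGPrimeIdealSet.le_or_le_of_mul_le {J : Ideal A} (hJ : IsGPrimeIdealSet G (J : Set A))
    {I₁ I₂ : Ideal A} [I₁.IsTwoSided] [I₂.IsTwoSided] (h₁ : ∀ g : G, g • I₁ = I₁)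
    (h₂ : ∀ g : G, g • I₂ = I₂) (h : I₁ * I₂ ≤ J) : I₁ ≤ J ∨ I₂ ≤ J :=
  hJ.2.2.2 _ _ I₁.isTwoSidedIdealSet (Ideal.isGStable_coe_iff.2 h₁) I₂.isTwoSidedIdealSet
    (Ideal.isGStable_coe_iff.2 h₂) fun _ ha _ hb ↦ h (Ideal.mul_mem_mul ha hb)

theorem IsGPrimeIdealSet.le_of_pow_le {J N : Ideal A} (hJ : IsGPrimeIdealSet G (J : Set A))
    [N.IsTwoSided] (hN : ∀ g : G, g • N = N) : ∀ {n : ℕ}, N ^ n ≤ J → N ≤ J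
  | 0, h => le_top.trans ((Ideal.one_eq_top (R := A)).symm.trans_le h)
  | n + 1, h => by
    rw [Ideal.IsTwoSided.pow_succ] at h
    have hNn (g : G) : g • N ^ n = N ^ n := by rw [Ideal.pointwise_smul_pow, hN]
    exact (hJ.le_or_le_of_mul_le hN hNn h).elim id (hJ.le_of_pow_le hN)

end SetIdeals

theorem gPrime_is_semiprime_general {G A : Type*} [Group G] [Ring A]
    [MulSemiringAction G A] [IsNoetherianRing A]
    (J : Set A) (hJ : IsGPrimeIdealSet G J) :
    ∀ I : Set A, IsTwoSidedIdealSet I → MulSubset I I J → I ⊆ J := by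
  intro I hI hII
  obtain ⟨N, hN⟩ := Ideal.exists_isGreatest_twoSidedNilpotentModulo hJ.1.toIdeal
  have hIN : hI.toIdeal ≤ N := hN.2 ⟨inferInstance, 2, by
    rw [Submodule.pow_succ, Submodule.pow_one]
    exact Ideal.mul_le.2 hII⟩
  have hNG := Ideal.smul_eq_of_isGreatest_twoSidedNilpotentModulo
    (fun g ↦ (Ideal.isGStable_coe_iff.1 hJ.2.1 g).le) hN
  obtain ⟨_, n, hNn⟩ := hN.1
  exact hIN.trans (IsGPrimeIdealSet.le_of_pow_le (J := hJ.1.toIdeal) hJ hNG hNn)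

/-- Let `A` be a left and right noetherian ring and `G` a group acting on `A` by ring
automorphisms. Every `G`-prime ideal `J` of `A` is semiprime: any two-sided ideal `I`
with `I·I ⊆ J` satisfies `I ⊆ J`. -/
theorem gPrime_is_semiprime {G A : Type*} [Group G] [Ring A]
    [MulSemiringAction G A] [IsNoetherianRing A] [IsNoetherianRing Aᵐᵒᵖ]
    (J : Set A) (hJ : IsGPrimeIdealSet G J) :
    ∀ I : Set A, IsTwoSidedIdealSet I → MulSubset I I J → I ⊆ J :=
  gPrime_is_semiprime_general J hJ
end

section
/- Let A be a ring and G a group acting on A by ring automorphisms, and let J and J' be G-prime ideals of A. If some prime two-sided ideal Q with (Q:G) = J' contains the intersection of all prime two-sided ideals P with (P:G) = J, then every prime two-sided ideal Q' with (Q':G) = J' contains that intersection. (Equivalently, the Zariski closure of each G-stratum of the prime spectrum of A is a union of G-strata.) -/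
open Pointwise

/-- The `G`-stratum of the prime spectrum corresponding to a `G`-prime `J`:
all prime two-sided ideals `P` with `(P:G) = ⋂_{g∈G} g • P = J`. -/
def GStratum (G : Type*) {A : Type*} [Group G] [Ring A] [MulSemiringAction G A]
    (J : Set A) : Set (Set A) :=
  {P : Set A | IsPrimeIdealSet P ∧ (⋂ g : G, g • P) = J}

/-!
The intersection of a `G`-stratum is `G`-stable, because `G` permutes each stratum. A `G`-stable
set contained in `Q` is therefore contained in `(Q:G)`, which is `J'` whenever
`Q` lies in the stratum of `J'`; and `J' = (Q':G) ⊆ Q'` for every `Q'` in that stratum.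
-/

section RingEquiv

variable {A B : Type*} [Ring A] [Ring B]

theorem IsTwoSidedIdealSet.preimage (f : B →+* A) {I : Set A} (hI : IsTwoSidedIdealSet I) :
    IsTwoSidedIdealSet (f ⁻¹' I) := by
  obtain ⟨h0, hadd, hneg, hl, hr⟩ := hI
  refine ⟨?_, fun a ha b hb => ?_, fun a ha => ?_, fun a ha r => ?_, fun a ha r => ?_⟩
  · simpa using h0
  · simpa using hadd _ ha _ hb
  · simpa using hneg _ ha
  · simpa using hl _ ha (f r)
  · simpa using hr _ ha (f r)

theorem IsPrimeIdealSet.preimage (e : B ≃+* A) {P : Set A} (hP : IsPrimeIdealSet P) :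
    IsPrimeIdealSet (e ⁻¹' P) := by
  obtain ⟨hideal, hne, hprime⟩ := hP
  refine ⟨hideal.preimage e.toRingHom, ?_, fun I₁ I₂ h₁ h₂ hmul => ?_⟩
  · rwa [Ne, Set.preimage_eq_univ_iff, e.surjective.range_eq, Set.univ_subset_iff]
  · have hmul' : MulSubset (e.symm ⁻¹' I₁) (e.symm ⁻¹' I₂) P := fun a ha b hb => by
      simpa using hmul _ ha _ hb
    refine (hprime _ _ (h₁.preimage e.symm.toRingHom) (h₂.preimage e.symm.toRingHom)
      hmul').imp (fun h x hx => h ?_) (fun h x hx => h ?_) <;> simpa using hx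

end RingEquiv

section Action

variable {G : Type*} [Group G]

theorem IsPrimeIdealSet.smul {A : Type*} [Ring A] [MulSemiringAction G A] (g : G) {P : Set A}
    (hP : IsPrimeIdealSet P) : IsPrimeIdealSet (g • P) := by
  rw [← Set.preimage_smul_inv]
  exact hP.preimage (MulSemiringAction.toRingEquiv G A g⁻¹)

theorem iInter_smul_smul_set {α : Type*} [MulAction G α] (g : G) (P : Set α) :
    ⋂ k : G, k • g • P = ⋂ k : G, k • P := by
  simp_rw [smul_smul]
  exact (mul_right_surjective g).iInter_comp (fun k => k • P)

theorem smul_mem_gStratum {A : Type*} [Ring A] [MulSemiringAction G A] (g : G) {J P : Set A}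
    (hP : P ∈ GStratum G J) : g • P ∈ GStratum G J :=
  ⟨hP.1.smul g, (iInter_smul_smul_set g P).trans hP.2⟩

theorem sInter_subset_iInter_smul_of_smul_mem {α : Type*} [MulAction G α] {S : Set (Set α)}
    (hS : ∀ g : G, ∀ P ∈ S, g • P ∈ S) {Q : Set α} (hQ : ⋂₀ S ⊆ Q) :
    ⋂₀ S ⊆ ⋂ g : G, g • Q := by
  intro x hx
  refine Set.mem_iInter.2 fun g => Set.mem_smul_set_iff_inv_smul_mem.2 (hQ fun P hP => ?_)
  exact Set.mem_smul_set_iff_inv_smul_mem.1 (hx _ (hS g P hP))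

end Action

theorem closure_of_stratum_is_union_of_strata_general {G A : Type*} [Group G] [Ring A]
    [MulSemiringAction G A] (J J' : Set A)
    (h : ∃ Q ∈ GStratum G J', ⋂₀ (GStratum G J) ⊆ Q) :
    ∀ Q' ∈ GStratum G J', ⋂₀ (GStratum G J) ⊆ Q' := by
  obtain ⟨Q, ⟨-, hQ⟩, hsub⟩ := h
  rintro Q' ⟨-, hQ'⟩
  calc ⋂₀ GStratum G J ⊆ ⋂ g : G, g • Q :=
        sInter_subset_iInter_smul_of_smul_mem (fun g _ => smul_mem_gStratum g) hsub
    _ = ⋂ g : G, g • Q' := by rw [hQ, hQ']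
    _ ⊆ Q' := Set.iInter_subset_of_subset 1 (one_smul G Q').le

/-- The closure of each `G`-stratum is a union of `G`-strata: if some prime `Q` with
`(Q:G) = J'` contains the intersection of the stratum of `J`, then every prime `Q'`
with `(Q':G) = J'` contains that intersection. -/
theorem closure_of_stratum_is_union_of_strata {G A : Type*} [Group G] [Ring A]
    [MulSemiringAction G A] (J J' : Set A)
    (hJ : IsGPrimeIdealSet G J) (hJ' : IsGPrimeIdealSet G J')
    (h : ∃ Q ∈ GStratum G J', ⋂₀ (GStratum G J) ⊆ Q) :
    ∀ Q' ∈ GStratum G J', ⋂₀ (GStratum G J) ⊆ Q' :=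
  closure_of_stratum_is_union_of_strata_general J J' h
end

section
/- Let A be a ring and G a group acting on A by ring automorphisms, and suppose A has only finitely many G-prime ideals. Then for each G-prime ideal J, the G-stratum spec_J A is locally closed in the Zariski topology on the prime spectrum of A: there exist two-sided ideals I and I' of A such that spec_J A = {P : P a prime two-sided ideal of A with I ⊆ P and I' ⊄ P}. -/
open Pointwise

section Helpers

variable {G A : Type*} [Group G] [Ring A] [MulSemiringAction G A]

lemma memSmulIff (g : G) (s : Set A) (a : A) : a ∈ g • s ↔ g⁻¹ • a ∈ s :=
  Set.mem_smul_set_iff_inv_smul_mem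

lemma iInter_twoSided {ι : Sort*} {f : ι → Set A} (h : ∀ i, IsTwoSidedIdealSet (f i)) :
    IsTwoSidedIdealSet (⋂ i, f i) :=
  ⟨Set.mem_iInter.2 fun i => (h i).1,
   fun a ha b hb => Set.mem_iInter.2 fun i =>
     (h i).2.1 a (Set.mem_iInter.1 ha i) b (Set.mem_iInter.1 hb i),
   fun a ha => Set.mem_iInter.2 fun i => (h i).2.2.1 a (Set.mem_iInter.1 ha i),
   fun a ha r => Set.mem_iInter.2 fun i => (h i).2.2.2.1 a (Set.mem_iInter.1 ha i) r,
   fun a ha r => Set.mem_iInter.2 fun i => (h i).2.2.2.2 a (Set.mem_iInter.1 ha i) r⟩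

lemma sInter_twoSided {S : Set (Set A)} (h : ∀ K ∈ S, IsTwoSidedIdealSet K) :
    IsTwoSidedIdealSet (⋂₀ S) := by
  rw [Set.sInter_eq_iInter]
  exact iInter_twoSided fun i => h i i.2

lemma smul_twoSided (g : G) {I : Set A} (hI : IsTwoSidedIdealSet I) :
    IsTwoSidedIdealSet (g • I) := by
  refine ⟨?_, ?_, ?_, ?_, ?_⟩
  · rw [memSmulIff]; simpa using hI.1
  · intro a ha b hb
    rw [memSmulIff] at ha hb ⊢
    rw [smul_add]; exact hI.2.1 _ ha _ hb
  · intro a ha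
    rw [memSmulIff] at ha ⊢
    rw [smul_neg]; exact hI.2.2.1 _ ha
  · intro a ha r
    rw [memSmulIff] at ha ⊢
    rw [smul_mul']; exact hI.2.2.2.1 _ ha _
  · intro a ha r
    rw [memSmulIff] at ha ⊢
    rw [smul_mul']; exact hI.2.2.2.2 _ ha _

lemma stable_sInter {S : Set (Set A)} (h : ∀ K ∈ S, IsGStable G K) :
    IsGStable G (⋂₀ S) := by
  intro g
  ext a
  rw [memSmulIff, Set.mem_sInter, Set.mem_sInter]
  refine forall_congr' fun K => imp_congr_right fun hK => ?_
  conv_rhs => rw [← h K hK g]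
  rw [memSmulIff]

lemma inter_smul_subset (P : Set A) : (⋂ g : G, g • P) ⊆ P := by
  have := Set.iInter_subset (fun g : G => g • P) 1
  rwa [one_smul] at this

lemma stable_inter_smul (P : Set A) : IsGStable G (⋂ g : G, g • P) := by
  intro g
  ext a
  rw [memSmulIff]
  simp only [Set.mem_iInter]
  constructor
  · intro h h'
    have := h (g⁻¹ * h')
    rw [memSmulIff] at this ⊢
    rwa [mul_inv_rev, inv_inv, mul_smul, smul_inv_smul] at this
  · intro h h'
    have := h (g * h')
    rw [memSmulIff] at this ⊢
    rwa [mul_inv_rev, mul_smul] at this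

lemma gPrime_inter_smul (P : Set A) (hP : IsPrimeIdealSet P) :
    IsGPrimeIdealSet G (⋂ g : G, g • P) := by
  have hsub : (⋂ g : G, g • P) ⊆ P := inter_smul_subset P
  refine ⟨iInter_twoSided fun g => smul_twoSided g hP.1, stable_inter_smul P, ?_, ?_⟩
  · intro h
    exact hP.2.1 (Set.eq_univ_of_univ_subset (h ▸ hsub))
  · intro I₁ I₂ h1t h1s h2t h2s hm
    rcases hP.2.2 I₁ I₂ h1t h2t (fun a ha b hb => hsub (hm a ha b hb)) with h | h
    · exact Or.inl (Set.subset_iInter fun g => by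
        rw [← h1s g]; exact Set.smul_set_mono h)
    · exact Or.inr (Set.subset_iInter fun g => by
        rw [← h2s g]; exact Set.smul_set_mono h)

lemma exists_mem_subset_of_sInter_subset {J : Set A} (hJ : IsGPrimeIdealSet G J)
    {S : Set (Set A)} (hfin : S.Finite) :
    (∀ K ∈ S, IsTwoSidedIdealSet K ∧ IsGStable G K) → ⋂₀ S ⊆ J →
    ∃ K ∈ S, K ⊆ J := by
  refine Set.Finite.induction_on
    (motive := fun s _ => (∀ K ∈ s, IsTwoSidedIdealSet K ∧ IsGStable G K) → ⋂₀ s ⊆ J →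
      ∃ K ∈ s, K ⊆ J) S hfin ?_ ?_
  · intro _ h
    rw [Set.sInter_empty] at h
    exact absurd (Set.eq_univ_of_univ_subset h) hJ.2.2.1
  · intro a s hnotin hsfin ih hS h
    rw [Set.sInter_insert] at h
    have hmem : a ∈ insert a s := Set.mem_insert _ _
    have h2t : IsTwoSidedIdealSet (⋂₀ s) :=
      sInter_twoSided fun K hK => (hS K (Set.mem_insert_of_mem _ hK)).1
    have h2s : IsGStable G (⋂₀ s) :=
      stable_sInter fun K hK => (hS K (Set.mem_insert_of_mem _ hK)).2
    have hmul : MulSubset a (⋂₀ s) J := by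
      intro x hx y hy
      refine h ⟨(hS a hmem).1.2.2.2.2 x hx y, Set.mem_sInter.2 fun K hK => ?_⟩
      exact (hS K (Set.mem_insert_of_mem _ hK)).1.2.2.2.1 y (hy K hK) x
    rcases hJ.2.2.2 a (⋂₀ s) (hS a hmem).1 (hS a hmem).2 h2t h2s hmul with h1 | h2
    · exact ⟨a, hmem, h1⟩
    · obtain ⟨K, hK, hKJ⟩ := ih (fun K hK => hS K (Set.mem_insert_of_mem _ hK)) h2
      exact ⟨K, Set.mem_insert_of_mem _ hK, hKJ⟩

end Helpers

/-- If `A` has only finitely many `G`-prime ideals, then each `G`-stratum is locally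
closed in the Zariski topology on the prime spectrum: it has the form
`{P prime | I ⊆ P and I' ⊄ P}` for suitable two-sided ideals `I, I'`. -/
theorem stratum_locally_closed_of_finitely_many_gPrimes {G A : Type*} [Group G] [Ring A]
    [MulSemiringAction G A]
    (hfin : {J : Set A | IsGPrimeIdealSet G J}.Finite) :
    ∀ J : Set A, IsGPrimeIdealSet G J →
      ∃ I I' : Set A, IsTwoSidedIdealSet I ∧ IsTwoSidedIdealSet I' ∧
        GStratum G J = {P : Set A | IsPrimeIdealSet P ∧ I ⊆ P ∧ ¬ I' ⊆ P} := by
  intro J hJ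
  set S : Set (Set A) := {J' | IsGPrimeIdealSet G J' ∧ J ⊆ J' ∧ J' ≠ J} with hSdef
  have hSfin : S.Finite := hfin.subset fun K hK => hK.1
  refine ⟨J, ⋂₀ S, hJ.1, sInter_twoSided fun K hK => hK.1.1, ?_⟩
  ext P
  simp only [GStratum, Set.mem_setOf_eq]
  constructor
  · rintro ⟨hP, hPG⟩
    refine ⟨hP, ?_, ?_⟩
    · rw [← hPG]; exact inter_smul_subset P
    · intro hsub
      have hQ : ⋂₀ S ⊆ J := by
        rw [← hPG]
        refine Set.subset_iInter fun g => ?_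
        have hst : IsGStable G (⋂₀ S) := stable_sInter fun K hK => hK.1.2.1
        rw [← hst g]
        exact Set.smul_set_mono hsub
      obtain ⟨K, hKS, hKJ⟩ := exists_mem_subset_of_sInter_subset hJ hSfin
        (fun K hK => ⟨hK.1.1, hK.1.2.1⟩) hQ
      exact hKS.2.2 (Set.Subset.antisymm hKJ hKS.2.1)
  · rintro ⟨hP, hJP, hIP⟩
    refine ⟨hP, ?_⟩
    by_contra hne
    have hQprime : IsGPrimeIdealSet G (⋂ g : G, g • P) := gPrime_inter_smul P hP
    have hJQ : J ⊆ ⋂ g : G, g • P := by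
      refine Set.subset_iInter fun g => ?_
      rw [← hJ.2.1 g]
      exact Set.smul_set_mono hJP
    have hmemS : (⋂ g : G, g • P) ∈ S := ⟨hQprime, hJQ, fun h => hne h⟩
    exact hIP ((Set.sInter_subset_of_mem hmemS).trans (inter_smul_subset P))
end

section
/- Let k be an infinite field, A a left and right noetherian k-algebra, and H = (kˣ)^r a torus acting rationally on A by k-algebra automorphisms. Then every H-prime ideal of A is a prime two-sided ideal. -/
set_option linter.unusedSectionVars false


open Pointwise

noncomputable def lexG (r : ℕ) : LinearOrder (Lex (Fin r → ℤ)) :=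
  @Pi.Lex.linearOrder (Fin r) (fun _ => ℤ) _
    (inferInstance : WellFoundedLT (Fin r)) _

noncomputable def lexLO (r : ℕ) : LinearOrder (Lex (Fin r → ℤ)) :=
  (lexG r)

attribute [instance] lexG lexLO

section Aux

variable {k : Type*} [Field k] {A : Type*} [Ring A] [Algebra k A]
variable {r : ℕ} [MulSemiringAction (Fin r → kˣ) A] [SMulCommClass (Fin r → kˣ) k A]

/-- The rational character of the torus attached to `m : ℤ^r`, with values in `k`. -/
def chiK (k : Type*) [Field k] {r : ℕ} (m : Fin r → ℤ) (h : Fin r → kˣ) : k :=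
  ((∏ i, h i ^ m i : kˣ) : k)

variable (k) in
/-- `x` is a simultaneous eigenvector with eigenvalue character `χ_m`. -/
def IsEig (m : Fin r → ℤ) (x : A) : Prop :=
  ∀ h : Fin r → kˣ, h • x = chiK k m h • x

lemma chiK_add (m n : Fin r → ℤ) (h : Fin r → kˣ) :
    chiK k (m + n) h = chiK k m h * chiK k n h := by
  unfold chiK
  rw [← Units.val_mul, ← Finset.prod_mul_distrib]
  congr 1
  refine Finset.prod_congr rfl fun i _ => ?_
  rw [Pi.add_apply, zpow_add]

lemma exists_unit_zpow_ne [Infinite k] {d : ℤ} (hd : d ≠ 0) : ∃ t : kˣ, t ^ d ≠ 1 := by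
  by_contra hcon
  push_neg at hcon
  have hn : d.natAbs ≠ 0 := Int.natAbs_ne_zero.mpr hd
  have hroots : ∀ t : kˣ, (t : k) ^ d.natAbs = 1 := by
    intro t
    have h1 : t ^ d = 1 := hcon t
    have h2 : t ^ d.natAbs = (1 : kˣ) := by
      rcases Int.natAbs_eq d with h | h
      · rw [← zpow_natCast, ← h, h1]
      · rw [← zpow_natCast, ← neg_neg ((d.natAbs : ℤ)), ← h, zpow_neg, h1, inv_one]
    simpa using congrArg Units.val h2
  -- every nonzero element of k is a root of X^n - 1
  have hfin : Set.Finite {x : k | (Polynomial.X ^ d.natAbs - 1 : Polynomial k).IsRoot x} := by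
    apply Polynomial.finite_setOf_isRoot
    intro hzero
    have := congrArg (Polynomial.eval 0) hzero
    simp [zero_pow hn] at this
  have hsub : {x : k | x ≠ 0} ⊆ {x : k | (Polynomial.X ^ d.natAbs - 1 : Polynomial k).IsRoot x} := by
    intro x hx
    have : x ^ d.natAbs = 1 := hroots (Units.mk0 x hx)
    simp [Polynomial.IsRoot, this]
  have : Set.Finite {x : k | x ≠ 0} := hfin.subset hsub
  have : Set.Finite (Set.univ : Set k) := by
    have := this.insert 0
    apply this.subset
    intro x _
    by_cases hx : x = 0 <;> simp [hx]
  exact Set.infinite_univ this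

lemma exists_chiK_ne [Infinite k] {m n : Fin r → ℤ} (hmn : m ≠ n) :
    ∃ h : Fin r → kˣ, chiK k m h ≠ chiK k n h := by
  obtain ⟨i₀, hi₀⟩ := Function.ne_iff.mp hmn
  obtain ⟨t, ht⟩ := exists_unit_zpow_ne (k := k) (d := m i₀ - n i₀) (sub_ne_zero.mpr hi₀)
  refine ⟨Function.update (1 : Fin r → kˣ) i₀ t, ?_⟩
  have hprod : ∀ e : Fin r → ℤ,
      chiK k e (Function.update (1 : Fin r → kˣ) i₀ t) = ((t ^ e i₀ : kˣ) : k) := by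
    intro e
    unfold chiK
    congr 1
    rw [Finset.prod_eq_single i₀]
    · rw [Function.update_self]
    · intro j _ hj
      rw [Function.update_of_ne hj]
      simp
    · simp
  rw [hprod, hprod]
  intro hEq
  apply ht
  have h2 : t ^ m i₀ = t ^ n i₀ := Units.ext hEq
  rw [sub_eq_add_neg, zpow_add, h2, zpow_neg, mul_inv_cancel]


lemma IsEig.zero (m : Fin r → ℤ) : IsEig k (A := A) m 0 := by
  intro h; rw [smul_zero, smul_zero]

lemma IsEig.add {m : Fin r → ℤ} {x y : A} (hx : IsEig k m x) (hy : IsEig k m y) :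
    IsEig k m (x + y) := by
  intro h; rw [smul_add, hx h, hy h, smul_add]

lemma IsEig.ksmul {m : Fin r → ℤ} {x : A} (hx : IsEig k m x) (c : k) :
    IsEig k m (c • x) := by
  intro h
  rw [smul_comm, hx h, smul_smul, smul_smul, mul_comm]

lemma IsEig.mul {m n : Fin r → ℤ} {x y : A} (hx : IsEig k m x) (hy : IsEig k n y) :
    IsEig k (m + n) (x * y) := by
  intro h
  rw [MulSemiringAction.smul_mul, hx h, hy h, chiK_add, smul_mul_assoc, mul_smul_comm,
    smul_smul]

lemma IsEig.sum {m : Fin r → ℤ} {ι : Type*} (S : Finset ι) (f : ι → A)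
    (hf : ∀ i ∈ S, IsEig k m (f i)) : IsEig k m (∑ i ∈ S, f i) := by
  classical
  induction S using Finset.induction_on with
  | empty => simpa using IsEig.zero (A := A) m
  | insert _ _ hnot ih =>
    rw [Finset.sum_insert hnot]
    exact (hf _ (Finset.mem_insert_self _ _)).add
      (ih fun i hi => hf i (Finset.mem_insert_of_mem hi))

-- closure lemmas for two-sided ideals
lemma TSI.sub {J : Set A} (hJ : IsTwoSidedIdealSet J) {x y : A} (hx : x ∈ J) (hy : y ∈ J) :
    x - y ∈ J := by
  rw [sub_eq_add_neg]
  exact hJ.2.1 _ hx _ (hJ.2.2.1 _ hy)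

lemma TSI.ksmul {J : Set A} (hJ : IsTwoSidedIdealSet J) {x : A} (hx : x ∈ J) (c : k) :
    c • x ∈ J := by
  rw [Algebra.smul_def]
  exact hJ.2.2.2.1 _ hx _

lemma TSI.sum {J : Set A} (hJ : IsTwoSidedIdealSet J) {ι : Type*} (S : Finset ι) (f : ι → A)
    (hf : ∀ i ∈ S, f i ∈ J) : ∑ i ∈ S, f i ∈ J := by
  classical
  induction S using Finset.induction_on with
  | empty => simpa using hJ.1
  | insert _ _ hnot ih =>
    rw [Finset.sum_insert hnot]
    exact hJ.2.1 _ (hf _ (Finset.mem_insert_self _ _)) _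
      (ih fun i hi => hf i (Finset.mem_insert_of_mem hi))

lemma GStable.smul_mem {J : Set A} (hst : IsGStable (Fin r → kˣ) J) {x : A} (hx : x ∈ J)
    (g : Fin r → kˣ) : g • x ∈ J := by
  have h1 : g • x ∈ g • J := Set.smul_mem_smul_set hx
  rwa [hst g] at h1

/-- Components of an element of an `H`-stable ideal lie in the ideal. -/
lemma components_mem [Infinite k] {J : Set A} (hJ : IsTwoSidedIdealSet J)
    (hst : IsGStable (Fin r → kˣ) J) :
    ∀ (S : Finset (Fin r → ℤ)) (f : (Fin r → ℤ) → A),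
      (∀ m ∈ S, IsEig k m (f m)) → (∑ m ∈ S, f m) ∈ J → ∀ t ∈ S, f t ∈ J := by
  classical
  intro S
  induction S using Finset.strongInduction with
  | _ S ih =>
    intro f heig hsum t ht
    by_cases hcard : S.card ≤ 1
    · have hS : S = {t} := by
        apply Finset.eq_singleton_iff_unique_mem.mpr
        exact ⟨ht, fun b hb => Finset.card_le_one.mp hcard b hb t ht⟩
      rw [hS, Finset.sum_singleton] at hsum
      exact hsum
    · push_neg at hcard
      obtain ⟨j, hjS, hjt⟩ := Finset.exists_mem_ne hcard t
      obtain ⟨h, hh⟩ := exists_chiK_ne (k := k) (r := r) (m := j) (n := t)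
        (by intro hEq; exact hjt hEq)
      have hgsum : ∑ m ∈ S.erase j, (chiK k j h - chiK k m h) • f m ∈ J := by
        have h1 : ∑ m ∈ S.erase j, (chiK k j h - chiK k m h) • f m
            = ∑ m ∈ S, (chiK k j h - chiK k m h) • f m :=
          Finset.sum_erase _ (by simp)
        have h2 : ∑ m ∈ S, (chiK k j h - chiK k m h) • f m
            = chiK k j h • (∑ m ∈ S, f m) - h • (∑ m ∈ S, f m) := by
          rw [Finset.smul_sum, Finset.smul_sum, ← Finset.sum_sub_distrib]
          refine Finset.sum_congr rfl fun m hm => ?_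
          rw [sub_smul, heig m hm h]
        rw [h1, h2]
        exact TSI.sub hJ (TSI.ksmul hJ hsum _) (GStable.smul_mem hst hsum h)
      have hgt : (chiK k j h - chiK k t h) • f t ∈ J := by
        refine ih (S.erase j) (Finset.erase_ssubset hjS)
          (fun m => (chiK k j h - chiK k m h) • f m)
          (fun m hm => (heig m (Finset.mem_of_mem_erase hm)).ksmul _) hgsum t ?_
        exact Finset.mem_erase.mpr ⟨fun hEq => hjt (by rw [hEq]), ht⟩
      have hc : chiK k j h - chiK k t h ≠ 0 := sub_ne_zero.mpr hh
      have hft : f t = (chiK k j h - chiK k t h)⁻¹ • ((chiK k j h - chiK k t h) • f t) := by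
        rw [smul_smul, inv_mul_cancel₀ hc, one_smul]
      rw [hft]
      exact TSI.ksmul hJ hgt _

/-- Decomposition of an arbitrary element into eigenvectors, from rationality. -/
lemma exists_decomp
    (hrat : Submodule.span k {x : A | ∃ m : Fin r → ℤ, ∀ h : Fin r → kˣ,
        h • x = (((∏ i, h i ^ m i : kˣ) : k)) • x} = ⊤) (x : A) :
    ∃ (S : Finset (Fin r → ℤ)) (f : (Fin r → ℤ) → A),
      (∀ m ∈ S, IsEig k m (f m)) ∧ x = ∑ m ∈ S, f m := by
  classical
  have hx : x ∈ Submodule.span k {x : A | ∃ m : Fin r → ℤ, ∀ h : Fin r → kˣ,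
      h • x = (((∏ i, h i ^ m i : kˣ) : k)) • x} := by rw [hrat]; trivial
  induction hx using Submodule.span_induction with
  | mem y hy =>
    obtain ⟨m, hm⟩ := hy
    refine ⟨{m}, fun n => if n = m then y else 0, ?_, ?_⟩
    · intro n hn
      rw [Finset.mem_singleton] at hn
      subst hn
      show IsEig k n (if n = n then y else 0)
      rw [if_pos rfl]
      exact hm
    · simp
  | zero => exact ⟨∅, fun _ => 0, by simp, by simp⟩
  | add y z hy hz ihy ihz =>
    obtain ⟨S₁, f₁, he₁, hs₁⟩ := ihy
    obtain ⟨S₂, f₂, he₂, hs₂⟩ := ihz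
    refine ⟨S₁ ∪ S₂, fun m => (if m ∈ S₁ then f₁ m else 0) + (if m ∈ S₂ then f₂ m else 0),
      ?_, ?_⟩
    · intro m _
      refine IsEig.add ?_ ?_
      · by_cases hm : m ∈ S₁
        · rw [if_pos hm]; exact he₁ m hm
        · rw [if_neg hm]; exact IsEig.zero (k := k) m
      · by_cases hm : m ∈ S₂
        · rw [if_pos hm]; exact he₂ m hm
        · rw [if_neg hm]; exact IsEig.zero (k := k) m
    · rw [Finset.sum_add_distrib]
      have e1 : ∑ m ∈ S₁ ∪ S₂, (if m ∈ S₁ then f₁ m else 0) = ∑ m ∈ S₁, f₁ m := by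
        rw [← Finset.sum_subset Finset.subset_union_left
          (fun x _ hx => if_neg hx)]
        exact Finset.sum_congr rfl fun m hm => if_pos hm
      have e2 : ∑ m ∈ S₁ ∪ S₂, (if m ∈ S₂ then f₂ m else 0) = ∑ m ∈ S₂, f₂ m := by
        rw [← Finset.sum_subset Finset.subset_union_right
          (fun x _ hx => if_neg hx)]
        exact Finset.sum_congr rfl fun m hm => if_pos hm
      rw [e1, e2, ← hs₁, ← hs₂]
  | smul c y hy ihy =>
    obtain ⟨S, f, he, hs⟩ := ihy
    exact ⟨S, fun m => c • f m, fun m hm => (he m hm).ksmul c,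
      by rw [hs, Finset.smul_sum]⟩

/-- The two-sided ideal generated by `a`, as a set. -/
def genIdeal (a : A) : Set A :=
  {x | ∃ (n : ℕ) (u v : Fin n → A), x = ∑ i, u i * a * v i}

lemma genIdeal_mem_self (a : A) : a ∈ genIdeal a :=
  ⟨1, fun _ => 1, fun _ => 1, by simp⟩

lemma genIdeal_tsi (a : A) : IsTwoSidedIdealSet (genIdeal a) := by
  refine ⟨⟨0, Fin.elim0, Fin.elim0, by simp⟩, ?_, ?_, ?_, ?_⟩
  · rintro x ⟨n₁, u₁, v₁, rfl⟩ y ⟨n₂, u₂, v₂, rfl⟩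
    refine ⟨n₁ + n₂, Fin.append u₁ u₂, Fin.append v₁ v₂, ?_⟩
    rw [Fin.sum_univ_add]
    simp [Fin.append_left, Fin.append_right]
  · rintro x ⟨n, u, v, rfl⟩
    exact ⟨n, fun i => -u i, v, by simp [neg_mul, Finset.sum_neg_distrib]⟩
  · rintro x ⟨n, u, v, rfl⟩ s
    refine ⟨n, fun i => s * u i, v, ?_⟩
    rw [Finset.mul_sum]
    refine Finset.sum_congr rfl fun i _ => by noncomm_ring
  · rintro x ⟨n, u, v, rfl⟩ s
    refine ⟨n, u, fun i => v i * s, ?_⟩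
    rw [Finset.sum_mul]
    refine Finset.sum_congr rfl fun i _ => by noncomm_ring

lemma genIdeal_stable {m : Fin r → ℤ} {a : A} (ha : IsEig k m a) :
    IsGStable (Fin r → kˣ) (genIdeal a) := by
  have key : ∀ g : Fin r → kˣ, ∀ x ∈ genIdeal a, g • x ∈ genIdeal a := by
    rintro g x ⟨n, u, v, rfl⟩
    refine ⟨n, fun i => chiK k m g • (g • u i), fun i => g • v i, ?_⟩
    rw [Finset.smul_sum]
    refine Finset.sum_congr rfl fun i _ => ?_
    show g • (u i * a * v i) = (chiK k m g • (g • u i)) * a * (g • v i)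
    calc g • (u i * a * v i) = (g • u i) * (g • a) * (g • v i) := by
          rw [MulSemiringAction.smul_mul, MulSemiringAction.smul_mul]
      _ = (g • u i) * (chiK k m g • a) * (g • v i) := by rw [ha g]
      _ = (chiK k m g • (g • u i)) * a * (g • v i) := by
          simp only [smul_mul_assoc, mul_smul_comm]
  intro g
  apply subset_antisymm
  · rintro y ⟨x, hx, rfl⟩
    exact key g x hx
  · intro x hx
    exact ⟨g⁻¹ • x, key g⁻¹ x hx, smul_inv_smul g x⟩

lemma genIdeal_mulSubset {J : Set A} (hJ : IsTwoSidedIdealSet J) {a b : A}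
    (hab : ∀ c : A, a * c * b ∈ J) : MulSubset (genIdeal a) (genIdeal b) J := by
  rintro x ⟨n₁, u, v, rfl⟩ y ⟨n₂, s, t, rfl⟩
  rw [Finset.sum_mul_sum]
  refine TSI.sum hJ _ _ fun i _ => TSI.sum hJ _ _ fun j _ => ?_
  have heq : (u i * a * v i) * (s j * b * t j) = u i * ((a * (v i * s j) * b) * t j) := by
    noncomm_ring
  rw [heq]
  exact hJ.2.2.2.1 _ (hJ.2.2.2.2 _ (hab (v i * s j)) _) _

/-- Homogeneous elements version of primeness from `H`-primeness. -/
lemma homog_prime {J : Set A} (hJ : IsGPrimeIdealSet (Fin r → kˣ) J)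
    {μ ν : Fin r → ℤ} {a b : A} (ha : IsEig k μ a) (hb : IsEig k ν b)
    (hab : ∀ c : A, a * c * b ∈ J) : a ∈ J ∨ b ∈ J := by
  rcases hJ.2.2.2 (genIdeal a) (genIdeal b) (genIdeal_tsi a) (genIdeal_stable ha)
    (genIdeal_tsi b) (genIdeal_stable hb) (genIdeal_mulSubset hJ.1 hab) with h | h
  · exact Or.inl (h (genIdeal_mem_self a))
  · exact Or.inr (h (genIdeal_mem_self b))

/-- General element-wise primeness from `H`-primeness. -/
lemma elt_prime [Infinite k] {J : Set A}
    (hrat : Submodule.span k {x : A | ∃ m : Fin r → ℤ, ∀ h : Fin r → kˣ,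
        h • x = (((∏ i, h i ^ m i : kˣ) : k)) • x} = ⊤)
    (hJ : IsGPrimeIdealSet (Fin r → kˣ) J) {a b : A}
    (hab : ∀ c : A, a * c * b ∈ J) : a ∈ J ∨ b ∈ J := by
  classical
  by_contra hcon
  push_neg at hcon
  obtain ⟨ha, hb⟩ := hcon
  obtain ⟨S, f, hfe, hfs⟩ := exists_decomp hrat a
  obtain ⟨T, g, hge, hgs⟩ := exists_decomp hrat b
  set S' : Finset (Fin r → ℤ) := S.filter (fun m => f m ∉ J) with hS'def
  set T' : Finset (Fin r → ℤ) := T.filter (fun m => g m ∉ J) with hT'def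
  set a' : A := ∑ m ∈ S', f m with ha'def
  set b' : A := ∑ m ∈ T', g m with hb'def
  have haJ : a - a' ∈ J := by
    have : a - a' = ∑ m ∈ S.filter (fun m => ¬ f m ∉ J), f m := by
      rw [hfs, ha'def, hS'def, eq_sub_of_add_eq (Finset.sum_filter_add_sum_filter_not S _ f), sub_sub_cancel]
    rw [this]
    refine TSI.sum hJ.1 _ _ fun m hm => ?_
    have := Finset.mem_filter.mp hm
    by_contra hcc
    exact (this.2) hcc
  have hbJ : b - b' ∈ J := by
    have : b - b' = ∑ m ∈ T.filter (fun m => ¬ g m ∉ J), g m := by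
      rw [hgs, hb'def, hT'def, eq_sub_of_add_eq (Finset.sum_filter_add_sum_filter_not T _ g), sub_sub_cancel]
    rw [this]
    refine TSI.sum hJ.1 _ _ fun m hm => ?_
    have := Finset.mem_filter.mp hm
    by_contra hcc
    exact (this.2) hcc
  have hS'ne : S'.Nonempty := by
    rw [Finset.nonempty_iff_ne_empty]
    intro hEmp
    apply ha
    have : a' = 0 := by rw [ha'def, hEmp, Finset.sum_empty]
    have h2 : a - a' = a := by rw [this, sub_zero]
    rwa [h2] at haJ
  have hT'ne : T'.Nonempty := by
    rw [Finset.nonempty_iff_ne_empty]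
    intro hEmp
    apply hb
    have : b' = 0 := by rw [hb'def, hEmp, Finset.sum_empty]
    have h2 : b - b' = b := by rw [this, sub_zero]
    rwa [h2] at hbJ
  have hab' : ∀ c : A, a' * c * b' ∈ J := by
    intro c
    have heq : a' * c * b' = a * c * b - (a - a') * c * b - a' * c * (b - b') := by
      noncomm_ring
    rw [heq]
    refine TSI.sub hJ.1 (TSI.sub hJ.1 (hab c) ?_) ?_
    · have h1 : (a - a') * c ∈ J := hJ.1.2.2.2.2 _ haJ c
      exact hJ.1.2.2.2.2 _ h1 b
    · have h1 : a' * c * (b - b') = (a' * c) * (b - b') := by rw [mul_assoc]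
      rw [h1]
      exact hJ.1.2.2.2.1 _ hbJ _
  obtain ⟨μ, hμS, hμmax⟩ := Finset.exists_max_image (α := Lex (Fin r → ℤ)) S' (fun m => toLex m) hS'ne
  obtain ⟨ν, hνT, hνmax⟩ := Finset.exists_max_image (α := Lex (Fin r → ℤ)) T' (fun m => toLex m) hT'ne
  have hfμ : f μ ∉ J := (Finset.mem_filter.mp hμS).2
  have hgν : g ν ∉ J := (Finset.mem_filter.mp hνT).2
  have key : ∀ (d : Fin r → ℤ) (c : A), IsEig k d c → f μ * c * g ν ∈ J := by
    intro d c hc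
    set W : Finset ((Fin r → ℤ) × (Fin r → ℤ)) := S' ×ˢ T' with hWdef
    set w : (Fin r → ℤ) × (Fin r → ℤ) → (Fin r → ℤ) := fun p => p.1 + p.2 + d with hwdef
    set E : Finset (Fin r → ℤ) := W.image w with hEdef
    set F : (Fin r → ℤ) → A :=
      fun e => ∑ p ∈ W.filter (fun p => w p = e), f p.1 * c * g p.2 with hFdef
    have hFsum : ∑ e ∈ E, F e = a' * c * b' := by
      rw [hFdef]
      rw [Finset.sum_fiberwise_of_maps_to (fun p hp => Finset.mem_image_of_mem w hp)]
      have hrhs : a' * c * b' = ∑ m ∈ S', ∑ n ∈ T', f m * c * g n := by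
        rw [ha'def, hb'def, Finset.sum_mul, Finset.sum_mul_sum]
      rw [hrhs, hWdef, Finset.sum_product]
    have hFeig : ∀ e ∈ E, IsEig k e (F e) := by
      intro e _
      refine IsEig.sum _ _ fun p hp => ?_
      obtain ⟨hpW, hpe⟩ := Finset.mem_filter.mp hp
      have hp1 : p.1 ∈ S' := (Finset.mem_product.mp hpW).1
      have hp2 : p.2 ∈ T' := (Finset.mem_product.mp hpW).2
      have e1 : IsEig k (p.1 + d + p.2) (f p.1 * c * g p.2) :=
        ((hfe p.1 (Finset.mem_of_mem_filter _ hp1)).mul hc).mul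
          (hge p.2 (Finset.mem_of_mem_filter _ hp2))
      have e2 : p.1 + d + p.2 = e := by rw [← hpe, hwdef]; abel_nf
      rwa [e2] at e1
    have hFJ : ∀ e ∈ E, F e ∈ J := by
      have hsum : ∑ e ∈ E, F e ∈ J := by rw [hFsum]; exact hab' c
      exact components_mem hJ.1 hJ.2.1 E F hFeig hsum
    have hμνE : w (μ, ν) ∈ E := Finset.mem_image_of_mem w
      (Finset.mem_product.mpr ⟨hμS, hνT⟩)
    have hfilter : W.filter (fun p => w p = w (μ, ν)) = {(μ, ν)} := by
      ext p
      rw [Finset.mem_filter, Finset.mem_singleton]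
      constructor
      · rintro ⟨hpW, hpe⟩
        have hp1 : p.1 ∈ S' := (Finset.mem_product.mp hpW).1
        have hp2 : p.2 ∈ T' := (Finset.mem_product.mp hpW).2
        have hsum12 : p.1 + p.2 = μ + ν := by
          have := hpe
          rw [hwdef] at this
          simpa using add_right_cancel this
        have hle1 : toLex p.1 ≤ toLex μ := hμmax p.1 hp1
        have hle2 : toLex p.2 ≤ toLex ν := hνmax p.2 hp2
        have hp1eq : p.1 = μ := by
          by_contra hne
          have hlt : toLex p.1 < toLex μ := lt_of_le_of_ne hle1
            (fun hEq => hne (toLex.injective hEq))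
          have : toLex p.1 + toLex p.2 < toLex μ + toLex ν :=
            add_lt_add_of_lt_of_le hlt hle2
          have hEq2 : toLex p.1 + toLex p.2 = toLex μ + toLex ν := by
            show toLex (p.1 + p.2) = toLex (μ + ν)
            rw [hsum12]
          rw [hEq2] at this
          exact lt_irrefl _ this
        have hp2eq : p.2 = ν := by
          rw [hp1eq] at hsum12
          exact add_left_cancel hsum12
        exact Prod.ext hp1eq hp2eq
      · rintro rfl
        exact ⟨Finset.mem_product.mpr ⟨hμS, hνT⟩, rfl⟩
    have := hFJ _ hμνE
    rw [hFdef] at this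
    simp only [hfilter, Finset.sum_singleton] at this
    exact this
  have key2 : ∀ c : A, f μ * c * g ν ∈ J := by
    intro c
    obtain ⟨U, u, hue, hus⟩ := exists_decomp hrat c
    have : f μ * c * g ν = ∑ d ∈ U, f μ * u d * g ν := by
      rw [hus, Finset.mul_sum, Finset.sum_mul]
    rw [this]
    exact TSI.sum hJ.1 _ _ fun d hd => key d (u d) (hue d hd)
  rcases homog_prime hJ (hfe μ (Finset.mem_of_mem_filter _ hμS))
    (hge ν (Finset.mem_of_mem_filter _ hνT)) key2 with h | h
  · exact hfμ h
  · exact hgν h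

end Aux

/-- Let `k` be an infinite field, `A` a left and right noetherian `k`-algebra, and
`H = (kˣ)^r` a torus acting rationally on `A` by `k`-algebra automorphisms (rationality:
`A` is spanned by simultaneous eigenvectors whose eigenvalues are rational characters
`h ↦ ∏ i, (h i)^(m i)`). Then every `H`-prime ideal of `A` is a prime two-sided ideal. -/
theorem hPrime_is_prime_of_rational_torus_action {k : Type*} [Field k] [Infinite k]
    {A : Type*} [Ring A] [Algebra k A] [IsNoetherianRing A] [IsNoetherianRing Aᵐᵒᵖ]
    (r : ℕ) [MulSemiringAction (Fin r → kˣ) A] [SMulCommClass (Fin r → kˣ) k A]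
    (hrat : Submodule.span k {x : A | ∃ m : Fin r → ℤ, ∀ h : Fin r → kˣ,
        h • x = (((∏ i, h i ^ m i : kˣ) : k)) • x} = ⊤)
    (J : Set A) (hJ : IsGPrimeIdealSet (Fin r → kˣ) J) :
    IsPrimeIdealSet J := by
  refine ⟨hJ.1, hJ.2.2.1, ?_⟩
  intro I₁ I₂ hI₁ hI₂ hmul
  by_cases hsub : I₁ ⊆ J
  · exact Or.inl hsub
  · right
    obtain ⟨a, haI, haJ⟩ := Set.not_subset.mp hsub
    intro b hbI
    have hab : ∀ c : A, a * c * b ∈ J := by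
      intro c
      have : a * c ∈ I₁ := hI₁.2.2.2.2 _ haI c
      exact hmul _ this _ hbI
    rcases elt_prime hrat hJ hab with h | h
    · exact absurd h haJ
    · exact h
end

section
/- Let G be an abelian group and R a G-graded, graded-simple ring. Then the maps P ↦ P ∩ Z(R) and Q ↦ R·Q (the two-sided ideal of R generated by Q) are mutually inverse, inclusion-preserving bijections between the set of prime two-sided ideals of R and the set of prime ideals of the center Z(R). -/
/-- The two-sided ideal generated by a subset `S`. -/
def idealGen {A : Type*} [Ring A] (S : Set A) : Set A :=
  ⋂₀ {I : Set A | IsTwoSidedIdealSet I ∧ S ⊆ I}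

/-- A subset `I` of a `G`-graded ring is homogeneous if it contains all homogeneous
components of each of its elements (equivalently, `I = ⊕_g (I ∩ R_g)` for ideals). -/
def IsHomogSet {G R : Type*} [AddCommGroup G] [DecidableEq G] [Ring R]
    (𝒜 : G → AddSubgroup R) [GradedRing 𝒜] (I : Set R) : Prop :=
  ∀ a ∈ I, ∀ g : G, ((DirectSum.decompose 𝒜 a) g : R) ∈ I

/-- A `G`-graded ring is graded-simple if it is nonzero and its only homogeneous
two-sided ideals are `0` and `R`. -/
def IsGradedSimple {G R : Type*} [AddCommGroup G] [DecidableEq G] [Ring R]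
    (𝒜 : G → AddSubgroup R) [GradedRing 𝒜] : Prop :=
  (0 : R) ≠ 1 ∧ ∀ I : Set R, IsTwoSidedIdealSet I → IsHomogSet 𝒜 I →
    I = ({0} : Set R) ∨ I = Set.univ

/-- A prime ideal of the center `Z(R)` of a ring `R`, regarded as a subset of `R`:
an additive subgroup of `Z(R)` closed under multiplication by central elements,
proper in `Z(R)`, and prime for the (commutative) multiplication of `Z(R)`. -/
def IsCenterPrime {R : Type*} [Ring R] (Q : Set R) : Prop :=
  Q ⊆ Set.center R ∧ (0 : R) ∈ Q ∧ (∀ a ∈ Q, ∀ b ∈ Q, a + b ∈ Q) ∧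
    (∀ a ∈ Q, -a ∈ Q) ∧ (∀ a ∈ Q, ∀ z ∈ Set.center R, z * a ∈ Q) ∧
    Q ≠ Set.center R ∧
    ∀ a ∈ Set.center R, ∀ b ∈ Set.center R, a * b ∈ Q → a ∈ Q ∨ b ∈ Q


open DirectSum

section Infra
variable {G R : Type*} [AddCommGroup G] [DecidableEq G] [Ring R]
variable (𝒜 : G → AddSubgroup R) [GradedRing 𝒜]

/-- component of `a` in degree `g`, as element of `R`. -/
noncomputable def Dc (a : R) (g : G) : R := ((DirectSum.decompose 𝒜 a) g : R)

variable {𝒜}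

lemma Dc_mem (a : R) (g : G) : Dc 𝒜 a g ∈ 𝒜 g := SetLike.coe_mem _

lemma Dc_add (x y : R) (g : G) : Dc 𝒜 (x + y) g = Dc 𝒜 x g + Dc 𝒜 y g := by
  unfold Dc; rw [DirectSum.decompose_add]; rfl

lemma Dc_zero (g : G) : Dc 𝒜 (0 : R) g = 0 := by
  unfold Dc; rw [DirectSum.decompose_zero]; rfl

lemma Dc_neg (x : R) (g : G) : Dc 𝒜 (-x) g = -Dc 𝒜 x g := by
  have := Dc_add (𝒜 := 𝒜) x (-x) g
  rw [add_neg_cancel, Dc_zero] at this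
  exact eq_neg_of_add_eq_zero_right this.symm

lemma Dc_same {a : R} {g : G} (h : a ∈ 𝒜 g) : Dc 𝒜 a g = a :=
  DirectSum.decompose_of_mem_same 𝒜 h

lemma Dc_ne {a : R} {g g' : G} (h : a ∈ 𝒜 g) (hne : g ≠ g') : Dc 𝒜 a g' = 0 :=
  DirectSum.decompose_of_mem_ne 𝒜 h hne

lemma Dc_sum {ι : Type*} (s : Finset ι) (f : ι → R) (g : G) :
    Dc 𝒜 (∑ i ∈ s, f i) g = ∑ i ∈ s, Dc 𝒜 (f i) g := by
  classical
  induction s using Finset.induction_on with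
  | empty => simp [Dc_zero]
  | @insert a s' ha ih => rw [Finset.sum_insert ha, Finset.sum_insert ha, Dc_add, ih]

/-- key component lemma: component of a sum of homogeneous elements. -/
lemma Dc_sum_ite {ι : Type*} (s : Finset ι) (t : ι → R) (σ : ι → G)
    (ht : ∀ i ∈ s, t i ∈ 𝒜 (σ i)) (m : G) :
    Dc 𝒜 (∑ i ∈ s, t i) m = ∑ i ∈ s, (if σ i = m then t i else 0) := by
  rw [Dc_sum]
  refine Finset.sum_congr rfl (fun i hi => ?_)
  by_cases h : σ i = m
  · rw [if_pos h]; subst h; exact Dc_same (ht i hi)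
  · rw [if_neg h]; exact Dc_ne (ht i hi) h

/-- `a` has its support inside the finset `s`. -/
def HasSuppIn (a : R) (s : Finset G) : Prop := ∀ g, g ∉ s → Dc 𝒜 a g = 0

lemma exists_suppIn (a : R) : ∃ s : Finset G, HasSuppIn (𝒜 := 𝒜) a s := by
  refine DirectSum.Decomposition.inductionOn 𝒜 (motive := fun a => ∃ s : Finset G, HasSuppIn (𝒜 := 𝒜) a s)
    ⟨∅, fun g _ => Dc_zero g⟩ (fun {i} (x : 𝒜 i) => ⟨{i}, fun g hg => Dc_ne x.2 (fun h => hg (h ▸ Finset.mem_singleton_self i))⟩)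
    (fun x y hx hy => by
      obtain ⟨s, hs⟩ := hx; obtain ⟨t, ht⟩ := hy
      refine ⟨s ∪ t, fun g hg => ?_⟩
      rw [Finset.mem_union, not_or] at hg
      rw [Dc_add, hs g hg.1, ht g hg.2, add_zero]) a

lemma sum_Dc {a : R} {s : Finset G} (h : HasSuppIn (𝒜 := 𝒜) a s) :
    ∑ g ∈ s, Dc 𝒜 a g = a := by
  have key : DirectSum.decompose 𝒜 (∑ g ∈ s, Dc 𝒜 a g) = DirectSum.decompose 𝒜 a := by
    refine DFinsupp.ext (fun j => ?_)
    have h1 : Dc 𝒜 (∑ g ∈ s, Dc 𝒜 a g) j = ∑ g ∈ s, (if g = j then Dc 𝒜 a g else 0) :=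
      Dc_sum_ite s _ id (fun i _ => Dc_mem a i) j
    have h2 : (∑ g ∈ s, (if g = j then Dc 𝒜 a g else 0)) = Dc 𝒜 a j := by
      rw [Finset.sum_ite_eq' s j (fun g => Dc 𝒜 a g)]
      by_cases hj : j ∈ s
      · rw [if_pos hj]
      · rw [if_neg hj, h j hj]
    have : Dc 𝒜 (∑ g ∈ s, Dc 𝒜 a g) j = Dc 𝒜 a j := h1.trans h2
    exact Subtype.ext this
  have := congrArg (DirectSum.decompose 𝒜).symm key
  rwa [Equiv.symm_apply_apply, Equiv.symm_apply_apply] at this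

lemma eq_zero_of_suppIn_empty {a : R} (h : HasSuppIn (𝒜 := 𝒜) a ∅) : a = 0 := by
  have := sum_Dc h; simpa using this.symm

end Infra
section Sets
variable {R : Type*} [Ring R]

lemma list_sum_neg {ι : Type*} (l : List ι) (f : ι → R) :
    (l.map fun i => -(f i)).sum = -((l.map f).sum) := by
  induction l with
  | nil => simp
  | cons a l ih => simp [ih]; abel

lemma list_mul_sum {ι : Type*} (l : List ι) (f : ι → R) (r : R) :
    (l.map fun i => r * (f i)).sum = r * (l.map f).sum := by
  induction l with
  | nil => simp
  | cons a l ih => simp [ih, mul_add]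

lemma list_sum_mul {ι : Type*} (l : List ι) (f : ι → R) (r : R) :
    (l.map fun i => (f i) * r).sum = (l.map f).sum * r := by
  induction l with
  | nil => simp
  | cons a l ih => simp [ih, add_mul]

lemma univ_ideal : IsTwoSidedIdealSet (Set.univ : Set R) := by
  refine ⟨trivial, ?_, ?_, ?_, ?_⟩ <;> intros <;> trivial

lemma subset_idealGen (S : Set R) : S ⊆ idealGen S := by
  intro x hx I hI; exact hI.2 hx

lemma idealGen_subset {S I : Set R} (hI : IsTwoSidedIdealSet I) (hS : S ⊆ I) :
    idealGen S ⊆ I := fun x hx => hx I ⟨hI, hS⟩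

lemma idealGen_mono {S T : Set R} (h : S ⊆ T) : idealGen S ⊆ idealGen T := by
  intro x hx I hI; exact hx I ⟨hI.1, h.trans hI.2⟩

/-- finite sums `∑ rᵢ * qᵢ` with `qᵢ ∈ S`. -/
def mspan (S : Set R) : Set R :=
  {x | ∃ l : List (R × R), (∀ p ∈ l, p.2 ∈ S) ∧ x = (l.map fun p => p.1 * p.2).sum}

lemma mspan_zero (S : Set R) : (0 : R) ∈ mspan S := ⟨[], by simp, by simp⟩

lemma mspan_add {S : Set R} {x y : R} (hx : x ∈ mspan S) (hy : y ∈ mspan S) :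
    x + y ∈ mspan S := by
  obtain ⟨l₁, h₁, e₁⟩ := hx; obtain ⟨l₂, h₂, e₂⟩ := hy
  exact ⟨l₁ ++ l₂, fun p hp => ((List.mem_append.mp hp).elim (h₁ p) (h₂ p)),
    by rw [e₁, e₂, List.map_append, List.sum_append]⟩

lemma mspan_neg {S : Set R} {x : R} (hx : x ∈ mspan S) : -x ∈ mspan S := by
  obtain ⟨l, h, e⟩ := hx
  refine ⟨l.map (fun p => (-p.1, p.2)), fun p hp => ?_, ?_⟩
  · obtain ⟨q, hq, rfl⟩ := List.mem_map.mp hp; exact h q hq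
  · rw [e, List.map_map, ← list_sum_neg]
    exact congrArg List.sum (List.map_congr_left fun p _ => by simp)

lemma mspan_lmul {S : Set R} {x : R} (hx : x ∈ mspan S) (r : R) : r * x ∈ mspan S := by
  obtain ⟨l, h, e⟩ := hx
  refine ⟨l.map (fun p => (r * p.1, p.2)), fun p hp => ?_, ?_⟩
  · obtain ⟨q, hq, rfl⟩ := List.mem_map.mp hp; exact h q hq
  · rw [e, List.map_map, ← list_mul_sum]
    exact congrArg List.sum (List.map_congr_left fun p _ => by simp [mul_assoc])

lemma mspan_rmul {S : Set R} (hS : S ⊆ Set.center R) {x : R} (hx : x ∈ mspan S) (r : R) :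
    x * r ∈ mspan S := by
  obtain ⟨l, h, e⟩ := hx
  refine ⟨l.map (fun p => (p.1 * r, p.2)), fun p hp => ?_, ?_⟩
  · obtain ⟨q, hq, rfl⟩ := List.mem_map.mp hp; exact h q hq
  · rw [e, List.map_map, ← list_sum_mul]
    refine congrArg List.sum (List.map_congr_left fun p hp => ?_)
    have hc : p.2 * r = r * p.2 := ((Semigroup.mem_center_iff.mp (hS (h p hp))) r).symm
    show p.1 * p.2 * r = (p.1 * r) * p.2
    rw [mul_assoc, hc, ← mul_assoc]

lemma mspan_ideal {S : Set R} (hS : S ⊆ Set.center R) : IsTwoSidedIdealSet (mspan S) :=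
  ⟨mspan_zero S, fun a ha b hb => mspan_add ha hb, fun a ha => mspan_neg ha,
    fun a ha r => mspan_lmul ha r, fun a ha r => mspan_rmul hS ha r⟩

lemma mem_mspan {S : Set R} {q : R} (hq : q ∈ S) : q ∈ mspan S :=
  ⟨[(1, q)], by simpa using hq, by simp⟩

lemma mspan_subset {S I : Set R} (hI : IsTwoSidedIdealSet I) (hS : S ⊆ I) :
    mspan S ⊆ I := by
  rintro x ⟨l, h, rfl⟩
  induction l with
  | nil => simpa using hI.1
  | cons a l ih =>
    simp only [List.map_cons, List.sum_cons]
    exact hI.2.1 _ (hI.2.2.2.1 _ (hS (h a (List.mem_cons_self))) a.1)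
      _ (ih (fun p hp => h p (List.mem_cons_of_mem _ hp)))

lemma idealGen_eq_mspan {S : Set R} (hS : S ⊆ Set.center R) : idealGen S = mspan S :=
  Set.Subset.antisymm (idealGen_subset (mspan_ideal hS) (fun q hq => mem_mspan hq))
    (fun x hx I hI => mspan_subset hI.1 hI.2 hx)

/-- two-sided span of one element: finite sums `∑ rᵢ * w * sᵢ`. -/
def ispan (w : R) : Set R :=
  {x | ∃ l : List (R × R), x = (l.map fun p => p.1 * w * p.2).sum}

lemma ispan_zero (w : R) : (0 : R) ∈ ispan w := ⟨[], by simp⟩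

lemma ispan_add {w x y : R} (hx : x ∈ ispan w) (hy : y ∈ ispan w) : x + y ∈ ispan w := by
  obtain ⟨l₁, e₁⟩ := hx; obtain ⟨l₂, e₂⟩ := hy
  exact ⟨l₁ ++ l₂, by rw [e₁, e₂, List.map_append, List.sum_append]⟩

lemma ispan_neg {w x : R} (hx : x ∈ ispan w) : -x ∈ ispan w := by
  obtain ⟨l, e⟩ := hx
  refine ⟨l.map (fun p => (-p.1, p.2)), ?_⟩
  rw [e, List.map_map, ← list_sum_neg]
  exact congrArg List.sum (List.map_congr_left fun p _ => by simp)

lemma ispan_lmul {w x : R} (hx : x ∈ ispan w) (r : R) : r * x ∈ ispan w := by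
  obtain ⟨l, e⟩ := hx
  refine ⟨l.map (fun p => (r * p.1, p.2)), ?_⟩
  rw [e, List.map_map, ← list_mul_sum]
  exact congrArg List.sum (List.map_congr_left fun p _ => by simp [mul_assoc])

lemma ispan_rmul {w x : R} (hx : x ∈ ispan w) (r : R) : x * r ∈ ispan w := by
  obtain ⟨l, e⟩ := hx
  refine ⟨l.map (fun p => (p.1, p.2 * r)), ?_⟩
  rw [e, List.map_map, ← list_sum_mul]
  exact congrArg List.sum (List.map_congr_left fun p _ => by simp [mul_assoc])

lemma ispan_ideal (w : R) : IsTwoSidedIdealSet (ispan w) :=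
  ⟨ispan_zero w, fun a ha b hb => ispan_add ha hb, fun a ha => ispan_neg ha,
    fun a ha r => ispan_lmul ha r, fun a ha r => ispan_rmul ha r⟩

lemma mem_ispan_self (w : R) : w ∈ ispan w := ⟨[(1, 1)], by simp⟩

lemma ispan_subset {w : R} {I : Set R} (hI : IsTwoSidedIdealSet I) (hw : w ∈ I) :
    ispan w ⊆ I := by
  rintro x ⟨l, rfl⟩
  induction l with
  | nil => simpa using hI.1
  | cons a l ih =>
    simp only [List.map_cons, List.sum_cons]
    exact hI.2.1 _ (hI.2.2.2.2 _ (hI.2.2.2.1 _ hw a.1) a.2) _ ih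

end Sets
section Grad
variable {G R : Type*} [AddCommGroup G] [DecidableEq G] [Ring R]
variable {𝒜 : G → AddSubgroup R} [GradedRing 𝒜]

/-- a chosen support finset for each element. -/
noncomputable def SF (a : R) : Finset G := Classical.choose (exists_suppIn (𝒜 := 𝒜) a)

lemma SF_spec (a : R) : HasSuppIn (𝒜 := 𝒜) a (SF (𝒜 := 𝒜) a) :=
  Classical.choose_spec (exists_suppIn a)

lemma sum_SF (a : R) : ∑ g ∈ SF (𝒜 := 𝒜) a, Dc 𝒜 a g = a := sum_Dc (SF_spec a)

lemma ideal_finsum {I : Set R} (hI : IsTwoSidedIdealSet I) {ι : Type*} (s : Finset ι)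
    (f : ι → R) (h : ∀ i ∈ s, f i ∈ I) : ∑ i ∈ s, f i ∈ I := by
  classical
  induction s using Finset.induction_on with
  | empty => simpa using hI.1
  | @insert a s' ha ih =>
    rw [Finset.sum_insert ha]
    exact hI.2.1 _ (h a (Finset.mem_insert_self a s')) _
      (ih (fun i hi => h i (Finset.mem_insert_of_mem hi)))

lemma ideal_listsum {I : Set R} (hI : IsTwoSidedIdealSet I) (l : List R)
    (h : ∀ x ∈ l, x ∈ I) : l.sum ∈ I := by
  induction l with
  | nil => simpa using hI.1
  | cons a l ih =>
    rw [List.sum_cons]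
    exact hI.2.1 _ (h a (List.mem_cons_self)) _ (ih (fun x hx => h x (List.mem_cons_of_mem _ hx)))

lemma Dc_list_sum (l : List R) (g : G) :
    Dc 𝒜 l.sum g = (l.map fun x => Dc 𝒜 x g).sum := by
  induction l with
  | nil => simpa using Dc_zero g
  | cons a l ih => rw [List.sum_cons, Dc_add, ih, List.map_cons, List.sum_cons]

/-- component of a product with a homogeneous middle factor. -/
lemma prod_expand {w : R} {g₀ : G} (hw : w ∈ 𝒜 g₀) (r s : R) (m : G) :
    Dc 𝒜 (r * w * s) m = ∑ d ∈ SF (𝒜 := 𝒜) r, Dc 𝒜 r d * w * Dc 𝒜 s (m - (d + g₀)) := by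
  classical
  have expand : r * w * s = ∑ p ∈ (SF (𝒜 := 𝒜) r) ×ˢ (SF (𝒜 := 𝒜) s),
      Dc 𝒜 r p.1 * w * Dc 𝒜 s p.2 := by
    rw [Finset.sum_product]
    conv_lhs => rw [← sum_SF (𝒜 := 𝒜) r, ← sum_SF (𝒜 := 𝒜) s]
    rw [Finset.sum_mul, Finset.sum_mul]
    refine Finset.sum_congr rfl (fun d _ => ?_)
    rw [Finset.mul_sum]
  have hmem : ∀ p ∈ (SF (𝒜 := 𝒜) r) ×ˢ (SF (𝒜 := 𝒜) s),
      Dc 𝒜 r p.1 * w * Dc 𝒜 s p.2 ∈ 𝒜 (p.1 + g₀ + p.2) :=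
    fun p _ => SetLike.mul_mem_graded (SetLike.mul_mem_graded (Dc_mem r p.1) hw) (Dc_mem s p.2)
  rw [expand, Dc_sum_ite _ _ (fun p => p.1 + g₀ + p.2) hmem m, Finset.sum_product]
  refine Finset.sum_congr rfl (fun d _ => ?_)
  have hcond : ∀ e : G, (d + g₀ + e = m) ↔ (e = m - (d + g₀)) := by
    intro e
    constructor
    · intro h; rw [← h]; abel
    · intro h; rw [h]; abel
  calc (∑ e ∈ SF (𝒜 := 𝒜) s, if d + g₀ + e = m then Dc 𝒜 r d * w * Dc 𝒜 s e else 0)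
      = ∑ e ∈ SF (𝒜 := 𝒜) s, if e = m - (d + g₀) then Dc 𝒜 r d * w * Dc 𝒜 s e else 0 := by
        refine Finset.sum_congr rfl (fun e _ => ?_)
        by_cases h : d + g₀ + e = m
        · rw [if_pos h, if_pos ((hcond e).mp h)]
        · rw [if_neg h, if_neg (fun he => h ((hcond e).mpr he))]
    _ = Dc 𝒜 r d * w * Dc 𝒜 s (m - (d + g₀)) := by
        rw [Finset.sum_ite_eq' (SF (𝒜 := 𝒜) s) (m - (d + g₀))]
        by_cases h : m - (d + g₀) ∈ SF (𝒜 := 𝒜) s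
        · rw [if_pos h]
        · rw [if_neg h, SF_spec s _ h, mul_zero]

/-- homogeneous components of central elements are central -/
lemma hom_mul_Dc {r : R} {d : G} (hr : r ∈ 𝒜 d) (z : R) (g : G) :
    r * Dc 𝒜 z g = Dc 𝒜 (r * z) (d + g) := by
  classical
  have expand : r * z = ∑ h ∈ SF (𝒜 := 𝒜) z, r * Dc 𝒜 z h := by
    conv_lhs => rw [← sum_SF (𝒜 := 𝒜) z]
    rw [Finset.mul_sum]
  rw [expand, Dc_sum_ite _ _ (fun h => d + h)
    (fun h _ => SetLike.mul_mem_graded hr (Dc_mem z h)) (d + g)]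
  have : ∀ h : G, (d + h = d + g) ↔ (h = g) := fun h => add_right_inj d
  symm
  calc (∑ h ∈ SF (𝒜 := 𝒜) z, if d + h = d + g then r * Dc 𝒜 z h else 0)
      = ∑ h ∈ SF (𝒜 := 𝒜) z, if h = g then r * Dc 𝒜 z h else 0 := by
        refine Finset.sum_congr rfl (fun h _ => ?_)
        by_cases hh : d + h = d + g
        · rw [if_pos hh, if_pos ((this h).mp hh)]
        · rw [if_neg hh, if_neg (fun he => hh ((this h).mpr he))]
    _ = r * Dc 𝒜 z g := by
        rw [Finset.sum_ite_eq' (SF (𝒜 := 𝒜) z) g]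
        by_cases h : g ∈ SF (𝒜 := 𝒜) z
        · rw [if_pos h]
        · rw [if_neg h, SF_spec z _ h, mul_zero]

lemma Dc_mul_hom {r : R} {d : G} (hr : r ∈ 𝒜 d) (z : R) (g : G) :
    Dc 𝒜 z g * r = Dc 𝒜 (z * r) (g + d) := by
  classical
  have expand : z * r = ∑ h ∈ SF (𝒜 := 𝒜) z, Dc 𝒜 z h * r := by
    conv_lhs => rw [← sum_SF (𝒜 := 𝒜) z]
    rw [Finset.sum_mul]
  rw [expand, Dc_sum_ite _ _ (fun h => h + d)
    (fun h _ => SetLike.mul_mem_graded (Dc_mem z h) hr) (g + d)]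
  have : ∀ h : G, (h + d = g + d) ↔ (h = g) := fun h => add_left_inj d
  symm
  calc (∑ h ∈ SF (𝒜 := 𝒜) z, if h + d = g + d then Dc 𝒜 z h * r else 0)
      = ∑ h ∈ SF (𝒜 := 𝒜) z, if h = g then Dc 𝒜 z h * r else 0 := by
        refine Finset.sum_congr rfl (fun h _ => ?_)
        by_cases hh : h + d = g + d
        · rw [if_pos hh, if_pos ((this h).mp hh)]
        · rw [if_neg hh, if_neg (fun he => hh ((this h).mpr he))]
    _ = Dc 𝒜 z g * r := by
        rw [Finset.sum_ite_eq' (SF (𝒜 := 𝒜) z) g]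
        by_cases h : g ∈ SF (𝒜 := 𝒜) z
        · rw [if_pos h]
        · rw [if_neg h, SF_spec z _ h, zero_mul]

lemma center_component {z : R} (hz : z ∈ Set.center R) (g : G) :
    Dc 𝒜 z g ∈ Set.center R := by
  rw [Semigroup.mem_center_iff]
  intro t
  have hom : ∀ d : G, ∀ r ∈ 𝒜 d, r * Dc 𝒜 z g = Dc 𝒜 z g * r := by
    intro d r hr
    rw [hom_mul_Dc hr z g, Dc_mul_hom hr z g, add_comm d g,
      (Semigroup.mem_center_iff.mp hz r).symm]
  conv_lhs => rw [← sum_SF (𝒜 := 𝒜) t]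
  conv_rhs => rw [← sum_SF (𝒜 := 𝒜) t]
  rw [Finset.sum_mul, Finset.mul_sum]
  exact Finset.sum_congr rfl (fun d _ => hom d (Dc 𝒜 t d) (Dc_mem t d))

end Grad
section Grad2
variable {G R : Type*} [AddCommGroup G] [DecidableEq G] [Ring R]
variable {𝒜 : G → AddSubgroup R} [GradedRing 𝒜]

lemma list_sum_add_pointwise {ι : Type*} (l : List ι) (f g : ι → R) :
    (l.map fun i => f i + g i).sum = (l.map f).sum + (l.map g).sum := by
  induction l with
  | nil => simp
  | cons a l ih => simp [ih]; abel

lemma single_mem_ispan (w r s : R) : r * w * s ∈ ispan w := ⟨[(r, s)], by simp⟩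

lemma ispan_homog {w : R} {g₀ : G} (hw : w ∈ 𝒜 g₀) : IsHomogSet 𝒜 (ispan w) := by
  rintro x ⟨l, rfl⟩ m
  show Dc 𝒜 _ m ∈ ispan w
  rw [Dc_list_sum, List.map_map]
  refine ideal_listsum (ispan_ideal w) _ (fun y hy => ?_)
  obtain ⟨p, _, rfl⟩ := List.mem_map.mp hy
  show Dc 𝒜 (p.1 * w * p.2) m ∈ ispan w
  rw [prod_expand hw p.1 p.2 m]
  exact ideal_finsum (ispan_ideal w) _ _ (fun d _ => single_mem_ispan w _ _)

lemma one_mem_ispan (hs : IsGradedSimple 𝒜) {w : R} {g₀ : G} (hw : w ∈ 𝒜 g₀) (hw0 : w ≠ 0) :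
    (1 : R) ∈ ispan w := by
  rcases hs.2 (ispan w) (ispan_ideal w) (ispan_homog hw) with h | h
  · exact absurd (h ▸ mem_ispan_self w) (by simpa using hw0)
  · rw [h]; trivial

lemma exists_phi (hs : IsGradedSimple 𝒜) {w : R} {g₀ : G} (hw : w ∈ 𝒜 g₀) (hw0 : w ≠ 0) :
    ∃ phi : R → R,
      (∀ x y : R, phi (x + y) = phi x + phi y) ∧
      (∀ I : Set R, IsTwoSidedIdealSet I → ∀ t ∈ I, phi t ∈ I) ∧
      (∀ m : G, ∀ t ∈ 𝒜 m, phi t ∈ 𝒜 (m - g₀)) ∧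
      phi w = 1 := by
  obtain ⟨l, hl⟩ := one_mem_ispan hs hw hw0
  refine ⟨fun t => (l.map (fun p => ∑ d ∈ SF (𝒜 := 𝒜) p.1,
      Dc 𝒜 p.1 d * t * Dc 𝒜 p.2 ((0 : G) - (d + g₀)))).sum, ?_, ?_, ?_, ?_⟩
  · intro x y
    calc (l.map (fun p => ∑ d ∈ SF (𝒜 := 𝒜) p.1,
          Dc 𝒜 p.1 d * (x + y) * Dc 𝒜 p.2 ((0 : G) - (d + g₀)))).sum
        = (l.map (fun p => (∑ d ∈ SF (𝒜 := 𝒜) p.1,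
            Dc 𝒜 p.1 d * x * Dc 𝒜 p.2 ((0 : G) - (d + g₀)))
            + ∑ d ∈ SF (𝒜 := 𝒜) p.1,
            Dc 𝒜 p.1 d * y * Dc 𝒜 p.2 ((0 : G) - (d + g₀)))).sum := by
          refine congrArg List.sum (List.map_congr_left fun p _ => ?_)
          rw [← Finset.sum_add_distrib]
          refine Finset.sum_congr rfl (fun d _ => ?_)
          rw [mul_add, add_mul]
      _ = _ := list_sum_add_pointwise l _ _
  · intro I hI t ht
    refine ideal_listsum hI _ (fun y hy => ?_)
    obtain ⟨p, _, rfl⟩ := List.mem_map.mp hy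
    exact ideal_finsum hI _ _ (fun d _ => hI.2.2.2.2 _ (hI.2.2.2.1 _ ht _) _)
  · intro m t ht
    refine AddSubgroup.list_sum_mem _ (fun y hy => ?_)
    obtain ⟨p, _, rfl⟩ := List.mem_map.mp hy
    refine AddSubgroup.sum_mem _ (fun d _ => ?_)
    have : d + m + ((0 : G) - (d + g₀)) = m - g₀ := by abel
    exact this ▸ SetLike.mul_mem_graded (SetLike.mul_mem_graded (Dc_mem p.1 d) ht) (Dc_mem p.2 _)
  · have h1 : ∀ p : R × R, ∑ d ∈ SF (𝒜 := 𝒜) p.1,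
        Dc 𝒜 p.1 d * w * Dc 𝒜 p.2 ((0 : G) - (d + g₀)) = Dc 𝒜 (p.1 * w * p.2) 0 := by
      intro p; rw [prod_expand hw p.1 p.2 0]
    calc (l.map (fun p => ∑ d ∈ SF (𝒜 := 𝒜) p.1,
          Dc 𝒜 p.1 d * w * Dc 𝒜 p.2 ((0 : G) - (d + g₀)))).sum
        = (l.map (fun p => Dc 𝒜 (p.1 * w * p.2) 0)).sum := by
          exact congrArg List.sum (List.map_congr_left fun p _ => h1 p)
      _ = ((l.map fun p => p.1 * w * p.2).map fun x => Dc 𝒜 x 0).sum := by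
          rw [List.map_map]
          exact congrArg List.sum (List.map_congr_left fun p _ => rfl)
      _ = Dc 𝒜 ((l.map fun p => p.1 * w * p.2).sum) 0 := (Dc_list_sum _ 0).symm
      _ = 1 := by rw [← hl]; exact Dc_same (SetLike.one_mem_graded 𝒜)

lemma exists_central_inv (hs : IsGradedSimple 𝒜) {z : R} {h : G}
    (hzc : z ∈ Set.center R) (hzh : z ∈ 𝒜 h) (hz0 : z ≠ 0) :
    ∃ u : R, u ∈ Set.center R ∧ u ∈ 𝒜 (-h) ∧ z * u = 1 ∧ u * z = 1 := by
  obtain ⟨l, hl⟩ := one_mem_ispan hs hzh hz0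
  set u : R := (l.map (fun p => ∑ d ∈ SF (𝒜 := 𝒜) p.1,
      Dc 𝒜 p.1 d * Dc 𝒜 p.2 ((0 : G) - (d + h)))).sum with hu
  have hzu : z * u = 1 := by
    have h1 : ∀ p : R × R, z * (∑ d ∈ SF (𝒜 := 𝒜) p.1,
        Dc 𝒜 p.1 d * Dc 𝒜 p.2 ((0 : G) - (d + h))) = Dc 𝒜 (p.1 * z * p.2) 0 := by
      intro p
      rw [prod_expand hzh p.1 p.2 0, Finset.mul_sum]
      refine Finset.sum_congr rfl (fun d _ => ?_)
      have hc := Semigroup.mem_center_iff.mp hzc (Dc 𝒜 p.1 d)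
      rw [← mul_assoc, ← hc]
    calc z * u = (l.map (fun p => z * ∑ d ∈ SF (𝒜 := 𝒜) p.1,
          Dc 𝒜 p.1 d * Dc 𝒜 p.2 ((0 : G) - (d + h)))).sum := by
          rw [hu, ← list_mul_sum]
      _ = (l.map (fun p => Dc 𝒜 (p.1 * z * p.2) 0)).sum :=
          congrArg List.sum (List.map_congr_left fun p _ => h1 p)
      _ = ((l.map fun p => p.1 * z * p.2).map fun x => Dc 𝒜 x 0).sum := by
          rw [List.map_map]
          exact congrArg List.sum (List.map_congr_left fun p _ => rfl)
      _ = Dc 𝒜 ((l.map fun p => p.1 * z * p.2).sum) 0 := (Dc_list_sum _ 0).symm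
      _ = 1 := by rw [← hl]; exact Dc_same (SetLike.one_mem_graded 𝒜)
  have huz : u * z = 1 := by rw [Semigroup.mem_center_iff.mp hzc u]; exact hzu
  have humem : u ∈ 𝒜 (-h) := by
    rw [hu]
    refine AddSubgroup.list_sum_mem _ (fun y hy => ?_)
    obtain ⟨p, _, rfl⟩ := List.mem_map.mp hy
    refine AddSubgroup.sum_mem _ (fun d _ => ?_)
    have : d + ((0 : G) - (d + h)) = -h := by abel
    exact this ▸ SetLike.mul_mem_graded (Dc_mem p.1 d) (Dc_mem p.2 _)
  refine ⟨u, ?_, humem, hzu, huz⟩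
  rw [Semigroup.mem_center_iff]
  intro t
  calc t * u = (u * z) * t * u := by rw [huz, one_mul]
    _ = u * (z * t) * u := by rw [mul_assoc u z t]
    _ = u * (t * z) * u := by rw [Semigroup.mem_center_iff.mp hzc t]
    _ = u * t * (z * u) := by rw [mul_assoc, mul_assoc, mul_assoc]
    _ = u * t := by rw [hzu, mul_one]
end Grad2
section Lam
variable {G R : Type*} [AddCommGroup G] [DecidableEq G] [Ring R]
variable {𝒜 : G → AddSubgroup R} [GradedRing 𝒜]

/-- degrees supporting a nonzero central homogeneous element ("support of the graded field Z") -/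
def IsHu (𝒜 : G → AddSubgroup R) (h : G) : Prop :=
  ∃ z : R, z ∈ Set.center R ∧ z ∈ 𝒜 h ∧ z ≠ 0

lemma isHu_zero (hs : IsGradedSimple 𝒜) : IsHu 𝒜 (0 : G) :=
  ⟨1, Set.one_mem_center, SetLike.one_mem_graded 𝒜, fun h => hs.1 h.symm⟩

lemma isHu_neg (hs : IsGradedSimple 𝒜) {h : G} (hh : IsHu 𝒜 h) : IsHu 𝒜 (-h) := by
  obtain ⟨z, hzc, hzh, hz0⟩ := hh
  obtain ⟨u, huc, huh, hzu, huz⟩ := exists_central_inv hs hzc hzh hz0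
  refine ⟨u, huc, huh, fun h0 => hs.1 ?_⟩
  rw [h0, mul_zero] at hzu; exact hzu

lemma isHu_add (hs : IsGradedSimple 𝒜) {a b : G} (ha : IsHu 𝒜 a) (hb : IsHu 𝒜 b) :
    IsHu 𝒜 (a + b) := by
  obtain ⟨z, hzc, hzh, hz0⟩ := ha
  obtain ⟨w, hwc, hwh, hw0⟩ := hb
  obtain ⟨u, huc, huh, hzu, huz⟩ := exists_central_inv hs hzc hzh hz0
  obtain ⟨t, htc, hth, hwt, htw⟩ := exists_central_inv hs hwc hwh hw0
  refine ⟨z * w, Set.mul_mem_center hzc hwc, SetLike.mul_mem_graded hzh hwh, fun h0 => hs.1 ?_⟩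
  have : z * w * (t * u) = 1 := by
    calc z * w * (t * u) = z * (w * t) * u := by rw [← mul_assoc, mul_assoc z w t]
      _ = z * u := by rw [hwt, mul_one]
      _ = 1 := hzu
  rw [h0, zero_mul] at this; exact this

/-- The central degree-shifting functional. -/
lemma exists_lambda (hs : IsGradedSimple 𝒜) (e : G) (v : R) (hv : v ∈ 𝒜 e) (hv0 : v ≠ 0) :
    ∃ lam : R → R,
      (∀ x y : R, lam (x + y) = lam x + lam y) ∧
      (∀ x : R, lam x ∈ Set.center R) ∧
      (∀ g : G, ∀ x ∈ 𝒜 g, lam x ∈ 𝒜 (g - e)) ∧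
      (∀ x : R, ∀ z ∈ Set.center R, lam (x * z) = lam x * z) ∧
      lam v = 1 := by
  classical
  -- the field F = Z ∩ R₀, as a subring
  let S : Subring R :=
    { carrier := {x : R | x ∈ Set.center R ∧ x ∈ 𝒜 (0 : G)},
      one_mem' := ⟨Set.one_mem_center, SetLike.one_mem_graded 𝒜⟩,
      mul_mem' := fun {a b} ha hb => ⟨Set.mul_mem_center ha.1 hb.1, by
        have := SetLike.mul_mem_graded ha.2 hb.2; rwa [add_zero] at this⟩,
      zero_mem' := ⟨Set.zero_mem_center, AddSubgroup.zero_mem _⟩,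
      add_mem' := fun {a b} ha hb => ⟨Set.add_mem_center ha.1 hb.1, AddSubgroup.add_mem _ ha.2 hb.2⟩,
      neg_mem' := fun {a} ha => ⟨Set.neg_mem_center ha.1, AddSubgroup.neg_mem _ ha.2⟩ }
  have hSfield : IsField S := by
    refine ⟨⟨0, 1, fun h01 => hs.1 (congrArg Subtype.val h01)⟩, ?_, ?_⟩
    · intro a b
      exact Subtype.ext ((Semigroup.mem_center_iff.mp a.2.1 b.1).symm)
    · intro a ha0
      have ha0' : (a : R) ≠ 0 := fun h => ha0 (Subtype.ext h)
      obtain ⟨u, huc, huh, hau, hua⟩ := exists_central_inv hs a.2.1 a.2.2 ha0'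
      rw [neg_zero] at huh
      exact ⟨⟨u, huc, huh⟩, Subtype.ext hau⟩
  letI : Field S := hSfield.toField
  -- V = 𝒜 e as an S-vector space
  letI : SMul S (𝒜 e) := ⟨fun c x => ⟨c.1 * x.1, by
    have := SetLike.mul_mem_graded c.2.2 x.2; rwa [zero_add] at this⟩⟩
  have smul_def : ∀ (c : S) (x : 𝒜 e), ((c • x : 𝒜 e) : R) = (c : R) * (x : R) := fun _ _ => rfl
  letI : Module S (𝒜 e) := Module.ofMinimalAxioms
    (fun c x y => Subtype.ext (by rw [smul_def]; show (c:R) * (x + y : R) = _; rw [mul_add]; rfl))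
    (fun c d x => Subtype.ext (by show ((c:R) + d) * x = _; rw [add_mul]; rfl))
    (fun c d x => Subtype.ext (by show ((c:R) * d) * x = _; rw [mul_assoc]; rfl))
    (fun x => Subtype.ext (one_mul _))
  -- a linear functional f with f v = 1
  set vv : 𝒜 e := ⟨v, hv⟩ with hvv
  have hvv0 : vv ≠ 0 := fun h => hv0 (congrArg Subtype.val h)
  have hli : LinearIndepOn S id ({vv} : Set (𝒜 e)) :=
    LinearIndepOn.singleton' (fun r hr => by_contra fun hr0 => hvv0 (by
      rw [← one_smul S vv, ← inv_mul_cancel₀ hr0, mul_smul]; exact (congrArg _ hr).trans (smul_zero _)))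
  let bs := hli.extend (Set.subset_univ _)
  let b : Module.Basis bs S (𝒜 e) := Module.Basis.extend hli
  have hvv_mem : vv ∈ bs := hli.subset_extend _ rfl
  let f : (𝒜 e) →ₗ[S] S := b.coord ⟨vv, hvv_mem⟩
  have hfv : f vv = 1 := by
    have : b ⟨vv, hvv_mem⟩ = vv := Module.Basis.extend_apply_self hli ⟨vv, hvv_mem⟩
    rw [← this]
    show b.repr (b ⟨vv, hvv_mem⟩) ⟨vv, hvv_mem⟩ = 1
    rw [Module.Basis.repr_self]
    exact Finsupp.single_eq_same
  -- chosen homogeneous central units in each degree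
  have hchoice : ∀ h : G, ∃ p : R × R,
      (p.1 ∈ Set.center R ∧ p.1 ∈ 𝒜 h ∧ p.2 ∈ Set.center R ∧ p.2 ∈ 𝒜 (-h)) ∧
      (IsHu 𝒜 h → p.1 * p.2 = 1 ∧ p.2 * p.1 = 1) ∧
      (¬ IsHu 𝒜 h → p.1 = 0 ∧ p.2 = 0) ∧
      (h = 0 → p = (1, 1)) := by
    intro h
    by_cases h0 : h = 0
    · subst h0
      refine ⟨(1, 1), ⟨Set.one_mem_center, SetLike.one_mem_graded 𝒜, Set.one_mem_center, ?_⟩,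
        fun _ => ⟨one_mul 1, one_mul 1⟩,
        fun hn => absurd (isHu_zero hs) hn, fun _ => rfl⟩
      rw [neg_zero]; exact SetLike.one_mem_graded 𝒜
    · by_cases hc : IsHu 𝒜 h
      · obtain ⟨z, hzc, hzh, hz0⟩ := hc
        obtain ⟨u, huc, huh, hzu, huz⟩ := exists_central_inv hs hzc hzh hz0
        exact ⟨(z, u), ⟨hzc, hzh, huc, huh⟩, fun _ => ⟨hzu, huz⟩,
          fun hn => absurd ⟨z, hzc, hzh, hz0⟩ hn, fun he => absurd he h0⟩
      · exact ⟨(0, 0), ⟨Set.zero_mem_center, AddSubgroup.zero_mem _, Set.zero_mem_center,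
          AddSubgroup.zero_mem _⟩, fun hyes => absurd hyes hc, fun _ => ⟨rfl, rfl⟩,
          fun he => absurd he h0⟩
  choose P hP using hchoice
  -- the component maps T g : 𝒜 g →+ R
  have Tmem : ∀ (g : G) (x : 𝒜 g), (P (g - e)).2 * (x : R) ∈ 𝒜 e := by
    intro g x
    have h2 := (hP (g - e)).1.2.2.2
    have := SetLike.mul_mem_graded h2 x.2
    have heq : -(g - e) + g = e := by abel
    rwa [heq] at this
  let T : ∀ g : G, (𝒜 g) → R := fun g x =>
    (P (g - e)).1 * ((f ⟨(P (g - e)).2 * (x : R), Tmem g x⟩ : S) : R)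
  have T_add : ∀ (g : G) (x y : 𝒜 g), T g (x + y) = T g x + T g y := by
    intro g x y
    show (P (g - e)).1 * _ = (P (g - e)).1 * _ + (P (g - e)).1 * _
    rw [← mul_add]
    congr 1
    have harg : (⟨(P (g - e)).2 * ((x + y : 𝒜 g) : R), Tmem g (x + y)⟩ : 𝒜 e)
        = ⟨(P (g - e)).2 * (x : R), Tmem g x⟩ + ⟨(P (g - e)).2 * (y : R), Tmem g y⟩ := by
      refine Subtype.ext ?_
      show (P (g - e)).2 * ((x : R) + y) = (P (g - e)).2 * x + (P (g - e)).2 * y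
      rw [mul_add]
    rw [harg, map_add]
    rfl
  let lam : R → R := fun x =>
    DirectSum.toAddMonoid (fun g => AddMonoidHom.mk' (T g) (T_add g)) (DirectSum.decompose 𝒜 x)
  have lam_add : ∀ x y : R, lam (x + y) = lam x + lam y := by
    intro x y
    show DirectSum.toAddMonoid _ (DirectSum.decompose 𝒜 (x + y)) = _
    rw [DirectSum.decompose_add, map_add]
  have lam_hom : ∀ (g : G) (x : 𝒜 g), lam (x : R) = T g x := by
    intro g x
    show DirectSum.toAddMonoid _ (DirectSum.decompose 𝒜 (x : R)) = _
    rw [DirectSum.decompose_coe, DirectSum.toAddMonoid_of]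
    rfl
  have lam_zero : lam 0 = 0 := by
    have h00 := lam_add 0 0
    rw [add_zero] at h00
    exact (right_eq_add.mp h00)
  have lam_center : ∀ x : R, lam x ∈ Set.center R := by
    intro x
    refine DirectSum.Decomposition.inductionOn 𝒜 (motive := fun x => lam x ∈ Set.center R)
      (by show lam 0 ∈ Set.center R; rw [lam_zero]; exact Set.zero_mem_center) ?_ ?_ x
    · intro g m
      show lam (m : R) ∈ Set.center R
      rw [lam_hom g m]
      exact Set.mul_mem_center (hP (g - e)).1.1 (f _).2.1
    · intro a b ha hb
      show lam (a + b) ∈ Set.center R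
      rw [lam_add]
      exact Set.add_mem_center ha hb
  have lam_deg : ∀ g : G, ∀ x ∈ 𝒜 g, lam x ∈ 𝒜 (g - e) := by
    intro g x hx
    have hco : (x : R) = ((⟨x, hx⟩ : 𝒜 g) : R) := rfl
    rw [hco, lam_hom g ⟨x, hx⟩]
    show (P (g - e)).1 * ((f ⟨(P (g - e)).2 * x, Tmem g ⟨x, hx⟩⟩ : S) : R) ∈ 𝒜 (g - e)
    set c : S := f ⟨(P (g - e)).2 * x, Tmem g ⟨x, hx⟩⟩ with hcdef
    have := SetLike.mul_mem_graded (hP (g - e)).1.2.1 c.2.2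
    rwa [add_zero] at this
  have lam_v : lam v = 1 := by
    rw [show v = ((vv : 𝒜 e) : R) from rfl, lam_hom e vv]
    show (P (e - e)).1 * _ = 1
    have he0 : e - e = 0 := sub_self e
    have hP0 : P (e - e) = (1, 1) := (hP (e - e)).2.2.2 he0
    have harg : (⟨(P (e - e)).2 * ((vv : 𝒜 e) : R), Tmem e vv⟩ : 𝒜 e) = vv := by
      refine Subtype.ext ?_
      show (P (e - e)).2 * v = v
      rw [hP0]; exact one_mul v
    rw [harg, hfv, hP0]
    show (1 : R) * ((1 : S) : R) = 1
    rw [one_mul]; rfl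
  -- Z-linearity for homogeneous central z
  have lam_zlin_hom : ∀ (h : G) (z : R), z ∈ Set.center R → z ∈ 𝒜 h →
      ∀ x : R, lam (x * z) = lam x * z := by
    intro h z hzc hzh x
    by_cases hz0 : z = 0
    · rw [hz0, mul_zero, mul_zero, lam_zero]
    have hIh : IsHu 𝒜 h := ⟨z, hzc, hzh, hz0⟩
    refine DirectSum.Decomposition.inductionOn 𝒜 (motive := fun x => lam (x * z) = lam x * z)
      (by show lam ((0 : R) * z) = lam 0 * z; rw [zero_mul, lam_zero, zero_mul]) ?_ ?_ x
    swap
    · intro a b ha hb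
      show lam ((a + b) * z) = lam (a + b) * z
      rw [add_mul, lam_add, ha, hb, lam_add, add_mul]
    intro g m
    show lam ((m : R) * z) = lam (m : R) * z
    have hxz : ((m : R) * z) ∈ 𝒜 (g + h) := SetLike.mul_mem_graded m.2 hzh
    rw [lam_hom g m, show (m : R) * z = ((⟨(m : R) * z, hxz⟩ : 𝒜 (g + h)) : R) from rfl,
      lam_hom (g + h) ⟨(m : R) * z, hxz⟩]
    by_cases hge : IsHu 𝒜 (g - e)
    · -- both degrees supported
      have hge' : IsHu 𝒜 (g + h - e) := by
        have := isHu_add hs hge hIh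
        rwa [sub_add_eq_add_sub] at this
      set u₁ := (P (g + h - e)).1 with hu₁
      set u₁' := (P (g + h - e)).2 with hu₁'
      set u := (P (g - e)).1 with hu
      set u' := (P (g - e)).2 with hu'
      have hmul1 : u₁ * u₁' = 1 := ((hP (g + h - e)).2.1 hge').1
      have hmulu : u * u' = 1 := ((hP (g - e)).2.1 hge).1
      have hu'c : u' ∈ Set.center R := (hP (g - e)).1.2.2.1
      have hu₁'c : u₁' ∈ Set.center R := (hP (g + h - e)).1.2.2.1
      have huc : u ∈ Set.center R := (hP (g - e)).1.1
      -- the scalar β = u₁' * u * z ∈ S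
      have hβdeg : u₁' * u * z ∈ 𝒜 (0 : G) := by
        have h1 := SetLike.mul_mem_graded (hP (g + h - e)).1.2.2.2 (hP (g - e)).1.2.1
        have h2 := SetLike.mul_mem_graded h1 hzh
        have : -(g + h - e) + (g - e) + h = 0 := by abel
        rwa [this] at h2
      set β : S := ⟨u₁' * u * z, Set.mul_mem_center (Set.mul_mem_center hu₁'c huc) hzc, hβdeg⟩
        with hβ
      have harg : (⟨u₁' * ((⟨(m : R) * z, hxz⟩ : 𝒜 (g + h)) : R), Tmem (g + h) _⟩ : 𝒜 e)
          = β • ⟨u' * (m : R), Tmem g m⟩ := by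
        refine Subtype.ext ?_
        show u₁' * ((m : R) * z) = (u₁' * u * z) * (u' * (m : R))
        have hzc' := Semigroup.mem_center_iff.mp hzc
        have hu'c' := Semigroup.mem_center_iff.mp hu'c
        calc u₁' * ((m : R) * z) = u₁' * (z * (m : R)) := by rw [← hzc' (m : R)]
          _ = (u₁' * z) * (m : R) := by rw [mul_assoc]
          _ = (u₁' * (u * u') * z) * (m : R) := by rw [hmulu, mul_one]
          _ = (u₁' * u * (u' * z)) * (m : R) := by
              rw [mul_assoc u₁' (u * u') z, mul_assoc u u' z, ← mul_assoc u₁' u (u' * z)]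
          _ = (u₁' * u * (z * u')) * (m : R) := by rw [hu'c' z]
          _ = (u₁' * u * z) * (u' * (m : R)) := by
              rw [← mul_assoc (u₁' * u) z u', mul_assoc (u₁' * u * z) u' (m : R)]
      show u₁ * ((f _ : S) : R) = u * ((f _ : S) : R) * z
      rw [harg, map_smul]
      have hcoe : ((β • f ⟨u' * (m : R), Tmem g m⟩ : S) : R)
          = (u₁' * u * z) * ((f ⟨u' * (m : R), Tmem g m⟩ : S) : R) := rfl
      rw [hcoe]
      set c : R := ((f ⟨u' * (m : R), Tmem g m⟩ : S) : R) with hc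
      have hcc : c ∈ Set.center R := (f ⟨u' * (m : R), Tmem g m⟩).2.1
      have hccomm := Semigroup.mem_center_iff.mp hcc
      have hzcomm := Semigroup.mem_center_iff.mp hzc
      calc u₁ * ((u₁' * u * z) * c) = (u₁ * u₁') * (u * z * c) := by
            rw [← mul_assoc, ← mul_assoc, ← mul_assoc, mul_assoc (u₁ * u₁') u z,
              mul_assoc (u₁ * u₁') (u * z) c]
        _ = u * z * c := by rw [hmul1, one_mul]
        _ = u * (c * z) := by rw [mul_assoc, ← hccomm z]
        _ = u * c * z := by rw [← mul_assoc]
    · -- unsupported degrees: both sides vanish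
      have hge' : ¬ IsHu 𝒜 (g + h - e) := by
        intro hcon
        refine hge ?_
        have := isHu_add hs hcon (isHu_neg hs hIh)
        have heq : g + h - e + -h = g - e := by abel
        rwa [heq] at this
      have h1 : (P (g + h - e)).1 = 0 := ((hP (g + h - e)).2.2.1 hge').1
      have h2 : (P (g - e)).1 = 0 := ((hP (g - e)).2.2.1 hge).1
      show (P (g + h - e)).1 * _ = (P (g - e)).1 * _ * z
      rw [h1, h2, zero_mul, zero_mul, zero_mul]
  have lam_sum : ∀ (t : Finset G) (fn : G → R),
      lam (∑ i ∈ t, fn i) = ∑ i ∈ t, lam (fn i) := by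
    intro t fn
    induction t using Finset.induction_on with
    | empty => simpa using lam_zero
    | @insert a t' ha ih => rw [Finset.sum_insert ha, Finset.sum_insert ha, lam_add, ih]
  have lam_zlin : ∀ x : R, ∀ z ∈ Set.center R, lam (x * z) = lam x * z := by
    intro x z hz
    conv_lhs => rw [← sum_SF (𝒜 := 𝒜) z]
    rw [Finset.mul_sum, lam_sum]
    have : ∀ h ∈ SF (𝒜 := 𝒜) z, lam (x * Dc 𝒜 z h) = lam x * Dc 𝒜 z h := by
      intro h _
      exact lam_zlin_hom h (Dc 𝒜 z h) (center_component hz h) (Dc_mem z h) x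
    rw [Finset.sum_congr rfl this, ← Finset.mul_sum, sum_SF (𝒜 := 𝒜) z]
  exact ⟨lam, lam_add, lam_center, lam_deg, lam_zlin, lam_v⟩
end Lam
section Help
variable {G R : Type*} [AddCommGroup G] [DecidableEq G] [Ring R]
variable {𝒜 : G → AddSubgroup R} [GradedRing 𝒜]

lemma Dc_sub (x y : R) (g : G) : Dc 𝒜 (x - y) g = Dc 𝒜 x g - Dc 𝒜 y g := by
  rw [sub_eq_add_neg, Dc_add, Dc_neg, sub_eq_add_neg]

lemma addfun_zero {F : R → R} (hF : ∀ x y, F (x + y) = F x + F y) : F 0 = 0 := by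
  have h := hF 0 0
  rw [add_zero] at h
  exact right_eq_add.mp h

lemma addfun_finsum {F : R → R} (hF : ∀ x y, F (x + y) = F x + F y)
    {ι : Type*} (t : Finset ι) (fn : ι → R) : F (∑ i ∈ t, fn i) = ∑ i ∈ t, F (fn i) := by
  classical
  induction t using Finset.induction_on with
  | empty => simpa using addfun_zero hF
  | @insert a t' ha ih => rw [Finset.sum_insert ha, Finset.sum_insert ha, hF, ih]

lemma addfun_listsum {F : R → R} (hF : ∀ x y, F (x + y) = F x + F y)
    (l : List R) : F l.sum = (l.map F).sum := by
  induction l with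
  | nil => simpa using addfun_zero hF
  | cons a l ih => rw [List.sum_cons, hF, ih, List.map_cons, List.sum_cons]

lemma center_finsum {ι : Type*} (t : Finset ι) (fn : ι → R)
    (h : ∀ i ∈ t, fn i ∈ Set.center R) : ∑ i ∈ t, fn i ∈ Set.center R := by
  classical
  induction t using Finset.induction_on with
  | empty => simpa using Set.zero_mem_center
  | @insert a t' ha ih =>
    rw [Finset.sum_insert ha]
    exact Set.add_mem_center (h a (Finset.mem_insert_self a t'))
      (ih (fun i hi => h i (Finset.mem_insert_of_mem hi)))

lemma Q_listsum {Q : Set R} (h0 : (0 : R) ∈ Q) (hadd : ∀ a ∈ Q, ∀ b ∈ Q, a + b ∈ Q)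
    (l : List R) (h : ∀ x ∈ l, x ∈ Q) : l.sum ∈ Q := by
  induction l with
  | nil => simpa using h0
  | cons a l ih =>
    rw [List.sum_cons]
    exact hadd a (h a (List.mem_cons_self)) _ (ih (fun x hx => h x (List.mem_cons_of_mem _ hx)))

/-- a Q-preserving property of `lam` on `mspan Q` -/
lemma lam_mspan {Q : Set R} (hQsub : Q ⊆ Set.center R) (h0 : (0 : R) ∈ Q)
    (hadd : ∀ a ∈ Q, ∀ b ∈ Q, a + b ∈ Q) (hcmul : ∀ a ∈ Q, ∀ z ∈ Set.center R, z * a ∈ Q)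
    {lam : R → R} (lam_add : ∀ x y : R, lam (x + y) = lam x + lam y)
    (lam_center : ∀ x : R, lam x ∈ Set.center R)
    (lam_zlin : ∀ x : R, ∀ z ∈ Set.center R, lam (x * z) = lam x * z) :
    ∀ x ∈ mspan Q, lam x ∈ Q := by
  rintro x ⟨l, hl, rfl⟩
  rw [addfun_listsum lam_add, List.map_map]
  refine Q_listsum h0 hadd _ (fun y hy => ?_)
  obtain ⟨p, hp, rfl⟩ := List.mem_map.mp hy
  show lam (p.1 * p.2) ∈ Q
  rw [lam_zlin p.1 p.2 (hQsub (hl p hp))]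
  exact hcmul p.2 (hl p hp) (lam p.1) (lam_center p.1)

end Help
section KL
variable {G R : Type*} [AddCommGroup G] [DecidableEq G] [Ring R]
variable {𝒜 : G → AddSubgroup R} [GradedRing 𝒜]

lemma KL (hs : IsGradedSimple 𝒜) (Q : Set R) (hQ : IsCenterPrime Q)
    (I : Set R) (hI : IsTwoSidedIdealSet I) (hJI : mspan Q ⊆ I)
    (hIZ : I ∩ Set.center R ⊆ Q) : I ⊆ mspan Q := by
  classical
  obtain ⟨hQsub, hQ0, hQadd, hQneg, hQcmul, hQne, hQprime⟩ := hQ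
  suffices key : ∀ (k : ℕ) (s : Finset G) (a : R), s.card ≤ k → a ∈ I →
      HasSuppIn (𝒜 := 𝒜) a s → a ∈ mspan Q by
    intro a ha
    obtain ⟨s, hsupp⟩ := exists_suppIn (𝒜 := 𝒜) a
    exact key s.card s a le_rfl ha hsupp
  intro k
  induction k with
  | zero =>
    intro s a hcard _ hsupp
    rw [Finset.card_eq_zero.mp (Nat.le_zero.mp hcard)] at hsupp
    rw [eq_zero_of_suppIn_empty hsupp]
    exact mspan_zero Q
  | succ k ih =>
    intro s a hcard haI hsupp
    by_cases hg : ∀ g ∈ s, Dc 𝒜 a g = 0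
    · have : a = 0 := by
        rw [← sum_Dc hsupp]
        exact Finset.sum_eq_zero hg
      rw [this]; exact mspan_zero Q
    push_neg at hg
    obtain ⟨g₁, hg₁s, hg₁ne⟩ := hg
    obtain ⟨phi, phi_add, phi_ideal, phi_deg, phi_w⟩ := exists_phi hs (Dc_mem a g₁) hg₁ne
    set b := phi a with hbdef
    have hbI : b ∈ I := phi_ideal I hI a haI
    have hbsum : b = ∑ g ∈ s, phi (Dc 𝒜 a g) := by
      conv_lhs => rw [hbdef, ← sum_Dc hsupp]
      exact addfun_finsum phi_add s _
    have phi_deg' : ∀ g : G, phi (Dc 𝒜 a g) ∈ 𝒜 (g - g₁) := fun g => phi_deg g _ (Dc_mem a g)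
    have hbDc : ∀ m : G, Dc 𝒜 b m = ∑ g ∈ s, (if g - g₁ = m then phi (Dc 𝒜 a g) else 0) := by
      intro m
      rw [hbsum]
      exact Dc_sum_ite s _ (fun g => g - g₁) (fun g _ => phi_deg' g) m
    set sb := s.image (fun g => g - g₁) with hsbdef
    have hsb_supp : HasSuppIn (𝒜 := 𝒜) b sb := by
      intro m hm
      rw [hbDc m]
      refine Finset.sum_eq_zero (fun g hgs => ?_)
      rw [if_neg (fun he => hm (Finset.mem_image.mpr ⟨g, hgs, he⟩))]
    have hb0 : Dc 𝒜 b 0 = 1 := by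
      rw [hbDc 0]
      have : ∀ g ∈ s, (if g - g₁ = 0 then phi (Dc 𝒜 a g) else 0)
          = (if g = g₁ then phi (Dc 𝒜 a g) else 0) := by
        intro g _
        by_cases hgg : g = g₁
        · rw [if_pos hgg, if_pos (by rw [hgg, sub_self])]
        · rw [if_neg hgg, if_neg (fun he => hgg (sub_eq_zero.mp he))]
      rw [Finset.sum_congr rfl this, Finset.sum_ite_eq' s g₁, if_pos hg₁s, phi_w]
    have hg₁sb : (0 : G) ∈ sb := by
      refine Finset.mem_image.mpr ⟨g₁, hg₁s, sub_self g₁⟩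
    have hsbcard : sb.card ≤ k + 1 := le_trans (Finset.card_image_le) hcard
    -- reduction: enough to show b ∈ mspan Q
    suffices hbJ : b ∈ mspan Q by
      have hdiff : a - Dc 𝒜 a g₁ * b ∈ mspan Q := by
        refine ih (s.erase g₁) _ ?_ ?_ ?_
        · rw [Finset.card_erase_of_mem hg₁s]
          omega
        · rw [sub_eq_add_neg]
          exact hI.2.1 a haI _ (hI.2.2.1 _ (hI.2.2.2.1 b hbI (Dc 𝒜 a g₁)))
        · intro m hm
          rw [Dc_sub]
          have hDccb : Dc 𝒜 (Dc 𝒜 a g₁ * b) m = Dc 𝒜 a g₁ * Dc 𝒜 b (m - g₁) := by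
            rw [hom_mul_Dc (Dc_mem a g₁) b (m - g₁)]
            congr 1
            abel
          by_cases hmg : m = g₁
          · subst hmg
            rw [hDccb, sub_self m, hb0, mul_one, sub_self]
          · have hms : m ∉ s := fun hmem => hm (Finset.mem_erase.mpr ⟨hmg, hmem⟩)
            rw [hsupp m hms, hDccb]
            have : Dc 𝒜 b (m - g₁) = 0 := by
              refine hsb_supp _ (fun hmem => ?_)
              obtain ⟨g, hgs, hge⟩ := Finset.mem_image.mp hmem
              exact hms ((sub_left_inj.mp hge) ▸ hgs)
            rw [this, mul_zero, sub_zero]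
      have : a = (a - Dc 𝒜 a g₁ * b) + Dc 𝒜 a g₁ * b := by abel
      rw [this]
      exact mspan_add hdiff (mspan_lmul hbJ _)
    -- Now show b ∈ mspan Q
    by_cases hcent : ∀ h ∈ sb, Dc 𝒜 b h ∈ Set.center R
    · have hbZ : b ∈ Set.center R := by
        rw [← sum_Dc hsb_supp]
        exact center_finsum sb _ hcent
      exact mem_mspan (hIZ ⟨hbI, hbZ⟩)
    push_neg at hcent
    obtain ⟨hst, hstmem, hstnc⟩ := hcent
    have hst0 : hst ≠ 0 := fun h0 => hstnc (by rw [h0, hb0]; exact Set.one_mem_center)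
    have hex : ∃ d : G, ∃ r : R, r ∈ 𝒜 d ∧ r * Dc 𝒜 b hst ≠ Dc 𝒜 b hst * r := by
      by_contra hall
      push_neg at hall
      refine hstnc (Semigroup.mem_center_iff.mpr (fun t => ?_))
      conv_lhs => rw [← sum_SF (𝒜 := 𝒜) t]
      conv_rhs => rw [← sum_SF (𝒜 := 𝒜) t]
      rw [Finset.sum_mul, Finset.mul_sum]
      exact Finset.sum_congr rfl (fun dd _ => hall dd (Dc 𝒜 t dd) (Dc_mem t dd))
    obtain ⟨d, r, hrd, hrne⟩ := hex
    have hwne : r * Dc 𝒜 b hst - Dc 𝒜 b hst * r ≠ 0 := sub_ne_zero.mpr hrne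
    have hterm : ∀ h : G, r * Dc 𝒜 b h - Dc 𝒜 b h * r ∈ 𝒜 (h + d) := by
      intro h
      have h1 : r * Dc 𝒜 b h ∈ 𝒜 (h + d) := by
        have := SetLike.mul_mem_graded hrd (Dc_mem b h)
        rwa [add_comm] at this
      exact AddSubgroup.sub_mem _ h1 (SetLike.mul_mem_graded (Dc_mem b h) hrd)
    set c := r * b - b * r with hcdef
    have hcI : c ∈ I := by
      rw [hcdef, sub_eq_add_neg]
      exact hI.2.1 _ (hI.2.2.2.1 b hbI r) _ (hI.2.2.1 _ (hI.2.2.2.2 b hbI r))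
    have hceq : c = ∑ h ∈ sb.erase 0, (r * Dc 𝒜 b h - Dc 𝒜 b h * r) := by
      have h2 : c = ∑ h ∈ sb, (r * Dc 𝒜 b h - Dc 𝒜 b h * r) := by
        rw [hcdef]
        conv_lhs => rw [← sum_Dc hsb_supp]
        rw [Finset.mul_sum, Finset.sum_mul, ← Finset.sum_sub_distrib]
      rw [h2]
      refine (Finset.sum_erase _ ?_).symm
      rw [hb0, mul_one, one_mul, sub_self]
    have hcsupp : HasSuppIn (𝒜 := 𝒜) c ((sb.erase 0).image (fun h => h + d)) := by
      intro m hm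
      rw [hceq, Dc_sum_ite _ _ (fun h => h + d) (fun h _ => hterm h) m]
      refine Finset.sum_eq_zero (fun h hh => ?_)
      rw [if_neg (fun he => hm (Finset.mem_image.mpr ⟨h, hh, he⟩))]
    have hcJ : c ∈ mspan Q := by
      refine ih _ c ?_ hcI hcsupp
      calc ((sb.erase 0).image (fun h => h + d)).card ≤ (sb.erase 0).card :=
            Finset.card_image_le
        _ = sb.card - 1 := Finset.card_erase_of_mem hg₁sb
        _ ≤ k := by omega
    obtain ⟨lam, lam_add, lam_center, lam_deg, lam_zlin, lam_v⟩ :=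
      exists_lambda hs (hst + d) (r * Dc 𝒜 b hst - Dc 𝒜 b hst * r) (hterm hst) hwne
    have hζdeg : ∀ h : G, lam (r * Dc 𝒜 b h - Dc 𝒜 b h * r) ∈ 𝒜 (h - hst) := by
      intro h
      have := lam_deg (h + d) _ (hterm h)
      have heq : h + d - (hst + d) = h - hst := by abel
      rwa [heq] at this
    have hqQ : lam c ∈ Q :=
      lam_mspan hQsub hQ0 hQadd hQcmul lam_add lam_center lam_zlin c hcJ
    have hqsum : lam c = ∑ h ∈ sb.erase 0, lam (r * Dc 𝒜 b h - Dc 𝒜 b h * r) := by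
      conv_lhs => rw [hceq]
      exact addfun_finsum lam_add _ _
    have hstinerase : hst ∈ sb.erase 0 := Finset.mem_erase.mpr ⟨hst0, hstmem⟩
    by_cases hz : ∀ h ∈ (sb.erase 0).erase hst, lam (r * Dc 𝒜 b h - Dc 𝒜 b h * r) = 0
    · exfalso
      have h1Q : (1 : R) ∈ Q := by
        have : lam c = 1 := by
          rw [hqsum, ← Finset.add_sum_erase _ _ hstinerase, lam_v, Finset.sum_eq_zero hz,
            add_zero]
        rwa [this] at hqQ
      refine hQne (Set.Subset.antisymm hQsub (fun z hzc => ?_))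
      have := hQcmul 1 h1Q z hzc
      rwa [mul_one] at this
    push_neg at hz
    obtain ⟨h', h'mem, hz'⟩ := hz
    have h'erase0 : h' ∈ sb.erase 0 := (Finset.mem_erase.mp h'mem).2
    have h'sb : h' ∈ sb := (Finset.mem_erase.mp h'erase0).2
    obtain ⟨zi, zic, zimem, hmulz, hmulz'⟩ :=
      exists_central_inv hs (lam_center _) (hζdeg h') hz'
    have hXmem : Dc 𝒜 b h' * zi ∈ 𝒜 hst := by
      have := SetLike.mul_mem_graded (Dc_mem b h') zimem
      have heq : h' + -(h' - hst) = hst := by abel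
      rwa [heq] at this
    have hXq : Dc 𝒜 b h' * zi * lam c ∈ mspan Q := mspan_lmul (mem_mspan hqQ) _
    have hyI : b - Dc 𝒜 b h' * zi * lam c ∈ I := by
      rw [sub_eq_add_neg]
      exact hI.2.1 b hbI _ (hI.2.2.1 _ (hJI hXq))
    have hXqDc : ∀ m : G, Dc 𝒜 (Dc 𝒜 b h' * zi * lam c) m
        = if m ∈ sb.erase 0 then Dc 𝒜 b h' * zi * lam (r * Dc 𝒜 b m - Dc 𝒜 b m * r) else 0 := by
      intro m
      have hexp : Dc 𝒜 b h' * zi * lam c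
          = ∑ h ∈ sb.erase 0, Dc 𝒜 b h' * zi * lam (r * Dc 𝒜 b h - Dc 𝒜 b h * r) := by
        rw [hqsum, Finset.mul_sum]
      have hmem : ∀ h ∈ sb.erase 0,
          Dc 𝒜 b h' * zi * lam (r * Dc 𝒜 b h - Dc 𝒜 b h * r) ∈ 𝒜 h := by
        intro h _
        have := SetLike.mul_mem_graded hXmem (hζdeg h)
        have heq : hst + (h - hst) = h := by abel
        rwa [heq] at this
      rw [hexp, Dc_sum_ite _ _ id hmem m]
      simp only [id]
      rw [Finset.sum_ite_eq' (sb.erase 0) m]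
    have hysupp : HasSuppIn (𝒜 := 𝒜) (b - Dc 𝒜 b h' * zi * lam c) (sb.erase h') := by
      intro m hm
      rw [Dc_sub, hXqDc m]
      by_cases hmh : m = h'
      · subst hmh
        rw [if_pos h'erase0, mul_assoc, hmulz', mul_one, sub_self]
      · have hmsb : m ∉ sb := fun hmem => hm (Finset.mem_erase.mpr ⟨hmh, hmem⟩)
        rw [hsb_supp m hmsb, if_neg (fun hmem => hmsb (Finset.mem_erase.mp hmem).2), sub_zero]
    have hyJ : b - Dc 𝒜 b h' * zi * lam c ∈ mspan Q := by
      refine ih (sb.erase h') _ ?_ hyI hysupp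
      rw [Finset.card_erase_of_mem h'sb]
      omega
    have : b = (b - Dc 𝒜 b h' * zi * lam c) + Dc 𝒜 b h' * zi * lam c := by abel
    rw [this]
    exact mspan_add hyJ hXq
end KL
section Final
variable {G R : Type*} [AddCommGroup G] [DecidableEq G] [Ring R]
variable {𝒜 : G → AddSubgroup R} [GradedRing 𝒜]

lemma mspan_singleton {a x : R} (hx : x ∈ mspan ({a} : Set R)) : ∃ t : R, x = t * a := by
  obtain ⟨l, hl, rfl⟩ := hx
  refine ⟨(l.map Prod.fst).sum, ?_⟩
  rw [← list_sum_mul l Prod.fst a]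
  exact congrArg List.sum (List.map_congr_left fun p hp => by
    have : p.2 = a := hl p hp
    rw [this])

/-- Part 1: contraction of a prime is a center-prime. -/
lemma contraction_prime {P : Set R} (hP : IsPrimeIdealSet P) :
    IsCenterPrime (P ∩ Set.center R) := by
  obtain ⟨hPi, hPuniv, hPprime⟩ := hP
  refine ⟨Set.inter_subset_right, ⟨hPi.1, Set.zero_mem_center⟩, ?_, ?_, ?_, ?_, ?_⟩
  · rintro a ⟨haP, haZ⟩ b ⟨hbP, hbZ⟩
    exact ⟨hPi.2.1 a haP b hbP, Set.add_mem_center haZ hbZ⟩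
  · rintro a ⟨haP, haZ⟩
    exact ⟨hPi.2.2.1 a haP, Set.neg_mem_center haZ⟩
  · rintro a ⟨haP, haZ⟩ z hz
    exact ⟨hPi.2.2.2.1 a haP z, Set.mul_mem_center hz haZ⟩
  · intro hcontra
    refine hPuniv (Set.eq_univ_iff_forall.mpr (fun x => ?_))
    have h1 : (1 : R) ∈ P ∩ Set.center R := by rw [hcontra]; exact Set.one_mem_center
    have := hPi.2.2.2.1 1 h1.1 x
    rwa [mul_one] at this
  · intro a haZ b hbZ hab
    have hIJ : MulSubset (mspan ({a} : Set R)) (mspan ({b} : Set R)) P := by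
      intro x hx y hy
      obtain ⟨t, rfl⟩ := mspan_singleton hx
      obtain ⟨u, rfl⟩ := mspan_singleton hy
      have key : t * a * (u * b) = t * u * (a * b) := by
        have hac := Semigroup.mem_center_iff.mp haZ
        calc t * a * (u * b) = t * (a * u) * b := by
              rw [mul_assoc t a (u * b), ← mul_assoc a u b, ← mul_assoc t (a * u) b]
          _ = t * (u * a) * b := by rw [← hac u]
          _ = t * u * (a * b) := by rw [← mul_assoc t u a, mul_assoc (t * u) a b]
      rw [key]
      exact hPi.2.2.2.1 _ hab.1 _
    have hsa : ({a} : Set R) ⊆ Set.center R := by simpa using haZ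
    have hsb : ({b} : Set R) ⊆ Set.center R := by simpa using hbZ
    rcases hPprime _ _ (mspan_ideal hsa) (mspan_ideal hsb) hIJ with h | h
    · exact Or.inl ⟨h (mem_mspan rfl), haZ⟩
    · exact Or.inr ⟨h (mem_mspan rfl), hbZ⟩

/-- Part 4: contraction of the extension is the identity. -/
lemma extension_contraction (hs : IsGradedSimple 𝒜) {Q : Set R} (hQ : IsCenterPrime Q) :
    idealGen Q ∩ Set.center R = Q := by
  obtain ⟨hQsub, hQ0, hQadd, hQneg, hQcmul, hQne, hQprime⟩ := hQ
  refine Set.Subset.antisymm ?_ (fun q hq => ⟨subset_idealGen Q hq, hQsub hq⟩)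
  rintro z ⟨hzE, hzc⟩
  rw [idealGen_eq_mspan hQsub] at hzE
  obtain ⟨lam, lam_add, lam_center, lam_deg, lam_zlin, lam_v⟩ :=
    exists_lambda hs (0 : G) (1 : R) (SetLike.one_mem_graded 𝒜) (fun h => hs.1 h.symm)
  have hlamz : lam z = z := by
    conv_lhs => rw [← one_mul z]
    rw [lam_zlin 1 z hzc, lam_v, one_mul]
  have := lam_mspan hQsub hQ0 hQadd hQcmul lam_add lam_center lam_zlin z hzE
  rwa [hlamz] at this

/-- Part 3: extension of the contraction is the identity on primes. -/
lemma contraction_extension (hs : IsGradedSimple 𝒜) {P : Set R} (hP : IsPrimeIdealSet P) :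
    idealGen (P ∩ Set.center R) = P := by
  have hQ : IsCenterPrime (P ∩ Set.center R) := contraction_prime hP
  refine Set.Subset.antisymm (idealGen_subset hP.1 Set.inter_subset_left) ?_
  rw [idealGen_eq_mspan Set.inter_subset_right]
  exact KL hs _ hQ P hP.1 (mspan_subset hP.1 Set.inter_subset_left) subset_rfl

/-- Part 2: extension of a center-prime is prime. -/
lemma extension_prime (hs : IsGradedSimple 𝒜) {Q : Set R} (hQ : IsCenterPrime Q) :
    IsPrimeIdealSet (idealGen Q) := by
  have hE : idealGen Q = mspan Q := idealGen_eq_mspan hQ.1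
  have hEid : IsTwoSidedIdealSet (idealGen Q) := by rw [hE]; exact mspan_ideal hQ.1
  refine ⟨hEid, ?_, ?_⟩
  · intro huniv
    refine hQ.2.2.2.2.2.1 ?_
    rw [← extension_contraction hs hQ, huniv]
    exact Set.univ_inter _
  intro I₁ I₂ hI₁ hI₂ hmul
  by_cases hc : I₁ ⊆ idealGen Q
  · exact Or.inl hc
  right
  obtain ⟨x, hxI, hxE⟩ := Set.not_subset.mp hc
  intro y hyI
  -- the auxiliary ideals A and B
  set A : Set R := {t | ∃ u ∈ ispan x, ∃ v ∈ mspan Q, t = u + v} with hAdef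
  set B : Set R := {t | ∃ u ∈ ispan y, ∃ v ∈ mspan Q, t = u + v} with hBdef
  have hsumIdeal : ∀ w : R, IsTwoSidedIdealSet {t | ∃ u ∈ ispan w, ∃ v ∈ mspan Q, t = u + v} := by
    intro w
    refine ⟨⟨0, ispan_zero w, 0, mspan_zero Q, (add_zero 0).symm⟩, ?_, ?_, ?_, ?_⟩
    · rintro a ⟨u, hu, v, hv, rfl⟩ b ⟨u', hu', v', hv', rfl⟩
      exact ⟨u + u', ispan_add hu hu', v + v', mspan_add hv hv', by abel⟩
    · rintro a ⟨u, hu, v, hv, rfl⟩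
      exact ⟨-u, ispan_neg hu, -v, mspan_neg hv, by abel⟩
    · rintro a ⟨u, hu, v, hv, rfl⟩ r
      exact ⟨r * u, ispan_lmul hu r, r * v, mspan_lmul hv r, by rw [mul_add]⟩
    · rintro a ⟨u, hu, v, hv, rfl⟩ r
      exact ⟨u * r, ispan_rmul hu r, v * r, mspan_rmul hQ.1 hv r, by rw [add_mul]⟩
  have hgen : ∀ p q p' q' : R, (p * x * q) * (p' * y * q') ∈ mspan Q := by
    intro p q p' q'
    have hmid : x * (q * p') * y ∈ idealGen Q :=
      hmul _ (hI₁.2.2.2.2 x hxI (q * p')) y hyI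
    rw [hE] at hmid
    have key : (p * x * q) * (p' * y * q') = p * (x * (q * p') * y) * q' := by noncomm_ring
    rw [key]
    exact mspan_rmul hQ.1 (mspan_lmul hmid p) q'
  have hone : ∀ p q : R, ∀ u' ∈ ispan y, (p * x * q) * u' ∈ mspan Q := by
    rintro p q u' ⟨l', rfl⟩
    induction l' with
    | nil => simpa using mspan_zero Q
    | cons a' l'' ih =>
      rw [List.map_cons, List.sum_cons, mul_add]
      exact mspan_add (hgen p q a'.1 a'.2) ih
  have hispan_mul : ∀ u ∈ ispan x, ∀ u' ∈ ispan y, u * u' ∈ mspan Q := by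
    rintro u ⟨l, rfl⟩ u' hu'
    induction l with
    | nil => simpa using mspan_zero Q
    | cons a l ih =>
      rw [List.map_cons, List.sum_cons, add_mul]
      exact mspan_add (hone a.1 a.2 u' hu') ih
  have hAB : ∀ α ∈ A, ∀ β ∈ B, α * β ∈ mspan Q := by
    rintro α ⟨u, hu, v, hv, rfl⟩ β ⟨u', hu', v', hv', rfl⟩
    have expand : (u + v) * (u' + v') = (u * u' + u * v') + (v * u' + v * v') := by noncomm_ring
    rw [expand]
    exact mspan_add (mspan_add (hispan_mul u hu u' hu') (mspan_lmul hv' u))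
      (mspan_add (mspan_rmul hQ.1 hv u') (mspan_rmul hQ.1 hv v'))
  have hmsA : mspan Q ⊆ A := fun v hv => ⟨0, ispan_zero x, v, hv, (zero_add v).symm⟩
  by_cases hAZ : A ∩ Set.center R ⊆ Q
  · exfalso
    have hKA : A ⊆ mspan Q := KL hs Q hQ A (hsumIdeal x) hmsA hAZ
    have hxA : x ∈ A := ⟨x, mem_ispan_self x, 0, mspan_zero Q, (add_zero x).symm⟩
    rw [hE] at hxE
    exact hxE (hKA hxA)
  · obtain ⟨α, hαmem, hαQ⟩ := Set.not_subset.mp hAZ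
    have hBZ : B ∩ Set.center R ⊆ Q := by
      rintro β ⟨hβB, hβZ⟩
      have hαβ : α * β ∈ Q := by
        have h1 : α * β ∈ mspan Q := hAB α hαmem.1 β hβB
        have h2 : α * β ∈ Set.center R := Set.mul_mem_center hαmem.2 hβZ
        have h4 := extension_contraction hs hQ
        rw [← h4]
        exact ⟨by rw [hE]; exact h1, h2⟩
      exact (hQ.2.2.2.2.2.2 α hαmem.2 β hβZ hαβ).resolve_left hαQ
    have hKB : B ⊆ mspan Q :=
      KL hs Q hQ B (hsumIdeal y) (fun v hv => ⟨0, ispan_zero y, v, hv, (zero_add v).symm⟩) hBZ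
    have hyB : y ∈ B := ⟨y, mem_ispan_self y, 0, mspan_zero Q, (add_zero y).symm⟩
    rw [hE]
    exact hKB hyB
end Final

/-- Let `R` be a graded-simple ring graded by an abelian group `G`.  Contraction
`P ↦ P ∩ Z(R)` and extension `Q ↦ R·Q` are mutually inverse, inclusion-preserving
bijections between the prime two-sided ideals of `R` and the prime ideals of the
center `Z(R)`. -/
theorem prime_spectrum_of_graded_simple_ring_via_center
    {G R : Type*} [AddCommGroup G] [DecidableEq G] [Ring R]
    (𝒜 : G → AddSubgroup R) [GradedRing 𝒜] (hsimple : IsGradedSimple 𝒜) :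
    (∀ P : Set R, IsPrimeIdealSet P → IsCenterPrime (P ∩ Set.center R)) ∧
    (∀ Q : Set R, IsCenterPrime Q → IsPrimeIdealSet (idealGen Q)) ∧
    (∀ P : Set R, IsPrimeIdealSet P → idealGen (P ∩ Set.center R) = P) ∧
    (∀ Q : Set R, IsCenterPrime Q → idealGen Q ∩ Set.center R = Q) ∧
    (∀ P P' : Set R, IsPrimeIdealSet P → IsPrimeIdealSet P' → P ⊆ P' →
      P ∩ Set.center R ⊆ P' ∩ Set.center R) ∧
    (∀ Q Q' : Set R, IsCenterPrime Q → IsCenterPrime Q' → Q ⊆ Q' →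
      idealGen Q ⊆ idealGen Q') := by
  exact ⟨fun P hP => contraction_prime hP,
    fun Q hQ => extension_prime hsimple hQ,
    fun P hP => contraction_extension hsimple hP,
    fun Q hQ => extension_contraction hsimple hQ,
    fun P P' _ _ h x hx => ⟨h hx.1, hx.2⟩,
    fun Q Q' _ _ h => idealGen_mono h⟩
end

section
/- Let r be a positive integer and R a nonzero ℤ^r-graded, graded-simple ring. Then the center Z(R) is a homogeneous subring, its degree-zero component K = Z(R)₀ is a field, and Z(R) is isomorphic as a K-algebra to a Laurent polynomial ring K[z₁^{±1},…,z_s^{±1}] in s indeterminates (equivalently, to the group algebra of ℤ^s over K) for some s ≤ r. -/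
/-- The degree-zero part `Z(R)₀ = Z(R) ∩ R₀` of the center of a `ℤ^r`-graded ring,
as a subring of the center. -/
def centerDegZero {r : ℕ} {R : Type*} [Ring R]
    (𝒜 : (Fin r → ℤ) → AddSubgroup R) [GradedRing 𝒜] :
    Subring ↥(Subring.center R) where
  carrier := {x : ↥(Subring.center R) | (x : R) ∈ 𝒜 0}
  zero_mem' := by simpa using zero_mem (𝒜 0)
  one_mem' := by simpa using SetLike.one_mem_graded 𝒜
  add_mem' := by
    intro a b ha hb
    simp only [Set.mem_setOf_eq] at ha hb ⊢
    simpa using (𝒜 0).add_mem ha hb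
  neg_mem' := by
    intro a ha
    simp only [Set.mem_setOf_eq] at ha ⊢
    simpa using (𝒜 0).neg_mem ha
  mul_mem' := by
    intro a b ha hb
    simp only [Set.mem_setOf_eq] at ha hb ⊢
    simpa using SetLike.mul_mem_graded (A := 𝒜) ha hb

section Aux

variable {r : ℕ} {R : Type*} [Ring R] (𝒜 : (Fin r → ℤ) → AddSubgroup R) [GradedRing 𝒜]

theorem center_homog (z : R) (hz : z ∈ Set.center R) (g : Fin r → ℤ) :
    ((DirectSum.decompose 𝒜 z) g : R) ∈ Set.center R := by
  classical
  rw [Semigroup.mem_center_iff] at hz ⊢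
  intro b
  have key : ∀ (h : Fin r → ℤ) (y : R), y ∈ 𝒜 h →
      y * (DirectSum.decompose 𝒜 z g : R) = (DirectSum.decompose 𝒜 z g : R) * y := by
    intro h y hy
    have h1 : (DirectSum.decompose 𝒜 (y * z) (h + g) : R) =
        y * (DirectSum.decompose 𝒜 z g : R) :=
      DirectSum.coe_decompose_mul_add_of_left_mem 𝒜 hy
    have h2 : (DirectSum.decompose 𝒜 (z * y) (g + h) : R) =
        (DirectSum.decompose 𝒜 z g : R) * y :=
      DirectSum.coe_decompose_mul_add_of_right_mem 𝒜 hy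
    rw [← h1, ← h2, hz y, add_comm]
  conv_lhs => rw [← DirectSum.sum_support_decompose 𝒜 b]
  rw [Finset.sum_mul]
  conv_rhs => rw [← DirectSum.sum_support_decompose 𝒜 b, Finset.mul_sum]
  exact Finset.sum_congr rfl fun h _ => key h _ (SetLike.coe_mem _)

theorem homog_central_inv (hsimple : IsGradedSimple 𝒜) (z : R) (hzc : z ∈ Set.center R)
    (g : Fin r → ℤ) (hzg : z ∈ 𝒜 g) (hz0 : z ≠ 0) :
    ∃ w : R, w ∈ Set.center R ∧ w ∈ 𝒜 (-g) ∧ z * w = 1 ∧ w * z = 1 := by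
  have hz : ∀ x : R, x * z = z * x := Semigroup.mem_center_iff.mp hzc
  set I : Set R := {x | ∃ a : R, x = a * z} with hI
  have hTI : IsTwoSidedIdealSet I := by
    refine ⟨⟨0, (zero_mul z).symm⟩, ?_, ?_, ?_, ?_⟩
    · rintro x ⟨a, rfl⟩ y ⟨c, rfl⟩; exact ⟨a + c, (add_mul a c z).symm⟩
    · rintro x ⟨a, rfl⟩; exact ⟨-a, (neg_mul a z).symm⟩
    · rintro x ⟨a, rfl⟩ t; exact ⟨t * a, (mul_assoc t a z).symm⟩
    · rintro x ⟨a, rfl⟩ t; exact ⟨a * t, by rw [mul_assoc, mul_assoc, hz t]⟩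
  have hHI : IsHomogSet 𝒜 I := by
    rintro x ⟨a, rfl⟩ h
    refine ⟨DirectSum.decompose 𝒜 a (h - g), ?_⟩
    have h1 : (DirectSum.decompose 𝒜 (a * z) ((h - g) + g) : R) =
        (DirectSum.decompose 𝒜 a (h - g) : R) * z :=
      DirectSum.coe_decompose_mul_add_of_right_mem 𝒜 hzg
    rw [sub_add_cancel] at h1
    exact h1
  rcases hsimple.2 I hTI hHI with h0 | huniv
  · exact absurd (by have : z ∈ I := ⟨1, (one_mul z).symm⟩; rwa [h0] at this) hz0
  · have h1 : (1 : R) ∈ I := huniv ▸ Set.mem_univ 1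
    obtain ⟨a, ha⟩ := h1
    have haz : a * z = 1 := ha.symm
    have hza : z * a = 1 := by rw [← hz a]; exact haz
    have hacen : a ∈ Set.center R := by
      rw [Semigroup.mem_center_iff]
      intro x
      have : a * x = x * a := by
        calc a * x = a * x * (z * a) := by rw [hza, mul_one]
          _ = a * (x * z) * a := by simp only [mul_assoc]
          _ = a * (z * x) * a := by rw [hz x]
          _ = (a * z) * (x * a) := by simp only [mul_assoc]
          _ = x * a := by rw [haz, one_mul]
      exact this.symm
    refine ⟨DirectSum.decompose 𝒜 a (-g), center_homog 𝒜 a hacen (-g),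
      SetLike.coe_mem _, ?_, ?_⟩
    · have hwc := center_homog 𝒜 a hacen (-g)
      have hwz : (DirectSum.decompose 𝒜 a (-g) : R) * z = 1 := by
        have h1 : (DirectSum.decompose 𝒜 (a * z) ((-g) + g) : R) =
            (DirectSum.decompose 𝒜 a (-g) : R) * z :=
          DirectSum.coe_decompose_mul_add_of_right_mem 𝒜 hzg
        rw [neg_add_cancel, haz] at h1
        rw [← h1]
        exact DirectSum.decompose_of_mem_same 𝒜 (SetLike.one_mem_graded 𝒜)
      rw [Semigroup.mem_center_iff.mp hwc z]
      exact hwz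
    · have h1 : (DirectSum.decompose 𝒜 (a * z) ((-g) + g) : R) =
          (DirectSum.decompose 𝒜 a (-g) : R) * z :=
        DirectSum.coe_decompose_mul_add_of_right_mem 𝒜 hzg
      rw [neg_add_cancel, haz] at h1
      rw [← h1]
      exact DirectSum.decompose_of_mem_same 𝒜 (SetLike.one_mem_graded 𝒜)

end Aux

set_option maxHeartbeats 2000000 in
/-- Let `r ≥ 1` and let `R` be a nonzero `ℤ^r`-graded, graded-simple ring.  Then the
center `Z(R)` is a homogeneous subring, its degree-zero component `K = Z(R)₀` is a
field, and `Z(R)` is isomorphic as a `K`-algebra to a Laurent polynomial ring over `K`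
in `s ≤ r` indeterminates (the group algebra `K[ℤ^s]`). -/
theorem center_of_graded_simple_ring_is_laurent
    {r : ℕ} (hr : 0 < r) {R : Type*} [Ring R]
    (𝒜 : (Fin r → ℤ) → AddSubgroup R) [GradedRing 𝒜]
    (hsimple : IsGradedSimple 𝒜) :
    (∀ z ∈ Set.center R, ∀ g : Fin r → ℤ,
        ((DirectSum.decompose 𝒜 z) g : R) ∈ Set.center R) ∧
    IsField ↥(centerDegZero 𝒜) ∧
    ∃ s : ℕ, s ≤ r ∧
      ∃ e : ↥(Subring.center R) ≃+*
          AddMonoidAlgebra ↥(centerDegZero 𝒜) (Fin s → ℤ),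
        ∀ x : ↥(centerDegZero 𝒜),
          e ↑x = AddMonoidAlgebra.single (0 : Fin s → ℤ) x := by
  classical
  have hcen : ∀ x : ↥(Subring.center R), (x : R) ∈ Set.center R := fun x =>
    Semigroup.mem_center_iff.mpr (Subring.mem_center_iff.mp x.2)
  have hcen' : ∀ y : R, y ∈ Set.center R → y ∈ Subring.center R := fun y hy =>
    Subring.mem_center_iff.mpr (Semigroup.mem_center_iff.mp hy)
  have hA : ∀ z ∈ Set.center R, ∀ g : Fin r → ℤ,
      ((DirectSum.decompose 𝒜 z) g : R) ∈ Set.center R := fun z hz g => center_homog 𝒜 z hz g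
  have h01 : (1 : R) ≠ 0 := fun h => hsimple.1 h.symm
  refine ⟨hA, ?_, ?_⟩
  · refine ⟨⟨0, 1, fun h => hsimple.1 ?_⟩, mul_comm, ?_⟩
    · simpa using congrArg (fun t : ↥(centerDegZero 𝒜) => ((t : ↥(Subring.center R)) : R)) h
    · intro a ha
      have haR : ((a : ↥(Subring.center R)) : R) ≠ 0 := by
        intro h; exact ha (Subtype.ext (Subtype.ext h))
      obtain ⟨w, hwc, hwg, hzw, hwz⟩ :=
        homog_central_inv 𝒜 hsimple _ (hcen a.1) 0 a.2 haR
      rw [neg_zero] at hwg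
      refine ⟨⟨⟨w, hcen' w hwc⟩, hwg⟩, ?_⟩
      apply Subtype.ext; apply Subtype.ext
      exact hzw
  · have hmulinv : ∀ z : R, z ∈ Set.center R → ∀ g : Fin r → ℤ, z ∈ 𝒜 g → z ≠ 0 →
        ∃ w : R, w ∈ Set.center R ∧ w ∈ 𝒜 (-g) ∧ z * w = 1 ∧ w * z = 1 :=
      fun z hzc g hzg hz0 => homog_central_inv 𝒜 hsimple z hzc g hzg hz0
    set Γ : AddSubgroup (Fin r → ℤ) :=
      { carrier := {g | ∃ z : R, z ∈ Set.center R ∧ z ∈ 𝒜 g ∧ z ≠ 0}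
        zero_mem' := ⟨1, Set.one_mem_center, SetLike.one_mem_graded 𝒜, h01⟩
        add_mem' := by
          rintro g h ⟨z, hzc, hzg, hz0⟩ ⟨w, hwc, hwg, hw0⟩
          refine ⟨z * w, Set.mul_mem_center hzc hwc, SetLike.mul_mem_graded hzg hwg, ?_⟩
          obtain ⟨z', _, _, _, hz'z⟩ := hmulinv z hzc g hzg hz0
          intro h0
          apply hw0
          calc w = (z' * z) * w := by rw [hz'z, one_mul]
            _ = z' * (z * w) := mul_assoc _ _ _
            _ = 0 := by rw [h0, mul_zero]
        neg_mem' := by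
          rintro g ⟨z, hzc, hzg, hz0⟩
          obtain ⟨w, hwc, hwg, hzw, hwz⟩ := hmulinv z hzc g hzg hz0
          exact ⟨w, hwc, hwg, fun h0 => h01 (by rw [← hwz, h0, zero_mul])⟩ } with hΓdef
    set Γ' : Submodule ℤ (Fin r → ℤ) := AddSubgroup.toIntSubmodule Γ with hΓ'def
    obtain ⟨s, b⟩ := Submodule.basisOfPid (Pi.basisFun ℤ (Fin r)) Γ'
    have hs : s ≤ r := by
      have h1 : Module.finrank ℤ ↥Γ' = s := by
        rw [Module.finrank_eq_card_basis b, Fintype.card_fin]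
      have h2 := Submodule.finrank_le Γ'
      rwa [h1, Module.finrank_fin_fun] at h2
    refine ⟨s, hs, ?_⟩
    set e : Fin s → (Fin r → ℤ) := fun i => ((b i : ↥Γ') : Fin r → ℤ) with he
    have heΓ : ∀ i, ∃ z : R, z ∈ Set.center R ∧ z ∈ 𝒜 (e i) ∧ z ≠ 0 := fun i => (b i).2
    choose zz hzc hzg hz0 using heΓ
    choose ww hwc hwg hzw hwz using fun i => hmulinv (zz i) (hzc i) (e i) (hzg i) (hz0 i)
    let u : Fin s → (↥(Subring.center R))ˣ := fun i =>
      { val := ⟨zz i, hcen' _ (hzc i)⟩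
        inv := ⟨ww i, hcen' _ (hwc i)⟩
        val_inv := Subtype.ext (hzw i)
        inv_val := Subtype.ext (hwz i) }
    set V : (Fin s → ℤ) → (↥(Subring.center R))ˣ := fun g => ∏ i, u i ^ (g i) with hVdef
    have hV0 : V 0 = 1 := by simp [hVdef]
    have hVadd : ∀ g h : Fin s → ℤ, V (g + h) = V g * V h := by
      intro g h
      simp [hVdef, zpow_add, Finset.prod_mul_distrib]
    have hupow : ∀ (i : Fin s) (n : ℤ),
        ((↑(u i ^ n) : ↥(Subring.center R)) : R) ∈ 𝒜 (n • e i) := by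
      intro i n
      obtain m | m := n
      · have hmem : zz i ^ m ∈ 𝒜 (m • e i) := SetLike.pow_mem_graded m (hzg i)
        have hdeg : (Int.ofNat m) • e i = m • e i := by
          simp [natCast_zsmul]
        have hval : ((↑(u i ^ (Int.ofNat m)) : ↥(Subring.center R)) : R) = zz i ^ m := by
          rw [show ((Int.ofNat m : ℤ)) = ((m : ℕ) : ℤ) from rfl, zpow_natCast,
            Units.val_pow_eq_pow_val]
          exact SubmonoidClass.coe_pow _ m
        rw [hdeg, hval]
        exact hmem
      · have hmem : ww i ^ (m + 1) ∈ 𝒜 ((m + 1) • (-(e i))) :=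
          SetLike.pow_mem_graded (m + 1) (hwg i)
        have hdeg : (Int.negSucc m) • e i = (m + 1) • (-(e i)) := by
          rw [negSucc_zsmul, ← smul_neg]
        have hval : ((↑(u i ^ (Int.negSucc m)) : ↥(Subring.center R)) : R) = ww i ^ (m + 1) := by
          rw [zpow_negSucc, ← inv_pow, Units.val_pow_eq_pow_val]
          exact SubmonoidClass.coe_pow _ (m + 1)
        rw [hdeg, hval]
        exact hmem
    set ι : (Fin s → ℤ) → (Fin r → ℤ) := fun g => ∑ i, g i • e i with hιdef
    have hVdeg : ∀ g : Fin s → ℤ, ((↑(V g) : ↥(Subring.center R)) : R) ∈ 𝒜 (ι g) := by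
      intro g
      have key : ∀ t : Finset (Fin s),
          ((↑(∏ i ∈ t, u i ^ (g i)) : ↥(Subring.center R)) : R) ∈ 𝒜 (∑ i ∈ t, g i • e i) := by
        intro t
        induction t using Finset.cons_induction with
        | empty => simpa using SetLike.one_mem_graded 𝒜
        | cons a t hat ih =>
          rw [Finset.prod_cons, Finset.sum_cons, Units.val_mul, MulMemClass.coe_mul]
          exact SetLike.mul_mem_graded (hupow a (g a)) ih
      simpa [hVdef, hιdef] using key Finset.univ
    have hι_neg : ∀ g, ι (-g) = -(ι g) := by
      intro g
      simp only [hιdef, Pi.neg_apply, neg_smul]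
      rw [Finset.sum_neg_distrib]
    have hcoeΓ : ∀ c : Fin s → ℤ, ((∑ i, c i • b i : ↥Γ') : Fin r → ℤ) = ι c := by
      intro c
      have h1 : (Γ'.subtype (∑ i, c i • b i)) = ∑ i, c i • (Γ'.subtype (b i)) := by
        rw [map_sum]
        exact Finset.sum_congr rfl fun i _ => map_smul _ _ _
      simpa [hιdef, he] using h1
    have hι_inj : ∀ g h : Fin s → ℤ, ι g = ι h → g = h := by
      intro g h hgh
      have h1 : (∑ i, g i • b i : ↥Γ') = ∑ i, h i • b i := by
        apply Subtype.coe_injective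
        show ((∑ i, g i • b i : ↥Γ') : Fin r → ℤ) = ((∑ i, h i • b i : ↥Γ') : Fin r → ℤ)
        rw [hcoeΓ, hcoeΓ, hgh]
      have h2 : ∑ i, (g i - h i) • b i = (0 : ↥Γ') := by
        simp [sub_smul, Finset.sum_sub_distrib, h1]
      have h3 := Fintype.linearIndependent_iff.mp b.linearIndependent (fun i => g i - h i) h2
      funext i
      have h4 : g i - h i = 0 := h3 i
      omega
    have hι_surj : ∀ d : Fin r → ℤ, d ∈ Γ → ∃ g : Fin s → ℤ, ι g = d := by
      intro d hd
      have hd' : d ∈ Γ' := hd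
      refine ⟨fun i => b.repr ⟨d, hd'⟩ i, ?_⟩
      have h2 : ((∑ i, b.repr ⟨d, hd'⟩ i • b i : ↥Γ') : Fin r → ℤ) = d :=
        congrArg Subtype.val (b.sum_repr ⟨d, hd'⟩)
      rw [hcoeΓ] at h2
      exact h2
    set f : ↥(centerDegZero 𝒜) →+* ↥(Subring.center R) := (centerDegZero 𝒜).subtype with hf
    set G : Multiplicative (Fin s → ℤ) →* ↥(Subring.center R) :=
      { toFun := fun g => ((V g.toAdd : ↥(Subring.center R)))
        map_one' := by simpa using congrArg Units.val hV0
        map_mul' := by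
          intro a c
          simpa using congrArg Units.val (hVadd a.toAdd c.toAdd) } with hG
    set E : AddMonoidAlgebra ↥(centerDegZero 𝒜) (Fin s → ℤ) →+* ↥(Subring.center R) :=
      AddMonoidAlgebra.liftNCRingHom f G (fun x y => mul_comm _ _) with hE
    have hEsingle : ∀ (a : Fin s → ℤ) (c : ↥(centerDegZero 𝒜)),
        E (AddMonoidAlgebra.single a c) = (c : ↥(Subring.center R)) * ↑(V a) :=
      fun a c => AddMonoidAlgebra.liftNC_single _ _ a c
    have hDadd : ∀ (d : Fin r → ℤ) (x y : R), (DirectSum.decompose 𝒜 (x + y) d : R) =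
        (DirectSum.decompose 𝒜 x d : R) + (DirectSum.decompose 𝒜 y d : R) := by
      intro d x y
      rw [DirectSum.decompose_add, DirectSum.add_apply, AddSubgroup.coe_add]
    have hDsum : ∀ (d : Fin r → ℤ) {α : Type} (t : Finset α) (F : α → R),
        (DirectSum.decompose 𝒜 (∑ a ∈ t, F a) d : R) =
          ∑ a ∈ t, (DirectSum.decompose 𝒜 (F a) d : R) := by
      intro d α t F
      exact map_sum (AddMonoidHom.mk' (fun y => (DirectSum.decompose 𝒜 y d : R))
        (fun x y => hDadd d x y)) F t
    have hVinv : ∀ g : Fin s → ℤ, (V g)⁻¹ = V (-g) := by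
      intro g
      have h1 : V g * V (-g) = 1 := by rw [← hVadd, add_neg_cancel, hV0]
      exact inv_eq_of_mul_eq_one_right h1
    have hrange : ∀ x : ↥(Subring.center R), ∀ d : Fin r → ℤ, (x : R) ∈ 𝒜 d →
        x ∈ E.range := by
      intro x d hxd
      by_cases hx0 : x = 0
      · exact hx0 ▸ zero_mem E.range
      · have hxR0 : (x : R) ≠ 0 := fun h => hx0 (Subtype.ext h)
        obtain ⟨g, hg⟩ := hι_surj d ⟨x, hcen x, hxd, hxR0⟩
        have hVneg : ((↑(V g)⁻¹ : ↥(Subring.center R)) : R) ∈ 𝒜 (-d) := by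
          rw [hVinv]
          have h2 := hVdeg (-g)
          rwa [hι_neg, hg] at h2
        have hk : ((x * ↑(V g)⁻¹ : ↥(Subring.center R)) : R) ∈ 𝒜 (0 : Fin r → ℤ) := by
          have h2 := SetLike.mul_mem_graded hxd hVneg
          rw [add_neg_cancel] at h2
          simpa using h2
        refine RingHom.mem_range.mpr ⟨AddMonoidAlgebra.single g ⟨x * ↑(V g)⁻¹, hk⟩, ?_⟩
        rw [hEsingle]
        show (x * ↑(V g)⁻¹) * ↑(V g) = x
        rw [mul_assoc]
        simp
    have hsurj : Function.Surjective E := by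
      intro x
      have hx : x ∈ E.range := by
        have hxsum : x = ∑ d ∈ (DirectSum.decompose 𝒜 (x : R)).support,
            (⟨(DirectSum.decompose 𝒜 (x : R) d : R), hcen' _ (hA _ (hcen x) d)⟩ :
              ↥(Subring.center R)) := by
          apply Subtype.ext
          rw [AddSubmonoidClass.coe_finset_sum]
          exact (DirectSum.sum_support_decompose 𝒜 (x : R)).symm
        rw [hxsum]
        exact sum_mem fun d _ => hrange _ d (SetLike.coe_mem _)
      exact RingHom.mem_range.mp hx
    have hinj : Function.Injective E := by
      rw [injective_iff_map_eq_zero]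
      intro x hx
      refine AddMonoidAlgebra.ext (Finsupp.ext fun g => ?_)
      rw [AddMonoidAlgebra.coeff_zero, Finsupp.zero_apply]
      by_cases hg : g ∈ x.coeff.support
      · have hxsum : E x = ∑ a ∈ x.coeff.support, ((x.coeff a : ↥(Subring.center R)) * ↑(V a)) := by
          conv_lhs => rw [← AddMonoidAlgebra.sum_coeff_single x, Finsupp.sum, map_sum]
          exact Finset.sum_congr rfl fun a _ => hEsingle a (x.coeff a)
        have hterm : ∀ a : Fin s → ℤ,
            (((x.coeff a : ↥(Subring.center R)) * ↑(V a) : ↥(Subring.center R)) : R) ∈ 𝒜 (ι a) := by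
          intro a
          have hxa : ((x.coeff a : ↥(Subring.center R)) : R) ∈ 𝒜 (0 : Fin r → ℤ) := (x.coeff a).2
          have h2 := SetLike.mul_mem_graded hxa (hVdeg a)
          rw [zero_add] at h2
          simpa using h2
        have h0 : (0 : R) =
            ∑ a ∈ x.coeff.support, (DirectSum.decompose 𝒜
              (((x.coeff a : ↥(Subring.center R)) * ↑(V a) : ↥(Subring.center R)) : R) (ι g) : R) := by
          have e1 : ((E x : ↥(Subring.center R)) : R) = ∑ a ∈ x.coeff.support,
              (((x.coeff a : ↥(Subring.center R)) * ↑(V a) : ↥(Subring.center R)) : R) := by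
            rw [hxsum, AddSubmonoidClass.coe_finset_sum]
          have e2 : ((E x : ↥(Subring.center R)) : R) = 0 := by rw [hx]; rfl
          calc (0 : R) = (DirectSum.decompose 𝒜 ((E x : ↥(Subring.center R)) : R) (ι g) : R) := by
                rw [e2]; simp
            _ = _ := by rw [e1, hDsum]
        rw [Finset.sum_eq_single g
            (fun a _ hag => DirectSum.decompose_of_mem_ne 𝒜 (hterm a)
              (fun hcontra => hag (hι_inj a g hcontra)))
            (fun h => absurd hg h)] at h0
        rw [DirectSum.decompose_of_mem_same 𝒜 (hterm g)] at h0
        have hZ : ((x.coeff g : ↥(Subring.center R)) * ↑(V g) : ↥(Subring.center R)) = 0 :=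
          Subtype.ext (by simpa using h0.symm)
        have hxg : (x.coeff g : ↥(Subring.center R)) = 0 := by
          calc (x.coeff g : ↥(Subring.center R))
              = ((x.coeff g : ↥(Subring.center R)) * ↑(V g)) * ↑(V g)⁻¹ := by
                rw [mul_assoc, Units.mul_inv, mul_one]
            _ = 0 := by rw [hZ, zero_mul]
        exact Subtype.ext (by simp [hxg])
      · exact Finsupp.notMem_support_iff.mp hg
    refine ⟨(RingEquiv.ofBijective E ⟨hinj, hsurj⟩).symm, ?_⟩
    intro x
    have h1 : E (AddMonoidAlgebra.single 0 x) = ↑x := by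
      rw [hEsingle, hV0]
      simp
    have h2 := (RingEquiv.ofBijective E ⟨hinj, hsurj⟩).symm_apply_apply
      (AddMonoidAlgebra.single 0 x)
    rw [show (RingEquiv.ofBijective E ⟨hinj, hsurj⟩) (AddMonoidAlgebra.single 0 x) =
      E (AddMonoidAlgebra.single 0 x) from rfl, h1] at h2
    exact h2
end

section
/- Let k be an uncountable field and A a countably generated k-algebra. Then A satisfies the Nullstellensatz over k: (a) for every two-sided ideal I of A, the Jacobson radical of the quotient ring A/I is nil; and (b) for every simple left A-module M, the endomorphism ring End_A(M) is algebraic over k. -/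
open Polynomial in
/-- Core resolvent lemma. -/
lemma amitsur_resolvent {k B ι : Type*} [Field k] [Ring B] [Algebra k B]
    (x : B) (t : Finset ι) (c : ι → k) (hc : Set.InjOn c t)
    (u : ι → B) (hu : ∀ i ∈ t, u i * (x - algebraMap k B (c i)) = 1)
    (lam : ι → k) (hsum : ∑ i ∈ t, lam i • u i = 0)
    {i₀ : ι} (hi₀ : i₀ ∈ t) (hlam : lam i₀ ≠ 0) :
    ∃ p : Polynomial k, p ≠ 0 ∧ Polynomial.aeval x p = 0 := by
  classical
  refine ⟨∑ i ∈ t, C (lam i) * ∏ j ∈ t.erase i, (X - C (c j)), ?_, ?_⟩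
  · intro h
    have h0 := congrArg (Polynomial.eval (c i₀)) h
    simp only [eval_finset_sum, eval_mul, eval_C, eval_prod, eval_sub, eval_X, eval_zero] at h0
    rw [Finset.sum_eq_single i₀ (fun i hi hne => ?_) (fun h => absurd hi₀ h)] at h0
    · refine absurd h0 (mul_ne_zero hlam (Finset.prod_ne_zero_iff.mpr fun j hj => ?_))
      have hj' := Finset.mem_erase.mp hj
      exact sub_ne_zero.mpr fun he => hj'.1 (hc hj'.2 hi₀ he.symm)
    · have : i₀ ∈ t.erase i := Finset.mem_erase.mpr ⟨fun h => hne h.symm, hi₀⟩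
      rw [Finset.prod_eq_zero this (by rw [sub_self]), mul_zero]
  · have key : ∀ i ∈ t, (Polynomial.aeval x) (∏ j ∈ t.erase i, (X - C (c j)))
        = u i * (Polynomial.aeval x) (∏ j ∈ t, (X - C (c j))) := by
      intro i hi
      rw [← Finset.mul_prod_erase t _ hi, map_mul, ← mul_assoc]
      have : (Polynomial.aeval x) (X - C (c i)) = x - algebraMap k B (c i) := by
        simp
      rw [this, hu i hi, one_mul]
    rw [map_sum]
    have : ∀ i ∈ t, (Polynomial.aeval x) (C (lam i) * ∏ j ∈ t.erase i, (X - C (c j)))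
        = (lam i • u i) * (Polynomial.aeval x) (∏ j ∈ t, (X - C (c j))) := by
      intro i hi
      rw [map_mul, aeval_C, ← Algebra.smul_def, key i hi, smul_mul_assoc]
    rw [Finset.sum_congr rfl this, ← Finset.sum_mul, hsum, zero_mul]

/-- Left-invertibility of `1 + v * x` for `x` in every maximal left ideal. -/
lemma amitsur_jacobson {B : Type*} [Ring B] {x : B}
    (hx : ∀ m : Ideal B, m.IsMaximal → x ∈ m) (v : B) :
    ∃ y : B, y * (1 + v * x) = 1 := by
  by_contra h
  push_neg at h
  have hne : Ideal.span {1 + v * x} ≠ ⊤ := by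
    intro htop
    have h1 : (1 : B) ∈ Ideal.span {1 + v * x} := htop ▸ Submodule.mem_top
    obtain ⟨y, hy⟩ := Submodule.mem_span_singleton.mp h1
    exact h y hy
  obtain ⟨m, hm, hle⟩ := Ideal.exists_le_maximal _ hne
  have h1 : (1 + v * x) ∈ m := hle (Ideal.subset_span rfl)
  have h2 : v * x ∈ m := m.smul_mem v (hx m hm)
  have h3 : (1 : B) ∈ m := by simpa using m.sub_mem h1 h2
  exact hm.ne_top ((Ideal.eq_top_iff_one m).mpr h3)

open Polynomial in
/-- From a polynomial relation and quasi-invertibility, nilpotence. -/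
lemma amitsur_nilpotent {k B : Type*} [Field k] [Ring B] [Algebra k B] {x : B}
    (hinv : ∀ v : B, ∃ y, y * (1 + v * x) = 1)
    {p : k[X]} (hp : p ≠ 0) (hpx : Polynomial.aeval x p = 0) : IsNilpotent x := by
  set r := p.natTrailingDegree with hr
  obtain ⟨q, hq⟩ : (X : k[X]) ^ r ∣ p :=
    X_pow_dvd_iff.mpr fun d hd => coeff_eq_zero_of_lt_natTrailingDegree hd
  have ha₀ : q.coeff 0 ≠ 0 := by
    intro h0
    apply trailingCoeff_nonzero_iff_nonzero.mpr hp
    have := coeff_X_pow_mul q r 0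
    rw [← hq, zero_add] at this
    rw [trailingCoeff, ← hr, this, h0]
  set a₀ := q.coeff 0 with ha
  -- w := aeval x q
  set g : B := Polynomial.aeval x q.divX with hg
  have hcomm : x * g = g * x := by
    have h2 := congrArg (Polynomial.aeval x) (mul_comm (X : k[X]) q.divX)
    simpa only [map_mul, aeval_X, ← hg] using h2
  have hw : Polynomial.aeval x q = g * x + algebraMap k B a₀ := by
    conv_lhs => rw [← X_mul_divX_add q]
    rw [map_add, aeval_C, map_mul, aeval_X, ← hg, hcomm, ← ha]
  obtain ⟨y, hy⟩ := hinv (algebraMap k B a₀⁻¹ * g)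
  have hleft : (y * algebraMap k B a₀⁻¹) * Polynomial.aeval x q = 1 := by
    rw [hw, mul_assoc, mul_add, ← mul_assoc (algebraMap k B a₀⁻¹) g x,
      ← map_mul, inv_mul_cancel₀ ha₀, map_one, add_comm]
    exact hy
  refine ⟨r, ?_⟩
  have hwx : Polynomial.aeval x q * x ^ r = 0 := by
    have h3 : (Polynomial.aeval x) (q * X ^ r) = 0 := by rw [mul_comm, ← hq]; exact hpx
    simpa only [map_mul, map_pow, aeval_X] using h3
  calc x ^ r = ((y * algebraMap k B a₀⁻¹) * Polynomial.aeval x q) * x ^ r := by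
        rw [hleft, one_mul]
    _ = (y * algebraMap k B a₀⁻¹) * (Polynomial.aeval x q * x ^ r) := by rw [mul_assoc]
    _ = 0 := by rw [hwx, mul_zero]

/-- Countable spanning implies rank at most ℵ₀. -/
lemma amitsur_rank_le {k B : Type*} [Field k] [AddCommGroup B] [Module k B]
    {s : Set B} (hs : s.Countable) (hsp : Submodule.span k s = ⊤) :
    Module.rank k B ≤ Cardinal.aleph0 := by
  have h1 : Module.rank k B = Module.rank k (Submodule.span k s) := by
    rw [hsp]; exact (rank_top k B).symm
  rw [h1]
  exact (rank_span_le s).trans (Cardinal.mk_le_aleph0_iff.mpr hs.to_subtype)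

lemma amitsur_dep {k : Type*} {B ι : Type v} [Field k] [Uncountable ι]
    [AddCommGroup B] [Module k B]
    (hr : Module.rank k B ≤ Cardinal.aleph0) (f : ι → B) : ¬ LinearIndependent k f :=
  fun h => absurd (h.cardinal_le_rank.trans hr) (Cardinal.aleph0_lt_mk (α := ι)).not_ge

/-- countable spanning set from countable algebra generators -/
lemma amitsur_span_countable {k A : Type*} [CommSemiring k] [Semiring A] [Algebra k A]
    {S : Set A} (hS : S.Countable) (hgen : Algebra.adjoin k S = ⊤) :
    ∃ T : Set A, T.Countable ∧ Submodule.span k T = ⊤ := by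
  refine ⟨(Submonoid.closure S : Set A), ?_, ?_⟩
  · have : Countable S := hS.to_subtype
    refine (Set.countable_range fun l : List S => (l.map Subtype.val).prod).mono ?_
    intro x hx
    obtain ⟨l, hl, rfl⟩ := Submonoid.exists_list_of_mem_closure hx
    exact ⟨l.attachWith _ hl, by simp⟩
  · rw [← Algebra.adjoin_eq_span, hgen, Algebra.top_toSubmodule]

lemma amitsur_uncountable_ne {k : Type*} [Uncountable k] (a : k) :
    Uncountable {c : k // c ≠ a} := by
  rw [← not_countable_iff]
  intro hcnt
  have h1 : ({c : k | c ≠ a}).Countable := Set.countable_coe_iff.mp hcnt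
  have h2 : (Set.univ : Set k).Countable := by
    refine Set.Countable.mono ?_ ((Set.countable_singleton a).union h1)
    intro c _
    by_cases h : c = a <;> simp [h]
  exact (not_countable_iff.mpr inferInstance) (Set.countable_univ_iff.mp h2)



/-- (Amitsur.)  Let `k` be an uncountable field and `A` a countably generated `k`-algebra.
Then `A` satisfies the Nullstellensatz over `k`:
(a) for every two-sided ideal `I` of `A`, the Jacobson radical of `A/I` (the
intersection of all maximal left ideals) is nil; and
(b) for every simple left `A`-module `M`, the endomorphism ring `End_A(M)` is
algebraic over `k`. -/
theorem nullstellensatz_of_uncountable_field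
    {k : Type u} [Field k] [Uncountable k] {A : Type u} [Ring A] [Algebra k A]
    (hgen : ∃ S : Set A, S.Countable ∧ Algebra.adjoin k S = ⊤) :
    (∀ I : TwoSidedIdeal A, ∀ x : I.ringCon.Quotient,
        (∀ m : Ideal I.ringCon.Quotient, m.IsMaximal → x ∈ m) → IsNilpotent x) ∧
    (∀ (M : Type u) (_ : AddCommGroup M) (_ : Module A M) (_ : Module k M)
        (_ : IsScalarTower k A M) (_ : SMulCommClass A k M), IsSimpleModule A M →
        ∀ φ : M →ₗ[A] M, ∃ p : Polynomial k, p ≠ 0 ∧ Polynomial.aeval φ p = 0) := by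
  obtain ⟨S, hScount, hSgen⟩ := hgen
  obtain ⟨T, hTc, hTspan⟩ := amitsur_span_countable hScount hSgen
  constructor
  · -- part (a)
    intro I x hx
    classical
    letI : Algebra k I.ringCon.Quotient :=
      RingHom.toAlgebra' ((RingCon.mk' I.ringCon).comp (algebraMap k A))
        (fun c z => Quot.inductionOn z fun a => by
          show (RingCon.mk' I.ringCon) _ * (RingCon.mk' I.ringCon) a
              = (RingCon.mk' I.ringCon) a * (RingCon.mk' I.ringCon) _
          rw [← map_mul, ← map_mul, Algebra.commutes])
    let π : A →ₗ[k] I.ringCon.Quotient :=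
      { toFun := RingCon.mk' I.ringCon
        map_add' := fun a b => map_add _ a b
        map_smul' := fun c a => by
          simp only [RingHom.id_apply, Algebra.smul_def, map_mul]
          rfl }
    have hπsurj : Function.Surjective π := fun b => Quot.inductionOn b fun a => ⟨a, rfl⟩
    have hrank : Module.rank k I.ringCon.Quotient ≤ Cardinal.aleph0 := by
      refine amitsur_rank_le (hTc.image π) ?_
      rw [Submodule.span_image, hTspan, Submodule.map_top, LinearMap.range_eq_top.mpr hπsurj]
    have hu : ∀ c : k, c ≠ 0 → ∃ u : I.ringCon.Quotient, u * (x - algebraMap k I.ringCon.Quotient c) = 1 := by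
      intro c hc
      obtain ⟨y, hy⟩ := amitsur_jacobson hx (algebraMap k I.ringCon.Quotient (-c⁻¹))
      refine ⟨algebraMap k I.ringCon.Quotient (-c)⁻¹ * y, ?_⟩
      have hfac : x - algebraMap k I.ringCon.Quotient c
          = algebraMap k I.ringCon.Quotient (-c) * (1 + algebraMap k I.ringCon.Quotient (-c⁻¹) * x) := by
        rw [mul_add, mul_one, ← mul_assoc, ← map_mul]
        have h1 : (-c) * (-c⁻¹) = 1 := by field_simp
        rw [h1, map_one, one_mul, map_neg, ← sub_eq_neg_add]
      rw [hfac, mul_assoc, ← mul_assoc y, ← Algebra.commutes (-c) y, ← mul_assoc,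
        ← mul_assoc, ← map_mul, inv_mul_cancel₀ (neg_ne_zero.mpr hc), map_one, one_mul]
      exact hy
    haveI : Uncountable {c : k // c ≠ 0} := amitsur_uncountable_ne (0 : k)
    let u : {c : k // c ≠ 0} → I.ringCon.Quotient := fun c => Classical.choose (hu c.1 c.2)
    have hu' : ∀ c : {c : k // c ≠ 0},
        u c * (x - algebraMap k I.ringCon.Quotient c.1) = 1 :=
      fun c => Classical.choose_spec (hu c.1 c.2)
    have hnli := amitsur_dep hrank u
    rw [not_linearIndependent_iff] at hnli
    obtain ⟨s, g, hsum, i₀, hi₀, hg⟩ := hnli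
    obtain ⟨p, hp, hpx⟩ := amitsur_resolvent x s (fun i => i.1)
      (Subtype.val_injective.injOn) u (fun i _ => hu' i) g hsum hi₀ hg
    exact amitsur_nilpotent (amitsur_jacobson hx) hp hpx
  · -- part (b)
    intro M _ _ _ _ _ hsimp φ
    classical
    by_contra hcon
    push_neg at hcon
    haveI := hsimp
    letI : DivisionRing (Module.End A M) := Module.End.instDivisionRing
    haveI : Nontrivial M := IsSimpleModule.nontrivial A M
    obtain ⟨m₀, hm₀⟩ := exists_ne (0 : M)
    let l : A →ₗ[k] M :=
      { toFun := fun a => a • m₀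
        map_add' := fun a b => add_smul a b m₀
        map_smul' := fun c a => by simp [smul_assoc] }
    have hlsurj : Function.Surjective l := fun m => by
      obtain ⟨a, ha⟩ := IsSimpleModule.toSpanSingleton_surjective A hm₀ m
      exact ⟨a, ha⟩
    have hrank : Module.rank k M ≤ Cardinal.aleph0 := by
      refine amitsur_rank_le (hTc.image l) ?_
      rw [Submodule.span_image, hTspan, Submodule.map_top, LinearMap.range_eq_top.mpr hlsurj]
    have hne : ∀ c : k, φ - algebraMap k (M →ₗ[A] M) c ≠ 0 := by
      intro c h0
      refine hcon (Polynomial.X - Polynomial.C c) (Polynomial.X_sub_C_ne_zero c) ?_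
      rw [map_sub, Polynomial.aeval_X, Polynomial.aeval_C]
      exact h0
    let u : k → (M →ₗ[A] M) := fun c => (φ - algebraMap k (M →ₗ[A] M) c)⁻¹
    have hu : ∀ c : k, u c * (φ - algebraMap k (M →ₗ[A] M) c) = 1 :=
      fun c => inv_mul_cancel₀ (hne c)
    let e : k → M := fun c => u c m₀
    have hnli := amitsur_dep hrank e
    rw [not_linearIndependent_iff] at hnli
    obtain ⟨s, g, hsum, i₀, hi₀, hg⟩ := hnli
    have hΨ : ∑ c ∈ s, g c • u c = 0 := by
      by_contra hne'
      have h3 : (∑ c ∈ s, g c • u c) m₀ = 0 := by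
        rw [LinearMap.sum_apply]
        simpa only [LinearMap.smul_apply] using hsum
      have h2 : ((∑ c ∈ s, g c • u c)⁻¹ * ∑ c ∈ s, g c • u c) m₀ = m₀ := by
        rw [inv_mul_cancel₀ hne']
        rfl
      rw [Module.End.mul_apply, h3, map_zero] at h2
      exact hm₀ h2.symm
    obtain ⟨p, hp, hpx⟩ := amitsur_resolvent φ s id (Set.injOn_id _) u
      (fun c _ => hu c) g hΨ hi₀ hg
    exact hcon p hp hpx
end
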